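/- arXiv:2410.11683 — 7 statements merged into one kernel-verified Lean document; each statement's English description precedes it below -/
import Mathlib

section
/- Under the MHR assumption: if t < t' in T, q, q' ∈ Q, η(q,t) = 0 and η(q',t') = 0, then q' < q. Consequently the threshold function λ is nonincreasing on T and strictly decreasing on the set {t ∈ T : q̲ < λ(t) < q̄}. -/
/-!
Under MHR the virtual type `t - d t` is strictly increasing. If
`α q (t - d t) = r = α q' (t' - d t')` with `t < t'`, then both virtual types are positive and the
larger one forces `α q' < α q`, hence `q' < q`. Since `η q` is increasing in `t`, positivity of
`η (·, t)` on all of `Q` persists to later types and negativity to earlier ones, so the threshold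
can only move down; strictly so between the endpoints, where it is a zero of `η (·, t)`.
-/

open Set

theorem strictMonoOn_of_hasDerivAt_pos {D : Set ℝ} (hD : Convex ℝ D) {f f' : ℝ → ℝ}
    (hf : ∀ x ∈ D, HasDerivAt f (f' x) x) (hf' : ∀ x ∈ D, 0 < f' x) : StrictMonoOn f D :=
  strictMonoOn_of_hasDerivWithinAt_pos hD
    (fun x hx => (hf x hx).continuousAt.continuousWithinAt)
    (fun x hx => (hf x (interior_subset hx)).hasDerivWithinAt)
    (fun x hx => hf' x (interior_subset hx))

theorem IsPreconnected.pos_or_neg_of_ne_zero {X : Type*} [TopologicalSpace X] {s : Set X}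
    (hs : IsPreconnected s) {f : X → ℝ} (hf : ContinuousOn f s) (h0 : ∀ x ∈ s, f x ≠ 0) :
    (∀ x ∈ s, 0 < f x) ∨ (∀ x ∈ s, f x < 0) := by
  by_contra! h
  obtain ⟨⟨x, hx, hfx⟩, ⟨y, hy, hfy⟩⟩ := h
  obtain ⟨z, hz, hfz⟩ := hs.intermediate_value hx hy hf ⟨hfx, hfy⟩
  exact h0 z hz hfz

theorem StrictMonoOn.lt_of_mul_eq {α : ℝ → ℝ} {s : Set ℝ} (hα : StrictMonoOn α s)
    {q q' b b' r : ℝ} (hq : q ∈ s) (hq' : q' ∈ s) (hαq : 0 < α q) (hr : 0 < r) (hb : b < b')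
    (h : α q * b = r) (h' : α q' * b' = r) : q' < q := by
  have hb0 : 0 < b := pos_of_mul_pos_right (h ▸ hr) hαq.le
  exact (hα.lt_iff_lt hq' hq).mp (by nlinarith [mul_lt_mul_of_pos_left hb hαq])

def IsThreshold (h : ℝ → ℝ) (a b ℓ : ℝ) : Prop :=
  (∀ q ∈ Icc a b, 0 < h q) ∧ ℓ = a ∨ h ℓ = 0 ∨ (∀ q ∈ Icc a b, h q < 0) ∧ ℓ = b

theorem isThreshold_of_continuousOn {h : ℝ → ℝ} {a b ℓ : ℝ} (hc : ContinuousOn h (Icc a b))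
    (hpos : (∀ q ∈ Icc a b, 0 < h q) → ℓ = a) (hzero : ∀ q ∈ Icc a b, h q = 0 → ℓ = q)
    (hneg : (∀ q ∈ Icc a b, h q < 0) → ℓ = b) : IsThreshold h a b ℓ := by
  by_cases hz : ∃ q ∈ Icc a b, h q = 0
  · obtain ⟨q, hq, hq0⟩ := hz
    exact Or.inr (Or.inl (hzero q hq hq0 ▸ hq0))
  · push Not at hz
    rcases isPreconnected_Icc.pos_or_neg_of_ne_zero hc hz with h' | h'
    · exact Or.inl ⟨h', hpos h'⟩
    · exact Or.inr (Or.inr ⟨h', hneg h'⟩)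

section Threshold

variable {η : ℝ → ℝ → ℝ} {lam : ℝ → ℝ} {T : Set ℝ} {a b : ℝ}

theorem antitoneOn_of_isThreshold (hlam : ∀ t ∈ T, lam t ∈ Icc a b)
    (hthr : ∀ t ∈ T, IsThreshold (η · t) a b (lam t))
    (hmono : ∀ q ∈ Icc a b, StrictMonoOn (η q) T)
    (hcross : ∀ t ∈ T, ∀ t' ∈ T, ∀ q ∈ Icc a b, ∀ q' ∈ Icc a b,
      t < t' → η q t = 0 → η q' t' = 0 → q' < q) :
    AntitoneOn lam T := by
  intro t ht t' ht' hle
  rcases hle.eq_or_lt with rfl | htt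
  · rfl
  rcases hthr t' ht' with ⟨-, h'⟩ | h' | ⟨hneg', h'⟩
  · exact h' ▸ (hlam t ht).1
  · rcases hthr t ht with ⟨hpos, -⟩ | h | ⟨-, h⟩
    · have := hmono _ (hlam t' ht') ht ht' htt
      linarith [hpos _ (hlam t' ht')]
    · exact (hcross t ht t' ht' _ (hlam t ht) _ (hlam t' ht') htt h h').le
    · exact h ▸ (hlam t' ht').2
  · have hneg : ∀ q ∈ Icc a b, η q t < 0 := fun q hq => (hmono q hq ht ht' htt).trans (hneg' q hq)
    rcases hthr t ht with ⟨hpos, -⟩ | h | ⟨-, h⟩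
    · linarith [hpos _ (hlam t ht), hneg _ (hlam t ht)]
    · linarith [hneg _ (hlam t ht)]
    · rw [h, h']

theorem strictAntiOn_of_isThreshold (hlam : ∀ t ∈ T, lam t ∈ Icc a b)
    (hthr : ∀ t ∈ T, IsThreshold (η · t) a b (lam t))
    (hcross : ∀ t ∈ T, ∀ t' ∈ T, ∀ q ∈ Icc a b, ∀ q' ∈ Icc a b,
      t < t' → η q t = 0 → η q' t' = 0 → q' < q) :
    StrictAntiOn lam {t | t ∈ T ∧ a < lam t ∧ lam t < b} := by
  have hzero : ∀ t ∈ T, a < lam t → lam t < b → η (lam t) t = 0 := by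
    intro t ht hlo hhi
    rcases hthr t ht with ⟨-, h⟩ | h | ⟨-, h⟩
    · exact absurd h hlo.ne'
    · exact h
    · exact absurd h hhi.ne
  rintro t ⟨ht, hlo, hhi⟩ t' ⟨ht', hlo', hhi'⟩ htt
  exact hcross t ht t' ht' _ (hlam t ht) _ (hlam t' ht') htt (hzero t ht hlo hhi)
    (hzero t' ht' hlo' hhi')

end Threshold

theorem stmt_3_general
    (tlo thi qlo qhi : ℝ)
    (d : ℝ → ℝ)
    (d' : ℝ → ℝ)
    (hdDeriv : ∀ t ∈ Icc tlo thi, HasDerivAt d (d' t) t)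
    (hMHR : ∀ t ∈ Icc tlo thi, d' t ≤ 0)
    (α α' : ℝ → ℝ)
    (hα : ∀ q ∈ Icc qlo qhi, HasDerivAt α (α' q) q)
    (hαpos : ∀ q ∈ Icc qlo qhi, 0 < α q)
    (hα'pos : ∀ q ∈ Icc qlo qhi, 0 < α' q)
    (r : ℝ) (hr : 0 < r)
    (η : ℝ → ℝ → ℝ)
    (hη : ∀ q t, η q t = α q * (t - d t) - r)
    (lam : ℝ → ℝ)
    (hlamQ : ∀ t ∈ Icc tlo thi, lam t ∈ Icc qlo qhi)
    (hlamLo : ∀ t ∈ Icc tlo thi, (∀ q ∈ Icc qlo qhi, 0 < η q t) → lam t = qlo)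
    (hlamMid : ∀ t ∈ Icc tlo thi, ∀ q0 ∈ Icc qlo qhi, η q0 t = 0 → lam t = q0)
    (hlamHi : ∀ t ∈ Icc tlo thi, (∀ q ∈ Icc qlo qhi, η q t < 0) → lam t = qhi)
    :
    (∀ t ∈ Icc tlo thi, ∀ t' ∈ Icc tlo thi, ∀ q ∈ Icc qlo qhi, ∀ q' ∈ Icc qlo qhi,
        t < t' → η q t = 0 → η q' t' = 0 → q' < q) ∧
      AntitoneOn lam (Icc tlo thi) ∧
      StrictAntiOn lam {t | t ∈ Icc tlo thi ∧ qlo < lam t ∧ lam t < qhi} := by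
  have hvirtual : StrictMonoOn (fun t => t - d t) (Icc tlo thi) :=
    strictMonoOn_of_hasDerivAt_pos (convex_Icc _ _)
      (fun t ht => (hasDerivAt_id t).sub (hdDeriv t ht)) (fun t ht => by linarith [hMHR t ht])
  have hαmono : StrictMonoOn α (Icc qlo qhi) :=
    strictMonoOn_of_hasDerivAt_pos (convex_Icc _ _) hα hα'pos
  have hcross : ∀ t ∈ Icc tlo thi, ∀ t' ∈ Icc tlo thi, ∀ q ∈ Icc qlo qhi, ∀ q' ∈ Icc qlo qhi,
      t < t' → η q t = 0 → η q' t' = 0 → q' < q := by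
    intro t ht t' ht' q hq q' hq' htt h h'
    exact hαmono.lt_of_mul_eq hq hq' (hαpos q hq) hr (hvirtual ht ht' htt)
      (by linarith [hη q t]) (by linarith [hη q' t'])
  have hmono : ∀ q ∈ Icc qlo qhi, StrictMonoOn (η q) (Icc tlo thi) := by
    intro q hq t ht t' ht' htt
    rw [hη, hη]
    exact sub_lt_sub_right (mul_lt_mul_of_pos_left (hvirtual ht ht' htt) (hαpos q hq)) r
  have hthr : ∀ t ∈ Icc tlo thi, IsThreshold (η · t) qlo qhi (lam t) := by
    intro t ht
    have hc : ContinuousOn (η · t) (Icc qlo qhi) := by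
      simp only [hη]
      exact (HasDerivAt.continuousOn hα |>.mul continuousOn_const).sub continuousOn_const
    exact isThreshold_of_continuousOn hc (hlamLo t ht) (hlamMid t ht) (hlamHi t ht)
  exact ⟨hcross, antitoneOn_of_isThreshold hlamQ hthr hmono hcross,
    strictAntiOn_of_isThreshold hlamQ hthr hcross⟩

theorem stmt_3
    (tlo thi qlo qhi : ℝ) (htT : tlo < thi) (hqQ : qlo < qhi)
    (F f d : ℝ → ℝ)
    (hF : ∀ t ∈ Icc tlo thi, HasDerivAt F (f t) t)
    (hfpos : ∀ t ∈ Icc tlo thi, 0 < f t)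
    (hF0 : F tlo = 0) (hF1 : F thi = 1)
    (hdDef : ∀ t ∈ Icc tlo thi, d t = (1 - F t) / f t)
    (d' : ℝ → ℝ)
    (hdDeriv : ∀ t ∈ Icc tlo thi, HasDerivAt d (d' t) t)
    (hMHR : ∀ t ∈ Icc tlo thi, d' t ≤ 0)
    (α α' : ℝ → ℝ)
    (hα : ∀ q ∈ Icc qlo qhi, HasDerivAt α (α' q) q)
    (hαpos : ∀ q ∈ Icc qlo qhi, 0 < α q)
    (hα'pos : ∀ q ∈ Icc qlo qhi, 0 < α' q)
    (r : ℝ) (hr : 0 < r)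
    (hlow : α qlo * tlo < r) (hhigh : r < α qhi * thi)
    (η : ℝ → ℝ → ℝ)
    (hη : ∀ q t, η q t = α q * (t - d t) - r)
    (lam : ℝ → ℝ)
    (hlamQ : ∀ t ∈ Icc tlo thi, lam t ∈ Icc qlo qhi)
    (hlamLo : ∀ t ∈ Icc tlo thi, (∀ q ∈ Icc qlo qhi, 0 < η q t) → lam t = qlo)
    (hlamMid : ∀ t ∈ Icc tlo thi, ∀ q0 ∈ Icc qlo qhi, η q0 t = 0 → lam t = q0)
    (hlamHi : ∀ t ∈ Icc tlo thi, (∀ q ∈ Icc qlo qhi, η q t < 0) → lam t = qhi)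
    :
    (∀ t ∈ Icc tlo thi, ∀ t' ∈ Icc tlo thi, ∀ q ∈ Icc qlo qhi, ∀ q' ∈ Icc qlo qhi,
        t < t' → η q t = 0 → η q' t' = 0 → q' < q) ∧
      AntitoneOn lam (Icc tlo thi) ∧
      StrictAntiOn lam {t | t ∈ Icc tlo thi ∧ qlo < lam t ∧ lam t < qhi} :=
  stmt_3_general tlo thi qlo qhi d d' hdDeriv hMHR α α' hα hαpos hα'pos r hr η hη lam hlamQ hlamLo
    hlamMid hlamHi
end

section
/- Under the MHR assumption, the function R*(t) = ∫_{λ(t)}^{q̄} α(q)g(q)dq is nondecreasing on T and strictly increasing on the set {t ∈ T : q̲ < λ(t) < q̄}. -/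
/-!
With `φ(t) = t - d(t)` we have `η(q, t) = α(q) φ(t) - r`, and MHR makes `φ`, hence every
`η(q, ·)`, strictly increasing. For fixed `t`, either `φ(t) ≤ 0`, so `η(·, t) < 0` and
`λ(t) = q̄`, or `η(·, t)` is strictly increasing; either way `η(·, t)` changes sign from `-` to `+`
at `λ(t)`. If `t₁ < t₂` but `λ(t₁) < λ(t₂)`, a `q` in between would have `η(q, t₂) < 0 < η(q, t₁)`,
so `λ` is nonincreasing. At an interior threshold `η(λ(t), t) = 0`, and strict monotonicity in `t`
forbids two such `t` with the same `λ(t)`. Since `α g > 0`, `c ↦ ∫_c^q̄ α g` is strictly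
decreasing, and composing gives the claim.
-/

open MeasureTheory Set

lemma strictMonoOn_Icc_of_hasDerivAt_pos {f f' : ℝ → ℝ} {a b : ℝ}
    (hf : ∀ x ∈ Icc a b, HasDerivAt f (f' x) x) (hpos : ∀ x ∈ Icc a b, 0 < f' x) :
    StrictMonoOn f (Icc a b) :=
  strictMonoOn_of_hasDerivWithinAt_pos (convex_Icc a b)
    (fun x hx => (hf x hx).continuousAt.continuousWithinAt)
    (fun x hx => (hf x (interior_subset hx)).hasDerivWithinAt)
    (fun x hx => hpos x (interior_subset hx))

lemma antitoneOn_Icc_of_hasDerivAt_nonpos {f f' : ℝ → ℝ} {a b : ℝ}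
    (hf : ∀ x ∈ Icc a b, HasDerivAt f (f' x) x) (hnonpos : ∀ x ∈ Icc a b, f' x ≤ 0) :
    AntitoneOn f (Icc a b) :=
  antitoneOn_of_hasDerivWithinAt_nonpos (convex_Icc a b)
    (fun x hx => (hf x hx).continuousAt.continuousWithinAt)
    (fun x hx => (hf x (interior_subset hx)).hasDerivWithinAt)
    (fun x hx => hnonpos x (interior_subset hx))

lemma IsPreconnected.exists_zero_or_forall_pos_or_forall_neg {X : Type*} [TopologicalSpace X]
    {s : Set X} (hs : IsPreconnected s) {f : X → ℝ} (hf : ContinuousOn f s) :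
    (∃ x ∈ s, f x = 0) ∨ (∀ x ∈ s, 0 < f x) ∨ (∀ x ∈ s, f x < 0) := by
  by_contra! h
  obtain ⟨hzero, ⟨a, ha, hfa⟩, ⟨b, hb, hfb⟩⟩ := h
  obtain ⟨x, hx, hfx⟩ := hs.intermediate_value ha hb hf ⟨hfa, hfb⟩
  exact hzero x hx hfx

/-- `IsThreshold (η · t) q̲ q̄ c` says that `c` satisfies the three clauses defining `λ(t)`. -/
structure IsThreshold_s5 (h : ℝ → ℝ) (a b c : ℝ) : Prop where
  eq_left : (∀ q ∈ Icc a b, 0 < h q) → c = a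
  eq_of_eq_zero : ∀ q₀ ∈ Icc a b, h q₀ = 0 → c = q₀
  eq_right : (∀ q ∈ Icc a b, h q < 0) → c = b

namespace IsThreshold_s5

variable {h : ℝ → ℝ} {a b c : ℝ}

lemma crossing (hc : IsThreshold_s5 h a b c) (hmono : StrictMonoOn h (Icc a b))
    (hcont : ContinuousOn h (Icc a b)) :
    ∀ q ∈ Icc a b, (q < c → h q < 0) ∧ (c < q → 0 < h q) := by
  intro q hq
  rcases isPreconnected_Icc.exists_zero_or_forall_pos_or_forall_neg hcont with
    ⟨q₀, hq₀, hzero⟩ | hpos | hneg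
  · obtain rfl := hc.eq_of_eq_zero q₀ hq₀ hzero
    exact ⟨fun hlt => hzero ▸ hmono hq hq₀ hlt, fun hlt => hzero ▸ hmono hq₀ hq hlt⟩
  · obtain rfl := hc.eq_left hpos
    exact ⟨fun hlt => absurd hq.1 hlt.not_ge, fun _ => hpos q hq⟩
  · obtain rfl := hc.eq_right hneg
    exact ⟨fun _ => hneg q hq, fun hlt => absurd hq.2 hlt.not_ge⟩

lemma apply_eq_zero (hc : IsThreshold_s5 h a b c) (hcont : ContinuousOn h (Icc a b))
    (hcab : c ∈ Ioo a b) : h c = 0 := by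
  rcases isPreconnected_Icc.exists_zero_or_forall_pos_or_forall_neg hcont with
    ⟨q₀, hq₀, hzero⟩ | hpos | hneg
  · rwa [hc.eq_of_eq_zero q₀ hq₀ hzero]
  · exact absurd (hc.eq_left hpos) hcab.1.ne'
  · exact absurd (hc.eq_right hneg) hcab.2.ne

lemma crossing_mul_sub {α : ℝ → ℝ} {s r : ℝ} (hc : IsThreshold_s5 (fun q => α q * s - r) a b c)
    (hα : StrictMonoOn α (Icc a b)) (hαcont : ContinuousOn α (Icc a b))
    (hαpos : ∀ q ∈ Icc a b, 0 < α q) (hr : 0 < r) :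
    ∀ q ∈ Icc a b, (q < c → α q * s - r < 0) ∧ (c < q → 0 < α q * s - r) := by
  rcases le_or_gt s 0 with hs | hs
  · have hneg : ∀ q ∈ Icc a b, α q * s - r < 0 := fun q hq => by
      linarith [mul_nonpos_of_nonneg_of_nonpos (hαpos q hq).le hs]
    obtain rfl := hc.eq_right hneg
    exact fun q hq => ⟨fun _ => hneg q hq, fun hlt => absurd hq.2 hlt.not_ge⟩
  · refine hc.crossing (fun q hq q' hq' hlt => ?_)
      ((hαcont.mul continuousOn_const).sub continuousOn_const)
    simpa using mul_lt_mul_of_pos_right (hα hq hq' hlt) hs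

end IsThreshold_s5

section SingleCrossing

variable {η : ℝ → ℝ → ℝ} {lam : ℝ → ℝ} {T : Set ℝ} {a b : ℝ}

lemma antitoneOn_of_crossing (hlamQ : MapsTo lam T (Icc a b))
    (hη : ∀ q ∈ Icc a b, MonotoneOn (η q) T)
    (hcross : ∀ t ∈ T, ∀ q ∈ Icc a b, (q < lam t → η q t < 0) ∧ (lam t < q → 0 < η q t)) :
    AntitoneOn lam T := by
  intro t₁ ht₁ t₂ ht₂ hle
  by_contra! hlt
  obtain ⟨q, hq₁, hq₂⟩ := exists_between hlt
  have hq : q ∈ Icc a b := ⟨(hlamQ ht₁).1.trans hq₁.le, hq₂.le.trans (hlamQ ht₂).2⟩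
  have hneg := (hcross t₂ ht₂ q hq).1 hq₂
  have hpos := (hcross t₁ ht₁ q hq).2 hq₁
  linarith [hη q hq ht₁ ht₂ hle]

lemma strictAntiOn_of_antitoneOn_of_eq_zero (hanti : AntitoneOn lam T)
    (hlamQ : MapsTo lam T (Icc a b)) (hη : ∀ q ∈ Icc a b, StrictMonoOn (η q) T)
    (hzero : ∀ t ∈ T, η (lam t) t = 0) :
    StrictAntiOn lam T := by
  intro t₁ ht₁ t₂ ht₂ hlt
  refine (hanti ht₁ ht₂ hlt.le).lt_of_ne fun heq => ?_
  have := hη (lam t₁) (hlamQ ht₁) ht₁ ht₂ hlt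
  rw [hzero t₁ ht₁, ← heq, hzero t₂ ht₂] at this
  exact lt_irrefl 0 this

end SingleCrossing

lemma strictAntiOn_intervalIntegral_left {f : ℝ → ℝ} {a b : ℝ}
    (hf : IntervalIntegrable f volume a b) (hpos : ∀ x ∈ Icc a b, 0 < f x) :
    StrictAntiOn (fun c => ∫ x in c..b, f x) (Icc a b) := by
  intro c₁ hc₁ c₂ hc₂ hlt
  have hsub {u v : ℝ} (hu : u ∈ Icc a b) (hv : v ∈ Icc a b) : IntervalIntegrable f volume u v :=
    hf.mono_set (uIcc_subset_uIcc (Icc_subset_uIcc hu) (Icc_subset_uIcc hv))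
  have hb : b ∈ Icc a b := right_mem_Icc.2 (hc₁.1.trans hc₁.2)
  have hmid : 0 < ∫ x in c₁..c₂, f x := intervalIntegral.intervalIntegral_pos_of_pos_on
    (hsub hc₁ hc₂) (fun x hx => hpos x ⟨hc₁.1.trans hx.1.le, hx.2.le.trans hc₂.2⟩) hlt
  dsimp only
  rw [← intervalIntegral.integral_add_adjacent_intervals (hsub hc₁ hc₂) (hsub hc₂ hb)]
  linarith

theorem stmt_5_general
    (tlo thi qlo qhi : ℝ) (hqQ : qlo < qhi)
    (d : ℝ → ℝ)
    (d' : ℝ → ℝ)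
    (hdDeriv : ∀ t ∈ Icc tlo thi, HasDerivAt d (d' t) t)
    (hMHR : ∀ t ∈ Icc tlo thi, d' t ≤ 0)
    (g : ℝ → ℝ)
    (hgpos : ∀ q ∈ Icc qlo qhi, 0 < g q)
    (hgint : IntervalIntegrable g volume qlo qhi)
    (α α' : ℝ → ℝ)
    (hα : ∀ q ∈ Icc qlo qhi, HasDerivAt α (α' q) q)
    (hαpos : ∀ q ∈ Icc qlo qhi, 0 < α q)
    (hα'pos : ∀ q ∈ Icc qlo qhi, 0 < α' q)
    (r : ℝ) (hr : 0 < r)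
    (η : ℝ → ℝ → ℝ)
    (hη : ∀ q t, η q t = α q * (t - d t) - r)
    (lam : ℝ → ℝ)
    (hlamQ : ∀ t ∈ Icc tlo thi, lam t ∈ Icc qlo qhi)
    (hlamLo : ∀ t ∈ Icc tlo thi, (∀ q ∈ Icc qlo qhi, 0 < η q t) → lam t = qlo)
    (hlamMid : ∀ t ∈ Icc tlo thi, ∀ q0 ∈ Icc qlo qhi, η q0 t = 0 → lam t = q0)
    (hlamHi : ∀ t ∈ Icc tlo thi, (∀ q ∈ Icc qlo qhi, η q t < 0) → lam t = qhi)
    :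
    MonotoneOn (fun t => ∫ q in lam t..qhi, α q * g q) (Icc tlo thi) ∧
      StrictMonoOn (fun t => ∫ q in lam t..qhi, α q * g q)
        {t | t ∈ Icc tlo thi ∧ qlo < lam t ∧ lam t < qhi} := by
  obtain rfl : η = fun q t => α q * (t - d t) - r := funext₂ hη
  have hαmono := strictMonoOn_Icc_of_hasDerivAt_pos hα hα'pos
  have hφmono : StrictMonoOn (fun t => t - d t) (Icc tlo thi) := fun t₁ ht₁ t₂ ht₂ hlt => by
    linarith [antitoneOn_Icc_of_hasDerivAt_nonpos hdDeriv hMHR ht₁ ht₂ hlt.le]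
  have hηt : ∀ q ∈ Icc qlo qhi, StrictMonoOn (fun t => α q * (t - d t) - r) (Icc tlo thi) :=
    fun q hq t₁ ht₁ t₂ ht₂ hlt => by
      simpa using mul_lt_mul_of_pos_left (hφmono ht₁ ht₂ hlt) (hαpos q hq)
  have hαcont : ContinuousOn α (Icc qlo qhi) := fun q hq =>
    (hα q hq).continuousAt.continuousWithinAt
  have hthr (t : ℝ) (ht : t ∈ Icc tlo thi) :
      IsThreshold_s5 (fun q => α q * (t - d t) - r) qlo qhi (lam t) :=
    ⟨hlamLo t ht, hlamMid t ht, hlamHi t ht⟩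
  have hanti : AntitoneOn lam (Icc tlo thi) :=
    antitoneOn_of_crossing hlamQ (fun q hq => (hηt q hq).monotoneOn) fun t ht =>
      (hthr t ht).crossing_mul_sub hαmono hαcont hαpos hr
  have hstrict : StrictAntiOn lam {t | t ∈ Icc tlo thi ∧ qlo < lam t ∧ lam t < qhi} :=
    strictAntiOn_of_antitoneOn_of_eq_zero (hanti.mono fun t ht => ht.1) (fun t ht => hlamQ t ht.1)
      (fun q hq => (hηt q hq).mono fun t ht => ht.1) fun t ht =>
        (hthr t ht.1).apply_eq_zero ((hαcont.mul continuousOn_const).sub continuousOn_const) ht.2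
  have hαg : IntervalIntegrable (fun q => α q * g q) volume qlo qhi :=
    hgint.continuousOn_mul (by rwa [uIcc_of_le hqQ.le])
  have hR := strictAntiOn_intervalIntegral_left hαg fun q hq => mul_pos (hαpos q hq) (hgpos q hq)
  exact ⟨hR.antitoneOn.comp hanti hlamQ, hR.comp hstrict fun t ht => hlamQ t ht.1⟩

theorem stmt_5
    (tlo thi qlo qhi : ℝ) (htT : tlo < thi) (hqQ : qlo < qhi)
    (F f d : ℝ → ℝ)
    (hF : ∀ t ∈ Icc tlo thi, HasDerivAt F (f t) t)
    (hfpos : ∀ t ∈ Icc tlo thi, 0 < f t)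
    (hF0 : F tlo = 0) (hF1 : F thi = 1)
    (hdDef : ∀ t ∈ Icc tlo thi, d t = (1 - F t) / f t)
    (d' : ℝ → ℝ)
    (hdDeriv : ∀ t ∈ Icc tlo thi, HasDerivAt d (d' t) t)
    (hMHR : ∀ t ∈ Icc tlo thi, d' t ≤ 0)
    (G g : ℝ → ℝ)
    (hG : ∀ q ∈ Icc qlo qhi, HasDerivAt G (g q) q)
    (hgpos : ∀ q ∈ Icc qlo qhi, 0 < g q)
    (hG0 : G qlo = 0) (hG1 : G qhi = 1)
    (hgint : IntervalIntegrable g volume qlo qhi)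
    (α α' : ℝ → ℝ)
    (hα : ∀ q ∈ Icc qlo qhi, HasDerivAt α (α' q) q)
    (hαpos : ∀ q ∈ Icc qlo qhi, 0 < α q)
    (hα'pos : ∀ q ∈ Icc qlo qhi, 0 < α' q)
    (r : ℝ) (hr : 0 < r)
    (hlow : α qlo * tlo < r) (hhigh : r < α qhi * thi)
    (η : ℝ → ℝ → ℝ)
    (hη : ∀ q t, η q t = α q * (t - d t) - r)
    (lam : ℝ → ℝ)
    (hlamQ : ∀ t ∈ Icc tlo thi, lam t ∈ Icc qlo qhi)
    (hlamLo : ∀ t ∈ Icc tlo thi, (∀ q ∈ Icc qlo qhi, 0 < η q t) → lam t = qlo)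
    (hlamMid : ∀ t ∈ Icc tlo thi, ∀ q0 ∈ Icc qlo qhi, η q0 t = 0 → lam t = q0)
    (hlamHi : ∀ t ∈ Icc tlo thi, (∀ q ∈ Icc qlo qhi, η q t < 0) → lam t = qhi)
    :
    MonotoneOn (fun t => ∫ q in lam t..qhi, α q * g q) (Icc tlo thi) ∧
      StrictMonoOn (fun t => ∫ q in lam t..qhi, α q * g q)
        {t | t ∈ Icc tlo thi ∧ qlo < lam t ∧ lam t < qhi} :=
  stmt_5_general tlo thi qlo qhi hqQ d d' hdDeriv hMHR g hgpos hgint α α' hα hαpos hα'pos r hr η hη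
    lam hlamQ hlamLo hlamMid hlamHi
end

section
/- (Sufficiency in the characterization of partially feasible mechanisms.) Let π : Q × T → [0,1] be measurable and P_b : T → ℝ. If (i) R^π is nondecreasing on T, (ii) U(t) = U(t̲) + ∫_{t̲}^{t} R^π(x)dx for all t ∈ T, and (iii) U(t̲) ≥ 0, then U(t) ≥ 0 for all t ∈ T and U(t) ≥ U(t'; t) for all t, t' ∈ T. -/
/-!
The allocation rule enters the misreport utility only through `R^π(t')` and the expected
payment, so `U(t'; t) = U(t') + (t - t') R^π(t')`. By the envelope formula
`U(t) - U(t') = ∫_{t'}^{t} R^π`, and since `R^π` is nondecreasing this integral dominates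
`(t - t') R^π(t')` whichever way `t` and `t'` are ordered. Participation follows from
`R^π ≥ 0`.
-/

open MeasureTheory Set

theorem IntervalIntegrable.bdd_mul {f g : ℝ → ℝ} {a b c : ℝ}
    (hg : IntervalIntegrable g volume a b) (hf : Measurable f) (hbound : ∀ x, |f x| ≤ c) :
    IntervalIntegrable (fun x => f x * g x) volume a b := by
  rw [intervalIntegrable_iff] at hg ⊢
  exact hg.bdd_mul hf.aestronglyMeasurable (ae_of_all _ hbound)

theorem MonotoneOn.sub_mul_le_intervalIntegral {f : ℝ → ℝ} {a b s t : ℝ}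
    (hf : MonotoneOn f (Icc a b)) (hs : s ∈ Icc a b) (ht : t ∈ Icc a b) :
    (t - s) * f s ≤ ∫ x in s..t, f x := by
  have hint : IntervalIntegrable f volume s t :=
    (hf.mono (uIcc_subset_Icc hs ht)).intervalIntegrable
  rcases le_total s t with hst | hts
  · have hle : ∀ x ∈ Icc s t, f s ≤ f x := fun x hx =>
      hf hs ⟨hs.1.trans hx.1, hx.2.trans ht.2⟩ hx.1
    simpa using intervalIntegral.integral_mono_on hst intervalIntegrable_const hint hle
  · have hle : ∀ x ∈ Icc t s, f x ≤ f s := fun x hx =>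
      hf ⟨ht.1.trans hx.1, hx.2.trans hs.2⟩ hs hx.2
    have := intervalIntegral.integral_mono_on hts hint.symm intervalIntegrable_const hle
    rw [intervalIntegral.integral_symm]
    simp only [intervalIntegral.integral_const, smul_eq_mul] at this
    linarith

theorem add_sub_mul_le_of_eq_add_intervalIntegral {U R : ℝ → ℝ} {a b t t' : ℝ}
    (hmono : MonotoneOn R (Icc a b)) (henv : ∀ t ∈ Icc a b, U t = U a + ∫ x in a..t, R x)
    (ht : t ∈ Icc a b) (ht' : t' ∈ Icc a b) :
    U t' + (t - t') * R t' ≤ U t := by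
  have ha : a ∈ Icc a b := ⟨le_rfl, ht.1.trans ht.2⟩
  have hint : ∀ s ∈ Icc a b, ∀ s' ∈ Icc a b, IntervalIntegrable R volume s s' :=
    fun s hs s' hs' => (hmono.mono (uIcc_subset_Icc hs hs')).intervalIntegrable
  have hdiff : U t - U t' = ∫ x in t'..t, R x := by
    rw [henv t ht, henv t' ht', ← intervalIntegral.integral_add_adjacent_intervals
      (hint a ha t' ht') (hint t' ht' t ht)]
    ring
  linarith [hmono.sub_mul_le_intervalIntegral ht' ht]

theorem intervalIntegral_mul_linear_mul {p a g : ℝ → ℝ} {qlo qhi : ℝ}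
    (hapg : IntervalIntegrable (fun q => a q * p q * g q) volume qlo qhi)
    (hpg : IntervalIntegrable (fun q => p q * g q) volume qlo qhi) (t c : ℝ) :
    ∫ q in qlo..qhi, p q * (a q * t - c) * g q =
      t * (∫ q in qlo..qhi, a q * p q * g q) - c * ∫ q in qlo..qhi, p q * g q := by
  rw [← intervalIntegral.integral_const_mul, ← intervalIntegral.integral_const_mul,
    ← intervalIntegral.integral_sub (hapg.const_mul t) (hpg.const_mul c)]
  congr 1
  funext q
  ring

section Allocation

variable {qlo qhi : ℝ} {α g : ℝ → ℝ} {π : ℝ → ℝ → ℝ}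

theorem intervalIntegrable_alloc_mul (hπmeas : Measurable (Function.uncurry π))
    (hπ01 : ∀ q t, π q t ∈ Icc (0:ℝ) 1) (hgint : IntervalIntegrable g volume qlo qhi) (t : ℝ) :
    IntervalIntegrable (fun q => π q t * g q) volume qlo qhi :=
  hgint.bdd_mul (hπmeas.comp (measurable_id.prodMk measurable_const)) fun q =>
    abs_le.2 ⟨by linarith [(hπ01 q t).1], (hπ01 q t).2⟩

theorem intervalIntegrable_mul_alloc_mul (hπmeas : Measurable (Function.uncurry π))
    (hπ01 : ∀ q t, π q t ∈ Icc (0:ℝ) 1) (hgint : IntervalIntegrable g volume qlo qhi)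
    (hα : ContinuousOn α (uIcc qlo qhi)) (t : ℝ) :
    IntervalIntegrable (fun q => α q * π q t * g q) volume qlo qhi := by
  simpa only [mul_assoc] using
    (intervalIntegrable_alloc_mul hπmeas hπ01 hgint t).continuousOn_mul hα

end Allocation

theorem stmt_7_general
    (tlo thi qlo qhi : ℝ) (hqQ : qlo < qhi)
    (g : ℝ → ℝ)
    (hgpos : ∀ q ∈ Icc qlo qhi, 0 < g q)
    (hgint : IntervalIntegrable g volume qlo qhi)
    (α α' : ℝ → ℝ)
    (hα : ∀ q ∈ Icc qlo qhi, HasDerivAt α (α' q) q)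
    (hαpos : ∀ q ∈ Icc qlo qhi, 0 < α q)
    (π : ℝ → ℝ → ℝ) (hπmeas : Measurable (Function.uncurry π))
    (hπ01 : ∀ q t, π q t ∈ Icc (0:ℝ) 1)
    (Pb : ℝ → ℝ)
    (Rπ : ℝ → ℝ) (hRπ : ∀ t, Rπ t = ∫ q in qlo..qhi, α q * π q t * g q)
    (U : ℝ → ℝ) (hU : ∀ t, U t = ∫ q in qlo..qhi, π q t * (α q * t - Pb t) * g q)
    (Umis : ℝ → ℝ → ℝ)
    (hUmisDef : ∀ t' t, Umis t' t = ∫ q in qlo..qhi, π q t' * (α q * t - Pb t') * g q)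
    (hmono : MonotoneOn Rπ (Icc tlo thi))
    (henv : ∀ t ∈ Icc tlo thi, U t = U tlo + ∫ x in tlo..t, Rπ x)
    (h0 : 0 ≤ U tlo)
    :
    (∀ t ∈ Icc tlo thi, 0 ≤ U t) ∧
      ∀ t ∈ Icc tlo thi, ∀ t' ∈ Icc tlo thi, Umis t' t ≤ U t := by
  have hRπ_nonneg : ∀ t, 0 ≤ Rπ t := fun t => by
    rw [hRπ]
    exact intervalIntegral.integral_nonneg hqQ.le fun q hq =>
      mul_nonneg (mul_nonneg (hαpos q hq).le (hπ01 q t).1) (hgpos q hq).le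
  have hαcont : ContinuousOn α (uIcc qlo qhi) := by
    rw [uIcc_of_le hqQ.le]
    exact fun q hq => (hα q hq).continuousAt.continuousWithinAt
  have hmis : ∀ t' t, Umis t' t = U t' + (t - t') * Rπ t' := fun t' t => by
    have hsplit := intervalIntegral_mul_linear_mul
      (intervalIntegrable_mul_alloc_mul hπmeas hπ01 hgint hαcont t')
      (intervalIntegrable_alloc_mul hπmeas hπ01 hgint t')
    rw [hUmisDef, hU, hRπ, hsplit, hsplit]
    ring
  refine ⟨fun t ht => ?_, fun t ht t' ht' => ?_⟩
  · rw [henv t ht]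
    linarith [intervalIntegral.integral_nonneg (μ := volume) ht.1 fun x _ => hRπ_nonneg x]
  · rw [hmis]
    exact add_sub_mul_le_of_eq_add_intervalIntegral hmono henv ht ht'

theorem stmt_7
    (tlo thi qlo qhi : ℝ) (htT : tlo < thi) (hqQ : qlo < qhi)
    (G g : ℝ → ℝ)
    (hG : ∀ q ∈ Icc qlo qhi, HasDerivAt G (g q) q)
    (hgpos : ∀ q ∈ Icc qlo qhi, 0 < g q)
    (hgint : IntervalIntegrable g volume qlo qhi)
    (α α' : ℝ → ℝ)
    (hα : ∀ q ∈ Icc qlo qhi, HasDerivAt α (α' q) q)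
    (hαpos : ∀ q ∈ Icc qlo qhi, 0 < α q)
    (π : ℝ → ℝ → ℝ) (hπmeas : Measurable (Function.uncurry π))
    (hπ01 : ∀ q t, π q t ∈ Icc (0:ℝ) 1)
    (Pb : ℝ → ℝ)
    (Rπ : ℝ → ℝ) (hRπ : ∀ t, Rπ t = ∫ q in qlo..qhi, α q * π q t * g q)
    (U : ℝ → ℝ) (hU : ∀ t, U t = ∫ q in qlo..qhi, π q t * (α q * t - Pb t) * g q)
    (Umis : ℝ → ℝ → ℝ)
    (hUmisDef : ∀ t' t, Umis t' t = ∫ q in qlo..qhi, π q t' * (α q * t - Pb t') * g q)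
    (hmono : MonotoneOn Rπ (Icc tlo thi))
    (henv : ∀ t ∈ Icc tlo thi, U t = U tlo + ∫ x in tlo..t, Rπ x)
    (h0 : 0 ≤ U tlo)
    :
    (∀ t ∈ Icc tlo thi, 0 ≤ U t) ∧
      ∀ t ∈ Icc tlo thi, ∀ t' ∈ Icc tlo thi, Umis t' t ≤ U t :=
  stmt_7_general tlo thi qlo qhi hqQ g hgpos hgint α α' hα hαpos π hπmeas hπ01 Pb Rπ hRπ U hU Umis
    hUmisDef hmono henv h0
end

section
/- (Necessity in the characterization of partially feasible mechanisms.) Let π : Q × T → [0,1] be measurable and P_b : T → ℝ. If U(t) ≥ 0 for all t ∈ T and U(t) ≥ U(t'; t) for all t, t' ∈ T, then R^π is nondecreasing on T, U(t̲) ≥ 0, and U(t) = U(t̲) + ∫_{t̲}^{t} R^π(x)dx for all t ∈ T. -/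
open MeasureTheory Set

theorem stmt_8
    (tlo thi qlo qhi : ℝ) (htT : tlo < thi) (hqQ : qlo < qhi)
    (G g : ℝ → ℝ)
    (hG : ∀ q ∈ Icc qlo qhi, HasDerivAt G (g q) q)
    (hgpos : ∀ q ∈ Icc qlo qhi, 0 < g q)
    (hgint : IntervalIntegrable g volume qlo qhi)
    (α α' : ℝ → ℝ)
    (hα : ∀ q ∈ Icc qlo qhi, HasDerivAt α (α' q) q)
    (hαpos : ∀ q ∈ Icc qlo qhi, 0 < α q)
    (π : ℝ → ℝ → ℝ) (hπmeas : Measurable (Function.uncurry π))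
    (hπ01 : ∀ q t, π q t ∈ Icc (0:ℝ) 1)
    (Pb : ℝ → ℝ)
    (Rπ : ℝ → ℝ) (hRπ : ∀ t, Rπ t = ∫ q in qlo..qhi, α q * π q t * g q)
    (U : ℝ → ℝ) (hU : ∀ t, U t = ∫ q in qlo..qhi, π q t * (α q * t - Pb t) * g q)
    (Umis : ℝ → ℝ → ℝ)
    (hUmisDef : ∀ t' t, Umis t' t = ∫ q in qlo..qhi, π q t' * (α q * t - Pb t') * g q)
    (hIR : ∀ t ∈ Icc tlo thi, 0 ≤ U t)
    (hIC : ∀ t ∈ Icc tlo thi, ∀ t' ∈ Icc tlo thi, Umis t' t ≤ U t)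
    :
    MonotoneOn Rπ (Icc tlo thi) ∧ 0 ≤ U tlo ∧
      ∀ t ∈ Icc tlo thi, U t = U tlo + ∫ x in tlo..t, Rπ x := by
  have hqle : qlo ≤ qhi := hqQ.le
  have htlo : tlo ∈ Icc tlo thi := ⟨le_refl _, htT.le⟩
  -- continuity and bound of α on Icc
  have hαcont : ContinuousOn α (Icc qlo qhi) := fun q hq =>
    (hα q hq).continuousAt.continuousWithinAt
  obtain ⟨Cα, hCα⟩ := isCompact_Icc.exists_bound_of_continuousOn hαcont
  have hπm : ∀ t, Measurable (fun q => π q t) := fun t =>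
    hπmeas.comp (measurable_id.prodMk measurable_const)
  have hgInt : IntegrableOn g (Ioc qlo qhi) :=
    (intervalIntegrable_iff_integrableOn_Ioc_of_le hqle).1 hgint
  -- general integrability helper
  have key : ∀ (φ : ℝ → ℝ), AEStronglyMeasurable φ (volume.restrict (Ioc qlo qhi)) →
      ∀ C : ℝ, (∀ q ∈ Ioc qlo qhi, |φ q| ≤ C) →
      IntervalIntegrable (fun q => φ q * g q) volume qlo qhi := by
    intro φ hm C hC
    rw [intervalIntegrable_iff_integrableOn_Ioc_of_le hqle]
    refine Integrable.bdd_mul (c := C) hgInt hm ?_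
    filter_upwards [ae_restrict_mem measurableSet_Ioc] with q hq
    simpa using hC q hq
  have hαm : AEStronglyMeasurable α (volume.restrict (Ioc qlo qhi)) :=
    (hαcont.mono Ioc_subset_Icc_self).aestronglyMeasurable measurableSet_Ioc
  have I1 : ∀ t, IntervalIntegrable (fun q => α q * π q t * g q) volume qlo qhi := by
    intro t
    refine key (fun q => α q * π q t) (hαm.mul (hπm t).aestronglyMeasurable) Cα ?_
    intro q hq
    have h1 := hCα q (Ioc_subset_Icc_self hq)
    have h2 := hπ01 q t
    simp only [Real.norm_eq_abs] at h1
    rw [abs_mul]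
    calc |α q| * |π q t| ≤ Cα * 1 := by
          apply mul_le_mul h1 (abs_le.2 ⟨by linarith [h2.1], h2.2⟩) (abs_nonneg _)
            (le_trans (abs_nonneg _) h1)
      _ = Cα := mul_one _
  have I2 : ∀ t s c, IntervalIntegrable (fun q => π q t * (α q * s - c) * g q) volume qlo qhi := by
    intro t s c
    refine key (fun q => π q t * (α q * s - c))
      ((hπm t).aestronglyMeasurable.mul ((hαm.mul aestronglyMeasurable_const).sub
        aestronglyMeasurable_const)) (Cα * |s| + |c|) ?_
    intro q hq
    have h1 := hCα q (Ioc_subset_Icc_self hq)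
    have h2 := hπ01 q t
    simp only [Real.norm_eq_abs] at h1
    have hCα0 : 0 ≤ Cα := le_trans (abs_nonneg _) h1
    rw [abs_mul]
    have hπabs : |π q t| ≤ 1 := abs_le.2 ⟨by linarith [h2.1], h2.2⟩
    have : |α q * s - c| ≤ Cα * |s| + |c| := by
      calc |α q * s - c| ≤ |α q * s| + |c| := abs_sub _ _
        _ ≤ Cα * |s| + |c| := by
            rw [abs_mul]
            have := mul_le_mul_of_nonneg_right h1 (abs_nonneg s)
            linarith
    calc |π q t| * |α q * s - c| ≤ 1 * (Cα * |s| + |c|) :=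
          mul_le_mul hπabs this (abs_nonneg _) zero_le_one
      _ = Cα * |s| + |c| := one_mul _
  -- affine identity
  have haff : ∀ t' t : ℝ, Umis t' t = U t' + Rπ t' * (t - t') := by
    intro t' t
    have hfun : (fun q => π q t' * (α q * t - Pb t') * g q)
        = fun q => π q t' * (α q * t' - Pb t') * g q + (t - t') * (α q * π q t' * g q) := by
      funext q; ring
    rw [hUmisDef, hU, hRπ, hfun,
      intervalIntegral.integral_add (I2 t' t' (Pb t')) ((I1 t').const_mul (t - t')),
      intervalIntegral.integral_const_mul]
    ring
  -- the key envelope inequality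
  have hstar : ∀ t ∈ Icc tlo thi, ∀ t' ∈ Icc tlo thi, U t' + Rπ t' * (t - t') ≤ U t := by
    intro t ht t' ht'
    have := hIC t ht t' ht'
    rw [haff] at this
    exact this
  -- monotonicity
  have hmono : MonotoneOn Rπ (Icc tlo thi) := by
    intro s hs u hu hsu
    rcases eq_or_lt_of_le hsu with rfl | h
    · exact le_refl _
    · have h1 := hstar u hu s hs
      have h2 := hstar s hs u hu
      nlinarith [sub_pos.mpr h]
  refine ⟨hmono, hIR tlo htlo, ?_⟩
  -- interval integrability of Rπ
  have hRint : ∀ a b : ℝ, a ∈ Icc tlo thi → b ∈ Icc tlo thi →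
      IntervalIntegrable Rπ volume a b := by
    intro a b ha hb
    refine (hmono.mono ?_).intervalIntegrable
    rw [← uIcc_of_le htT.le]
    exact uIcc_subset_uIcc (uIcc_of_le htT.le ▸ ha) (uIcc_of_le htT.le ▸ hb)
  -- sandwich bound
  have hsand : ∀ s ∈ Icc tlo thi, ∀ u ∈ Icc tlo thi, s ≤ u →
      |(U u - U s) - ∫ x in s..u, Rπ x| ≤ (Rπ u - Rπ s) * (u - s) := by
    intro s hs u hu hsu
    have hIsub : IntervalIntegrable Rπ volume s u := hRint s u hs hu
    have hlow : Rπ s * (u - s) ≤ ∫ x in s..u, Rπ x := by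
      have h := intervalIntegral.integral_mono_on hsu (intervalIntegrable_const (c := Rπ s))
        hIsub (fun x hx => hmono hs ⟨hs.1.trans hx.1, hx.2.trans hu.2⟩ hx.1)
      simpa [intervalIntegral.integral_const, smul_eq_mul, mul_comm] using h
    have hhigh : (∫ x in s..u, Rπ x) ≤ Rπ u * (u - s) := by
      have h := intervalIntegral.integral_mono_on hsu hIsub
        (intervalIntegrable_const (c := Rπ u))
        (fun x hx => hmono ⟨hs.1.trans hx.1, hx.2.trans hu.2⟩ hu hx.2)
      simpa [intervalIntegral.integral_const, smul_eq_mul, mul_comm] using h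
    have hul : Rπ s * (u - s) ≤ U u - U s := by
      have := hstar u hu s hs; linarith
    have huh : U u - U s ≤ Rπ u * (u - s) := by
      have h := hstar s hs u hu
      have e : Rπ u * (s - u) = -(Rπ u * (u - s)) := by ring
      linarith [e ▸ h]
    rw [abs_le]
    constructor
    · have e : (Rπ u - Rπ s) * (u - s) = Rπ u * (u - s) - Rπ s * (u - s) := by ring
      linarith
    · have e : (Rπ u - Rπ s) * (u - s) = Rπ u * (u - s) - Rπ s * (u - s) := by ring
      linarith
  intro t ht
  rcases eq_or_lt_of_le ht.1 with rfl | hlt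
  · simp
  -- partition argument
  set D : ℝ := (U t - U tlo) - ∫ x in tlo..t, Rπ x with hD
  have hbound : ∀ n : ℕ, |D| ≤ (Rπ t - Rπ tlo) * (t - tlo) / (n + 1) := by
    intro n
    set N : ℕ := n + 1 with hN
    have hN0 : (0:ℝ) < N := by positivity
    set δ : ℝ := (t - tlo) / N with hδ
    have hδ0 : 0 ≤ δ := by
      apply div_nonneg (by linarith [hlt]) hN0.le
    set X : ℕ → ℝ := fun i => tlo + i * δ with hX
    have hX0 : X 0 = tlo := by simp [hX]
    have hXN : X N = t := by
      simp only [hX, hδ]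
      field_simp
      ring
    have hXmem : ∀ i ≤ N, X i ∈ Icc tlo thi := by
      intro i hi
      constructor
      · simp only [hX]; nlinarith [hδ0, Nat.cast_nonneg (α := ℝ) i]
      · have : X i ≤ X N := by
          simp only [hX]
          have : (i:ℝ) ≤ N := by exact_mod_cast hi
          nlinarith
        rw [hXN] at this
        linarith [ht.2]
    have hXle : ∀ i, X i ≤ X (i + 1) := by
      intro i
      simp only [hX, Nat.cast_add, Nat.cast_one]
      nlinarith
    have hstep : ∀ i, X (i + 1) - X i = δ := by
      intro i
      simp only [hX, Nat.cast_add, Nat.cast_one]; ring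
    -- telescoping U
    have hsumU : ∑ i ∈ Finset.range N, (U (X (i + 1)) - U (X i)) = U t - U tlo := by
      rw [Finset.sum_range_sub (fun i => U (X i)), hX0, hXN]
    -- telescoping integral
    have hsumI : ∑ i ∈ Finset.range N, (∫ x in X i..X (i + 1), Rπ x) = ∫ x in tlo..t, Rπ x := by
      have heach : ∀ i ∈ Finset.range N, (∫ x in X i..X (i + 1), Rπ x)
          = (∫ x in tlo..X (i + 1), Rπ x) - ∫ x in tlo..X i, Rπ x := by
        intro i hi
        rw [Finset.mem_range] at hi
        rw [intervalIntegral.integral_interval_sub_left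
          (hRint tlo (X (i + 1)) htlo (hXmem (i + 1) hi))
          (hRint tlo (X i) htlo (hXmem i (Nat.le_of_lt hi)))]
      rw [Finset.sum_congr rfl heach,
        Finset.sum_range_sub (fun i => ∫ x in tlo..X i, Rπ x), hX0, hXN]
      simp
    have hDsum : D = ∑ i ∈ Finset.range N,
        ((U (X (i + 1)) - U (X i)) - ∫ x in X i..X (i + 1), Rπ x) := by
      rw [Finset.sum_sub_distrib, hsumU, hsumI, hD]
    have habs : |D| ≤ ∑ i ∈ Finset.range N, (Rπ (X (i + 1)) - Rπ (X i)) * δ := by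
      rw [hDsum]
      refine (Finset.abs_sum_le_sum_abs _ _).trans (Finset.sum_le_sum ?_)
      intro i hi
      rw [Finset.mem_range] at hi
      have h := hsand (X i) (hXmem i (Nat.le_of_lt hi)) (X (i + 1)) (hXmem (i + 1) hi)
        (hXle i)
      rw [hstep i] at h
      exact h
    have hsumR : ∑ i ∈ Finset.range N, (Rπ (X (i + 1)) - Rπ (X i)) * δ
        = (Rπ t - Rπ tlo) * δ := by
      rw [← Finset.sum_mul, Finset.sum_range_sub (fun i => Rπ (X i)), hX0, hXN]
    rw [hsumR] at habs
    calc |D| ≤ (Rπ t - Rπ tlo) * δ := habs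
      _ = (Rπ t - Rπ tlo) * (t - tlo) / (n + 1) := by
          rw [hδ]
          push_cast [hN]
          ring
  have hD0 : D = 0 := by
    by_contra hne
    have habs0 : 0 < |D| := abs_pos.mpr hne
    set C : ℝ := (Rπ t - Rπ tlo) * (t - tlo) with hC
    obtain ⟨n, hn⟩ := exists_nat_gt (C / |D|)
    have h1 := hbound n
    have h2 : C / |D| < n + 1 := by
      calc C / |D| < n := hn
        _ ≤ n + 1 := by linarith
    have h3 : C < (n + 1) * |D| := by
      rwa [div_lt_iff₀ habs0] at h2
    have h4 : |D| * (n + 1) ≤ C := by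
      rw [le_div_iff₀ (by positivity)] at h1
      linarith
    nlinarith
  have : U t - U tlo - (∫ x in tlo..t, Rπ x) = 0 := hD0
  linarith
end

section
/- (Objective rewriting.) Let π : Q × T → [0,1] be measurable and P_b : T → ℝ, and suppose the envelope condition U(t) = U(t̲) + ∫_{t̲}^{t} R^π(x)dx holds for all t ∈ T. Then the mediator's revenue satisfies ∫_Q ∫_T π(q,t)(P_b(t) − r) f(t)g(q) dt dq = −U(t̲) + ∫_Q ∫_T η(q,t)·π(q,t)·g(q)f(t) dt dq. -/
open MeasureTheory Set Function Filter

set_option maxHeartbeats 1000000 in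
theorem stmt_10
    (tlo thi qlo qhi : ℝ) (htT : tlo < thi) (hqQ : qlo < qhi)
    (F f d : ℝ → ℝ)
    (hF : ∀ t ∈ Icc tlo thi, HasDerivAt F (f t) t)
    (hfpos : ∀ t ∈ Icc tlo thi, 0 < f t)
    (hF0 : F tlo = 0) (hF1 : F thi = 1)
    (hdDef : ∀ t ∈ Icc tlo thi, d t = (1 - F t) / f t)
    (hfint : IntervalIntegrable f volume tlo thi)
    (G g : ℝ → ℝ)
    (hG : ∀ q ∈ Icc qlo qhi, HasDerivAt G (g q) q)
    (hgpos : ∀ q ∈ Icc qlo qhi, 0 < g q)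
    (hgint : IntervalIntegrable g volume qlo qhi)
    (α α' : ℝ → ℝ)
    (hα : ∀ q ∈ Icc qlo qhi, HasDerivAt α (α' q) q)
    (hαpos : ∀ q ∈ Icc qlo qhi, 0 < α q)
    (r : ℝ) (hr : 0 < r)
    (η : ℝ → ℝ → ℝ)
    (hη : ∀ q t, η q t = α q * (t - d t) - r)
    (π : ℝ → ℝ → ℝ) (hπmeas : Measurable (Function.uncurry π))
    (hπ01 : ∀ q t, π q t ∈ Icc (0:ℝ) 1)
    (Pb : ℝ → ℝ) (hPbmeas : Measurable Pb)
    (Rπ : ℝ → ℝ) (hRπ : ∀ t, Rπ t = ∫ q in qlo..qhi, α q * π q t * g q)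
    (U : ℝ → ℝ) (hU : ∀ t, U t = ∫ q in qlo..qhi, π q t * (α q * t - Pb t) * g q)
    (henv : ∀ t ∈ Icc tlo thi, U t = U tlo + ∫ x in tlo..t, Rπ x)
    :
    (∫ q in qlo..qhi, ∫ t in tlo..thi, π q t * (Pb t - r) * f t * g q) =
      -U tlo + ∫ q in qlo..qhi, ∫ t in tlo..thi, η q t * π q t * g q * f t := by
  have hq : qlo ≤ qhi := hqQ.le
  have ht : tlo ≤ thi := htT.le
  haveI hνfin : IsFiniteMeasure (volume.restrict (Ioc tlo thi)) := by
    constructor; rw [Measure.restrict_apply_univ]; exact measure_Ioc_lt_top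
  haveI hμfin : IsFiniteMeasure (volume.restrict (Ioc qlo qhi)) := by
    constructor; rw [Measure.restrict_apply_univ]; exact measure_Ioc_lt_top
  have hαcont : ContinuousOn α (Icc qlo qhi) :=
    fun q hqm => ((hα q hqm).continuousAt).continuousWithinAt
  have hFcont : ContinuousOn F (Icc tlo thi) :=
    fun t htm => ((hF t htm).continuousAt).continuousWithinAt
  obtain ⟨Cα, hCα⟩ := isCompact_Icc.exists_bound_of_continuousOn hαcont
  obtain ⟨CF, hCF⟩ := isCompact_Icc.exists_bound_of_continuousOn hFcont
  have hCα0 : 0 ≤ Cα := le_trans (norm_nonneg _) (hCα qlo ⟨le_rfl, hq⟩)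
  have hCF0 : 0 ≤ CF := le_trans (norm_nonneg _) (hCF tlo ⟨le_rfl, ht⟩)
  have hg1 : Integrable g (volume.restrict (Ioc qlo qhi)) := hgint.1
  have hf1 : Integrable f (volume.restrict (Ioc tlo thi)) := hfint.1
  have hαm : AEStronglyMeasurable α (volume.restrict (Ioc qlo qhi)) :=
    (hαcont.mono Ioc_subset_Icc_self).aestronglyMeasurable measurableSet_Ioc
  have hFm : AEStronglyMeasurable F (volume.restrict (Ioc tlo thi)) :=
    (hFcont.mono Ioc_subset_Icc_self).aestronglyMeasurable measurableSet_Ioc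
  have hπsec : ∀ t, Measurable fun q => π q t :=
    fun t => hπmeas.comp (measurable_prodMk_right)
  have hπg : ∀ t, Integrable (fun q => π q t * g q) (volume.restrict (Ioc qlo qhi)) := by
    intro t
    refine Integrable.mono' hg1.norm
      (((hπsec t).aestronglyMeasurable).mul hg1.aestronglyMeasurable)
      (Eventually.of_forall fun q => ?_)
    have h0 := (hπ01 q t).1; have h1 := (hπ01 q t).2
    simp only [Real.norm_eq_abs]
    rw [abs_mul, abs_of_nonneg h0]
    nlinarith [abs_nonneg (g q)]
  have hαπg : ∀ t, Integrable (fun q => α q * (π q t * g q))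
      (volume.restrict (Ioc qlo qhi)) := by
    intro t
    refine Integrable.mono' (hg1.norm.const_mul Cα)
      (hαm.mul (((hπsec t).aestronglyMeasurable).mul hg1.aestronglyMeasurable)) ?_
    filter_upwards [ae_restrict_mem measurableSet_Ioc] with q hqm
    have h0 := (hπ01 q t).1; have h1 := (hπ01 q t).2
    have hαq : |α q| ≤ Cα := hCα q (Ioc_subset_Icc_self hqm)
    simp only [Real.norm_eq_abs]
    rw [abs_mul, abs_mul, abs_of_nonneg h0]
    nlinarith [abs_nonneg (g q), abs_nonneg (α q),
      mul_nonneg (sub_nonneg.mpr hαq) (abs_nonneg (g q)),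
      mul_nonneg (mul_nonneg (abs_nonneg (α q)) (sub_nonneg.mpr h1)) (abs_nonneg (g q))]
  have hRπ' : ∀ t, Rπ t = ∫ q in Ioc qlo qhi, α q * (π q t * g q) := by
    intro t
    rw [hRπ t, intervalIntegral.integral_of_le hq]
    simp only [mul_assoc]
  have hUeq : ∀ t, U t = t * Rπ t - Pb t * ∫ q in Ioc qlo qhi, π q t * g q := by
    intro t
    rw [hU t, intervalIntegral.integral_of_le hq]
    have h1 : ∀ q, π q t * (α q * t - Pb t) * g q
        = t * (α q * (π q t * g q)) - Pb t * (π q t * g q) := fun q => by ring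
    simp_rw [h1]
    rw [integral_sub ((hαπg t).const_mul t) ((hπg t).const_mul (Pb t)),
      integral_const_mul, integral_const_mul, ← hRπ' t]
  -- nonnegativity of S
  have hS0 : ∀ t, 0 ≤ ∫ q in Ioc qlo qhi, π q t * g q := by
    intro t
    refine integral_nonneg_of_ae ?_
    filter_upwards [ae_restrict_mem measurableSet_Ioc] with q hqm
    exact mul_nonneg (hπ01 q t).1 (hgpos q (Ioc_subset_Icc_self hqm)).le
  -- bound on Rπ
  have hRbd : ∀ t, |Rπ t| ≤ Cα * ∫ q in Ioc qlo qhi, |g q| := by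
    intro t
    rw [hRπ' t]
    have h1 : ‖∫ q in Ioc qlo qhi, α q * (π q t * g q)‖
        ≤ ∫ q in Ioc qlo qhi, Cα * |g q| := by
      refine norm_integral_le_of_norm_le ((hg1.norm.const_mul Cα).congr
        (Eventually.of_forall fun q => by simp [Real.norm_eq_abs])) ?_
      filter_upwards [ae_restrict_mem measurableSet_Ioc] with q hqm
      have h0 := (hπ01 q t).1; have h1 := (hπ01 q t).2
      have hαq : |α q| ≤ Cα := hCα q (Ioc_subset_Icc_self hqm)
      simp only [Real.norm_eq_abs]
      rw [abs_mul, abs_mul, abs_of_nonneg h0]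
      nlinarith [abs_nonneg (g q), abs_nonneg (α q),
        mul_nonneg (sub_nonneg.mpr hαq) (abs_nonneg (g q)),
        mul_nonneg (mul_nonneg (abs_nonneg (α q)) (sub_nonneg.mpr h1)) (abs_nonneg (g q))]
    rw [Real.norm_eq_abs] at h1
    calc |∫ q in Ioc qlo qhi, α q * (π q t * g q)|
        ≤ ∫ q in Ioc qlo qhi, Cα * |g q| := h1
      _ = Cα * ∫ q in Ioc qlo qhi, |g q| := integral_const_mul _ _
  set CR : ℝ := Cα * ∫ q in Ioc qlo qhi, |g q| with hCRdef
  have hCR0 : 0 ≤ CR := le_trans (abs_nonneg _) (hRbd tlo)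
  have hIbd : ∀ t ∈ Icc tlo thi, |∫ x in tlo..t, Rπ x| ≤ CR * (thi - tlo) := by
    intro t htm
    have h2 := intervalIntegral.norm_integral_le_of_norm_le_const
      (C := CR) (f := Rπ) (a := tlo) (b := t)
      (fun x _ => by simpa [Real.norm_eq_abs] using hRbd x)
    rw [Real.norm_eq_abs] at h2
    calc |∫ x in tlo..t, Rπ x| ≤ CR * |t - tlo| := h2
      _ ≤ CR * (thi - tlo) := by
          refine mul_le_mul_of_nonneg_left ?_ hCR0
          rw [abs_of_nonneg (by linarith [htm.1])]
          linarith [htm.2]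
  have hPbS : ∀ t ∈ Icc tlo thi,
      Pb t * (∫ q in Ioc qlo qhi, π q t * g q)
        = t * Rπ t - U tlo - ∫ x in tlo..t, Rπ x := by
    intro t htm
    have h1 := hUeq t
    have h2 := henv t htm
    linarith
  have hCt : ∀ t ∈ Icc tlo thi, |t| ≤ max |tlo| |thi| := by
    intro t htm
    rw [abs_le]
    constructor
    · have := neg_abs_le tlo; have := le_max_left |tlo| |thi|; linarith [htm.1]
    · have := le_abs_self thi; have := le_max_right |tlo| |thi|; linarith [htm.2]
  set CW : ℝ := max |tlo| |thi| * CR + |U tlo| + CR * (thi - tlo) with hCWdef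
  have hCWbd : ∀ t ∈ Icc tlo thi,
      |Pb t| * (∫ q in Ioc qlo qhi, π q t * g q) ≤ CW := by
    intro t htm
    have h1 : |Pb t| * (∫ q in Ioc qlo qhi, π q t * g q)
        = |Pb t * ∫ q in Ioc qlo qhi, π q t * g q| := by
      rw [abs_mul, abs_of_nonneg (hS0 t)]
    rw [h1, hPbS t htm]
    calc |t * Rπ t - U tlo - ∫ x in tlo..t, Rπ x|
        ≤ |t * Rπ t| + |U tlo| + |∫ x in tlo..t, Rπ x| := by
          have := abs_sub (t * Rπ t - U tlo) (∫ x in tlo..t, Rπ x)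
          have := abs_sub (t * Rπ t) (U tlo)
          linarith [abs_sub_abs_le_abs_sub (t * Rπ t) (U tlo)]
      _ ≤ CW := by
          rw [hCWdef]
          have e1 : |t * Rπ t| ≤ max |tlo| |thi| * CR := by
            rw [abs_mul]
            exact mul_le_mul (hCt t htm) (hRbd t) (abs_nonneg _)
              (le_trans (abs_nonneg tlo) (le_max_left _ _))
          have e2 := hIbd t htm
          linarith
  have hdf : ∀ t ∈ Icc tlo thi, f t * d t = 1 - F t := by
    intro t htm
    rw [hdDef t htm]
    field_simp [(hfpos t htm).ne']
  -- product measure abbreviation facts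
  have hprodeq : (volume.restrict (Ioc qlo qhi)).prod (volume.restrict (Ioc tlo thi))
      = ((volume : Measure ℝ).prod volume).restrict ((Ioc qlo qhi) ×ˢ (Ioc tlo thi)) :=
    Measure.prod_restrict _ _
  have hπP : AEStronglyMeasurable (fun p : ℝ × ℝ => π p.1 p.2)
      ((volume.restrict (Ioc qlo qhi)).prod (volume.restrict (Ioc tlo thi))) :=
    hπmeas.aestronglyMeasurable
  have hgP : AEStronglyMeasurable (fun p : ℝ × ℝ => g p.1)
      ((volume.restrict (Ioc qlo qhi)).prod (volume.restrict (Ioc tlo thi))) :=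
    hg1.aestronglyMeasurable.comp_fst
  have hfP : AEStronglyMeasurable (fun p : ℝ × ℝ => f p.2)
      ((volume.restrict (Ioc qlo qhi)).prod (volume.restrict (Ioc tlo thi))) :=
    hf1.aestronglyMeasurable.comp_snd
  have hαP : AEStronglyMeasurable (fun p : ℝ × ℝ => α p.1)
      ((volume.restrict (Ioc qlo qhi)).prod (volume.restrict (Ioc tlo thi))) :=
    hαm.comp_fst
  have hPbP : AEStronglyMeasurable (fun p : ℝ × ℝ => Pb p.2)
      ((volume.restrict (Ioc qlo qhi)).prod (volume.restrict (Ioc tlo thi))) :=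
    hPbmeas.aestronglyMeasurable.comp_snd
  have hdm : AEStronglyMeasurable d (volume.restrict (Ioc tlo thi)) := by
    have h1 : AEMeasurable (fun t => (1 - F t) / f t) (volume.restrict (Ioc tlo thi)) :=
      (aemeasurable_const.sub hFm.aemeasurable).div hf1.aestronglyMeasurable.aemeasurable
    refine h1.aestronglyMeasurable.congr ?_
    filter_upwards [ae_restrict_mem measurableSet_Ioc] with t htm
    exact (hdDef t (Ioc_subset_Icc_self htm)).symm
  have hdP : AEStronglyMeasurable (fun p : ℝ × ℝ => d p.2)
      ((volume.restrict (Ioc qlo qhi)).prod (volume.restrict (Ioc tlo thi))) :=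
    hdm.comp_snd
  -- k1 : the Pb part
  have hk1meas : AEStronglyMeasurable
      (fun p : ℝ × ℝ => π p.1 p.2 * Pb p.2 * f p.2 * g p.1)
      ((volume.restrict (Ioc qlo qhi)).prod (volume.restrict (Ioc tlo thi))) :=
    ((hπP.mul hPbP).mul hfP).mul hgP
  have hk1sect : ∀ t, Integrable (fun q => π q t * Pb t * f t * g q)
      (volume.restrict (Ioc qlo qhi)) := fun t =>
    ((hπg t).const_mul (Pb t * f t)).congr (Eventually.of_forall fun q => by ring)
  have hk1norm : Integrable
      (fun t => ∫ q in Ioc qlo qhi, ‖π q t * Pb t * f t * g q‖)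
      (volume.restrict (Ioc tlo thi)) := by
    have hπsw : AEStronglyMeasurable (fun p : ℝ × ℝ => π p.2 p.1)
        ((volume.restrict (Ioc tlo thi)).prod (volume.restrict (Ioc qlo qhi))) :=
      (hπmeas.comp measurable_swap).aestronglyMeasurable
    have hmeas0 : AEStronglyMeasurable
        (fun p : ℝ × ℝ => ‖π p.2 p.1 * Pb p.1 * f p.1 * g p.2‖)
        ((volume.restrict (Ioc tlo thi)).prod (volume.restrict (Ioc qlo qhi))) :=
      (((hπsw.mul hPbmeas.aestronglyMeasurable.comp_fst).mul
        hf1.aestronglyMeasurable.comp_fst).mul hg1.aestronglyMeasurable.comp_snd).norm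
    have hmeas : AEStronglyMeasurable
        (fun t => ∫ q in Ioc qlo qhi, ‖π q t * Pb t * f t * g q‖)
        (volume.restrict (Ioc tlo thi)) := hmeas0.integral_prod_right'
    refine Integrable.mono' (hf1.norm.const_mul CW) hmeas ?_
    filter_upwards [ae_restrict_mem measurableSet_Ioc] with t htm
    have htI := Ioc_subset_Icc_self htm
    simp only [Real.norm_eq_abs]
    rw [abs_of_nonneg (integral_nonneg fun q => abs_nonneg _)]
    have step1 : (∫ q in Ioc qlo qhi, |π q t * Pb t * f t * g q|)
        ≤ ∫ q in Ioc qlo qhi, (|Pb t| * |f t|) * (π q t * g q) := by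
      refine integral_mono_ae ((hk1sect t).abs) ((hπg t).const_mul _) ?_
      filter_upwards [ae_restrict_mem measurableSet_Ioc] with q hqm
      have hg0 : 0 ≤ g q := (hgpos q (Ioc_subset_Icc_self hqm)).le
      have h0 := (hπ01 q t).1
      rw [abs_mul, abs_mul, abs_mul, abs_of_nonneg h0, abs_of_nonneg hg0]
      exact le_of_eq (by ring)
    calc (∫ q in Ioc qlo qhi, |π q t * Pb t * f t * g q|)
        ≤ ∫ q in Ioc qlo qhi, (|Pb t| * |f t|) * (π q t * g q) := step1
      _ = (|Pb t| * |f t|) * ∫ q in Ioc qlo qhi, π q t * g q := integral_const_mul _ _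
      _ ≤ CW * |f t| := by
          have h3 := hCWbd t htI
          have h4 := hS0 t
          nlinarith [abs_nonneg (f t), abs_nonneg (Pb t),
            mul_nonneg (sub_nonneg.mpr h3) (abs_nonneg (f t))]
  have hk1int : Integrable (fun p : ℝ × ℝ => π p.1 p.2 * Pb p.2 * f p.2 * g p.1)
      ((volume.restrict (Ioc qlo qhi)).prod (volume.restrict (Ioc tlo thi))) := by
    rw [integrable_prod_iff' hk1meas]
    exact ⟨Eventually.of_forall fun t => hk1sect t, hk1norm⟩
  -- k2 : the bounded part
  have hk2meas : AEStronglyMeasurable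
      (fun p : ℝ × ℝ => π p.1 p.2 * g p.1
        * (α p.1 * (f p.2 * d p.2) - α p.1 * (p.2 * f p.2)))
      ((volume.restrict (Ioc qlo qhi)).prod (volume.restrict (Ioc tlo thi))) :=
    (hπP.mul hgP).mul ((hαP.mul (hfP.mul hdP)).sub
      (hαP.mul (measurable_snd.aestronglyMeasurable.mul hfP)))
  have hk2int : Integrable
      (fun p : ℝ × ℝ => π p.1 p.2 * g p.1
        * (α p.1 * (f p.2 * d p.2) - α p.1 * (p.2 * f p.2)))
      ((volume.restrict (Ioc qlo qhi)).prod (volume.restrict (Ioc tlo thi))) := by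
    refine Integrable.mono'
      ((hg1.norm.const_mul Cα).mul_prod ((integrable_const (1 + CF)).add
        (hf1.norm.const_mul (max |tlo| |thi|)))) hk2meas ?_
    rw [hprodeq]
    filter_upwards [ae_restrict_mem (measurableSet_Ioc.prod measurableSet_Ioc)] with p hp
    obtain ⟨hp1, hp2⟩ := hp
    have hp1I := Ioc_subset_Icc_self hp1
    have hp2I := Ioc_subset_Icc_self hp2
    have e1 : |π p.1 p.2| ≤ 1 := by
      rw [abs_of_nonneg (hπ01 p.1 p.2).1]; exact (hπ01 p.1 p.2).2
    have e2 : |α p.1| ≤ Cα := hCα p.1 hp1I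
    have e3 : f p.2 * d p.2 = 1 - F p.2 := hdf p.2 hp2I
    have e4 : |1 - F p.2| ≤ 1 + CF := by
      have h5 : |F p.2| ≤ CF := hCF p.2 hp2I
      rw [abs_le] at h5 ⊢
      constructor <;> [linarith [h5.2]; linarith [h5.1]]
    have e5 : |p.2| ≤ max |tlo| |thi| := hCt p.2 hp2I
    simp only [Real.norm_eq_abs]
    have e6 : |α p.1 * (f p.2 * d p.2) - α p.1 * (p.2 * f p.2)|
        ≤ Cα * ((1 + CF) + max |tlo| |thi| * |f p.2|) := by
      calc |α p.1 * (f p.2 * d p.2) - α p.1 * (p.2 * f p.2)|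
          ≤ |α p.1 * (f p.2 * d p.2)| + |α p.1 * (p.2 * f p.2)| := abs_sub _ _
        _ ≤ Cα * (1 + CF) + Cα * (max |tlo| |thi| * |f p.2|) := by
            have h7 : |α p.1 * (f p.2 * d p.2)| ≤ Cα * (1 + CF) := by
              rw [abs_mul, e3]
              exact mul_le_mul e2 e4 (abs_nonneg _) hCα0
            have h8 : |α p.1 * (p.2 * f p.2)| ≤ Cα * (max |tlo| |thi| * |f p.2|) := by
              rw [abs_mul, abs_mul]
              refine mul_le_mul e2 ?_ (by positivity) hCα0
              exact mul_le_mul_of_nonneg_right e5 (abs_nonneg _)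
            linarith
        _ = Cα * ((1 + CF) + max |tlo| |thi| * |f p.2|) := by ring
    calc |π p.1 p.2 * g p.1 * (α p.1 * (f p.2 * d p.2) - α p.1 * (p.2 * f p.2))|
        = |π p.1 p.2| * |g p.1|
          * |α p.1 * (f p.2 * d p.2) - α p.1 * (p.2 * f p.2)| := by
          rw [abs_mul, abs_mul]
      _ ≤ 1 * |g p.1| * (Cα * ((1 + CF) + max |tlo| |thi| * |f p.2|)) := by
          refine mul_le_mul ?_ e6 (abs_nonneg _) (by positivity)
          exact mul_le_mul_of_nonneg_right e1 (abs_nonneg _)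
      _ = Cα * |g p.1| * ((1 + CF) + max |tlo| |thi| * |f p.2|) := by ring
  -- r-part
  have hrπfg : Integrable (fun p : ℝ × ℝ => r * (π p.1 p.2 * f p.2 * g p.1))
      ((volume.restrict (Ioc qlo qhi)).prod (volume.restrict (Ioc tlo thi))) := by
    refine Integrable.mono'
      ((hg1.norm.const_mul r).mul_prod hf1.norm)
      ((((hπP.mul hfP).mul hgP)).const_mul r) ?_
    rw [hprodeq]
    filter_upwards [ae_restrict_mem (measurableSet_Ioc.prod measurableSet_Ioc)] with p hp
    obtain ⟨hp1, hp2⟩ := hp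
    have e1 : |π p.1 p.2| ≤ 1 := by
      rw [abs_of_nonneg (hπ01 p.1 p.2).1]; exact (hπ01 p.1 p.2).2
    simp only [Real.norm_eq_abs]
    calc |r * (π p.1 p.2 * f p.2 * g p.1)|
        = |r| * (|π p.1 p.2| * |f p.2| * |g p.1|) := by
          rw [abs_mul, abs_mul, abs_mul]
      _ ≤ |r| * (1 * |f p.2| * |g p.1|) := by
          refine mul_le_mul_of_nonneg_left ?_ (abs_nonneg r)
          have := mul_le_mul_of_nonneg_right e1 (abs_nonneg (f p.2))
          exact mul_le_mul_of_nonneg_right this (abs_nonneg (g p.1))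
      _ = r * |g p.1| * |f p.2| := by rw [abs_of_pos hr]; ring
  have haint : Integrable (fun p : ℝ × ℝ => π p.1 p.2 * (Pb p.2 - r) * f p.2 * g p.1)
      ((volume.restrict (Ioc qlo qhi)).prod (volume.restrict (Ioc tlo thi))) :=
    (hk1int.sub hrπfg).congr (Eventually.of_forall fun p => by simp only [Pi.sub_apply]; ring)
  have hkint : Integrable (fun p : ℝ × ℝ => π p.1 p.2 * (Pb p.2 - r) * f p.2 * g p.1
      - (α p.1 * (p.2 - d p.2) - r) * π p.1 p.2 * g p.1 * f p.2)
      ((volume.restrict (Ioc qlo qhi)).prod (volume.restrict (Ioc tlo thi))) :=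
    (hk1int.add hk2int).congr (Eventually.of_forall fun p => by simp only [Pi.add_apply]; ring)
  have hbint : Integrable
      (fun p : ℝ × ℝ => (α p.1 * (p.2 - d p.2) - r) * π p.1 p.2 * g p.1 * f p.2)
      ((volume.restrict (Ioc qlo qhi)).prod (volume.restrict (Ioc tlo thi))) :=
    (haint.sub hkint).congr (Eventually.of_forall fun p => by simp only [Pi.sub_apply]; ring)
  -- measurability of Rπ
  have hRm : AEStronglyMeasurable Rπ (volume.restrict (Ioc tlo thi)) := by
    have hπsw : AEStronglyMeasurable (fun p : ℝ × ℝ => π p.2 p.1)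
        ((volume.restrict (Ioc tlo thi)).prod (volume.restrict (Ioc qlo qhi))) :=
      (hπmeas.comp measurable_swap).aestronglyMeasurable
    have h1 : AEStronglyMeasurable (fun p : ℝ × ℝ => α p.2 * (π p.2 p.1 * g p.2))
        ((volume.restrict (Ioc tlo thi)).prod (volume.restrict (Ioc qlo qhi))) :=
      hαm.comp_snd.mul (hπsw.mul hg1.aestronglyMeasurable.comp_snd)
    exact h1.integral_prod_right'.congr (Eventually.of_forall fun t => (hRπ' t).symm)
  have hRν : Integrable Rπ (volume.restrict (Ioc tlo thi)) :=
    Integrable.mono' (integrable_const CR) hRm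
      (Eventually.of_forall fun t => by simpa [Real.norm_eq_abs] using hRbd t)
  -- FTC
  have hFTC : ∀ x ∈ Icc tlo thi, (∫ u in x..thi, f u) = F thi - F x := by
    intro x hx
    refine intervalIntegral.integral_eq_sub_of_hasDerivAt (fun u hu => hF u ?_)
      (hfint.mono_set ?_)
    · rw [uIcc_of_le hx.2] at hu; exact ⟨le_trans hx.1 hu.1, hu.2⟩
    · rw [uIcc_of_le hx.2, uIcc_of_le ht]; exact Icc_subset_Icc hx.1 le_rfl
  have hintF : (∫ t in Ioc tlo thi, f t) = 1 := by
    rw [← intervalIntegral.integral_of_le ht, hFTC tlo ⟨le_rfl, ht⟩, hF0, hF1]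
    norm_num
  -- integrability of the three final pieces
  have h1FRint : Integrable (fun t => (1 - F t) * Rπ t) (volume.restrict (Ioc tlo thi)) := by
    refine Integrable.mono' (integrable_const ((1 + CF) * CR))
      ((aestronglyMeasurable_const.sub hFm).mul hRm) ?_
    filter_upwards [ae_restrict_mem measurableSet_Ioc] with t htm
    have h5 : |F t| ≤ CF := by
      have := hCF t (Ioc_subset_Icc_self htm); rwa [Real.norm_eq_abs] at this
    have e4 : |1 - F t| ≤ 1 + CF := by
      rw [abs_le] at h5 ⊢
      constructor <;> [linarith [h5.2]; linarith [h5.1]]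
    rw [Real.norm_eq_abs, abs_mul]
    exact mul_le_mul e4 (hRbd t) (abs_nonneg _) (by linarith)
  have hX : Integrable (fun t => f t * d t * Rπ t) (volume.restrict (Ioc tlo thi)) := by
    refine h1FRint.congr ?_
    filter_upwards [ae_restrict_mem measurableSet_Ioc] with t htm
    rw [← hdf t (Ioc_subset_Icc_self htm)]
  have hY : Integrable (fun t => f t * U tlo) (volume.restrict (Ioc tlo thi)) :=
    hf1.mul_const _
  have hIcont : ContinuousOn (fun x => ∫ u in tlo..x, Rπ u) (Icc tlo thi) := by
    have hRIcc : IntegrableOn Rπ (Icc tlo thi) volume := by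
      show Integrable Rπ (volume.restrict (Icc tlo thi))
      rwa [← Measure.restrict_congr_set Ioc_ae_eq_Icc]
    have h2 := intervalIntegral.continuousOn_primitive_interval
      (a := tlo) (b := thi) (f := Rπ) (μ := volume) (by rwa [uIcc_of_le ht])
    rwa [uIcc_of_le ht] at h2
  have hZ : Integrable (fun t => f t * (∫ x in tlo..t, Rπ x))
      (volume.restrict (Ioc tlo thi)) := by
    refine Integrable.mono' (hf1.norm.const_mul (CR * (thi - tlo)))
      (hf1.aestronglyMeasurable.mul
        ((hIcont.mono Ioc_subset_Icc_self).aestronglyMeasurable measurableSet_Ioc)) ?_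
    filter_upwards [ae_restrict_mem measurableSet_Ioc] with t htm
    rw [Real.norm_eq_abs, abs_mul]
    calc |f t| * |∫ x in tlo..t, Rπ x| ≤ |f t| * (CR * (thi - tlo)) :=
        mul_le_mul_of_nonneg_left (hIbd t (Ioc_subset_Icc_self htm)) (abs_nonneg _)
      _ = CR * (thi - tlo) * ‖f t‖ := by rw [Real.norm_eq_abs]; ring
  -- triangle Fubini
  have hMmeas : AEStronglyMeasurable
      (fun p : ℝ × ℝ => if p.1 ≤ p.2 then Rπ p.1 * f p.2 else 0)
      ((volume.restrict (Ioc tlo thi)).prod (volume.restrict (Ioc tlo thi))) := by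
    have h0 : AEStronglyMeasurable (fun p : ℝ × ℝ => Rπ p.1 * f p.2)
        ((volume.restrict (Ioc tlo thi)).prod (volume.restrict (Ioc tlo thi))) :=
      hRm.comp_fst.mul hf1.aestronglyMeasurable.comp_snd
    refine (h0.indicator (measurableSet_le measurable_fst measurable_snd)).congr
      (Eventually.of_forall fun p => ?_)
    by_cases h : p.1 ≤ p.2 <;> simp [Set.indicator_apply, h]
  have hMint : Integrable (fun p : ℝ × ℝ => if p.1 ≤ p.2 then Rπ p.1 * f p.2 else 0)
      ((volume.restrict (Ioc tlo thi)).prod (volume.restrict (Ioc tlo thi))) := by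
    refine Integrable.mono' ((integrable_const CR).mul_prod hf1.norm) hMmeas
      (Eventually.of_forall fun p => ?_)
    by_cases h : p.1 ≤ p.2
    · simp only [h, if_true]
      rw [Real.norm_eq_abs, Real.norm_eq_abs, abs_mul]
      exact mul_le_mul_of_nonneg_right (hRbd p.1) (abs_nonneg _)
    · simp only [h, if_false]
      rw [norm_zero]
      exact mul_nonneg hCR0 (norm_nonneg _)
  have hswapM := integral_integral_swap
    (f := fun x t => if x ≤ t then Rπ x * f t else 0) hMint
  have hLtri : (∫ x in Ioc tlo thi, ∫ t in Ioc tlo thi,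
      (if x ≤ t then Rπ x * f t else 0))
      = ∫ x in Ioc tlo thi, (1 - F x) * Rπ x := by
    refine integral_congr_ae ?_
    filter_upwards [ae_restrict_mem measurableSet_Ioc] with x hxm
    have hxI := Ioc_subset_Icc_self hxm
    have h1 : (∫ t in Ioc tlo thi, (if x ≤ t then Rπ x * f t else 0))
        = ∫ t in Ioc tlo thi, Rπ x * (Ici x).indicator f t := by
      refine integral_congr_ae (Eventually.of_forall fun u => ?_)
      by_cases h : x ≤ u <;> simp [Set.indicator_apply, mem_Ici, h]
    rw [h1, integral_const_mul, integral_indicator measurableSet_Ici,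
      Measure.restrict_restrict measurableSet_Ici]
    have hset : Ici x ∩ Ioc tlo thi = Icc x thi := by
      ext y
      simp only [mem_inter_iff, mem_Ici, mem_Ioc, mem_Icc]
      constructor
      · rintro ⟨h1, _, h3⟩; exact ⟨h1, h3⟩
      · rintro ⟨h1, h2⟩; exact ⟨h1, lt_of_lt_of_le hxm.1 h1, h2⟩
    rw [hset, integral_Icc_eq_integral_Ioc, ← intervalIntegral.integral_of_le hxI.2,
      hFTC x hxI, hF1]
    ring
  have hRtri : (∫ t in Ioc tlo thi, ∫ x in Ioc tlo thi,
      (if x ≤ t then Rπ x * f t else 0))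
      = ∫ t in Ioc tlo thi, f t * (∫ x in tlo..t, Rπ x) := by
    refine integral_congr_ae ?_
    filter_upwards [ae_restrict_mem measurableSet_Ioc] with t htm
    have htI := Ioc_subset_Icc_self htm
    have h1 : (∫ x in Ioc tlo thi, (if x ≤ t then Rπ x * f t else 0))
        = ∫ x in Ioc tlo thi, ((Iic t).indicator Rπ x) * f t := by
      refine integral_congr_ae (Eventually.of_forall fun u => ?_)
      by_cases h : u ≤ t <;> simp [Set.indicator_apply, mem_Iic, h]
    rw [h1, integral_mul_const, integral_indicator measurableSet_Iic,
      Measure.restrict_restrict measurableSet_Iic]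
    have hset : Iic t ∩ Ioc tlo thi = Ioc tlo t := by
      ext y
      simp only [mem_inter_iff, mem_Iic, mem_Ioc]
      constructor
      · rintro ⟨h1, h2, _⟩; exact ⟨h2, h1⟩
      · rintro ⟨h1, h2⟩; exact ⟨h2, h1, le_trans h2 htI.2⟩
    rw [hset, ← intervalIntegral.integral_of_le htI.1]
    ring
  have e3' : (∫ t in Ioc tlo thi, f t * (∫ x in tlo..t, Rπ x))
      = ∫ x in Ioc tlo thi, (1 - F x) * Rπ x := by
    rw [← hRtri, ← hswapM, hLtri]
  -- the final one-variable computation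
  have hfinal : (∫ t in Ioc tlo thi,
      (f t * d t * Rπ t - f t * U tlo - f t * (∫ x in tlo..t, Rπ x))) = -U tlo := by
    have hsplit3 : (∫ t in Ioc tlo thi,
        (f t * d t * Rπ t - f t * U tlo - f t * (∫ x in tlo..t, Rπ x)))
        = ((∫ t in Ioc tlo thi, f t * d t * Rπ t)
            - ∫ t in Ioc tlo thi, f t * U tlo)
          - ∫ t in Ioc tlo thi, f t * (∫ x in tlo..t, Rπ x) := by
      exact (integral_sub (hX.sub hY) hZ).trans
        (congrArg (fun z => z - ∫ t in Ioc tlo thi, f t * (∫ x in tlo..t, Rπ x))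
          (integral_sub hX hY))
    have e1 : (∫ t in Ioc tlo thi, f t * d t * Rπ t)
        = ∫ t in Ioc tlo thi, (1 - F t) * Rπ t := by
      refine integral_congr_ae ?_
      filter_upwards [ae_restrict_mem measurableSet_Ioc] with t htm
      rw [hdf t (Ioc_subset_Icc_self htm)]
    have e2 : (∫ t in Ioc tlo thi, f t * U tlo) = U tlo := by
      rw [integral_mul_const, hintF, one_mul]
    rw [hsplit3, e1, e2, e3']
    ring
  -- inner q-integral computation
  have hinner : ∀ t ∈ Icc tlo thi,
      (∫ q in Ioc qlo qhi, (π q t * (Pb t - r) * f t * g q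
        - (α q * (t - d t) - r) * π q t * g q * f t))
      = f t * d t * Rπ t - f t * U tlo - f t * (∫ x in tlo..t, Rπ x) := by
    intro t htm
    have h1 : ∀ q, π q t * (Pb t - r) * f t * g q
        - (α q * (t - d t) - r) * π q t * g q * f t
        = (Pb t * f t) * (π q t * g q)
          + (f t * d t - f t * t) * (α q * (π q t * g q)) := fun q => by ring
    simp_rw [h1]
    rw [integral_add ((hπg t).const_mul _) ((hαπg t).const_mul _),
      integral_const_mul, integral_const_mul, ← hRπ' t]
    have h2 := hPbS t htm
    linear_combination f t * h2
  -- main assembly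
  have hIa : Integrable
      (fun q => ∫ t in Ioc tlo thi, π q t * (Pb t - r) * f t * g q)
      (volume.restrict (Ioc qlo qhi)) := haint.integral_prod_left
  have hIb : Integrable
      (fun q => ∫ t in Ioc tlo thi, (α q * (t - d t) - r) * π q t * g q * f t)
      (volume.restrict (Ioc qlo qhi)) := hbint.integral_prod_left
  have hmain : (∫ q in Ioc qlo qhi, ∫ t in Ioc tlo thi, π q t * (Pb t - r) * f t * g q)
      - (∫ q in Ioc qlo qhi, ∫ t in Ioc tlo thi,
          (α q * (t - d t) - r) * π q t * g q * f t)
      = -U tlo := by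
    have s1 : (∫ q in Ioc qlo qhi, ∫ t in Ioc tlo thi, π q t * (Pb t - r) * f t * g q)
        - (∫ q in Ioc qlo qhi, ∫ t in Ioc tlo thi,
            (α q * (t - d t) - r) * π q t * g q * f t)
        = ∫ q in Ioc qlo qhi,
            ((∫ t in Ioc tlo thi, π q t * (Pb t - r) * f t * g q)
              - ∫ t in Ioc tlo thi, (α q * (t - d t) - r) * π q t * g q * f t) :=
      (integral_sub hIa hIb).symm
    have s2 : (∫ q in Ioc qlo qhi,
          ((∫ t in Ioc tlo thi, π q t * (Pb t - r) * f t * g q)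
            - ∫ t in Ioc tlo thi, (α q * (t - d t) - r) * π q t * g q * f t))
        = ∫ q in Ioc qlo qhi, ∫ t in Ioc tlo thi,
            (π q t * (Pb t - r) * f t * g q
              - (α q * (t - d t) - r) * π q t * g q * f t) := by
      refine integral_congr_ae ?_
      filter_upwards [haint.prod_right_ae, hbint.prod_right_ae] with q h1 h2
      exact (integral_sub h1 h2).symm
    have s3 : (∫ q in Ioc qlo qhi, ∫ t in Ioc tlo thi,
          (π q t * (Pb t - r) * f t * g q
            - (α q * (t - d t) - r) * π q t * g q * f t))
        = ∫ t in Ioc tlo thi, ∫ q in Ioc qlo qhi,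
            (π q t * (Pb t - r) * f t * g q
              - (α q * (t - d t) - r) * π q t * g q * f t) :=
      integral_integral_swap hkint
    have s4 : (∫ t in Ioc tlo thi, ∫ q in Ioc qlo qhi,
          (π q t * (Pb t - r) * f t * g q
            - (α q * (t - d t) - r) * π q t * g q * f t))
        = ∫ t in Ioc tlo thi,
            (f t * d t * Rπ t - f t * U tlo - f t * (∫ x in tlo..t, Rπ x)) := by
      refine integral_congr_ae ?_
      filter_upwards [ae_restrict_mem measurableSet_Ioc] with t htm
      exact hinner t (Ioc_subset_Icc_self htm)
    rw [s1, s2, s3, s4, hfinal]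
  rw [intervalIntegral.integral_of_le hq, intervalIntegral.integral_of_le hq]
  simp only [intervalIntegral.integral_of_le ht, hη]
  linarith [hmain]
end

section
/- (Revenue upper bound for the relaxed problem.) Under the MHR assumption, for every measurable π : Q × T → [0,1] and P_b : T → ℝ satisfying U(t) ≥ 0 for all t ∈ T and U(t) ≥ U(t'; t) for all t, t' ∈ T, the mediator's revenue satisfies ∫_Q ∫_T π(q,t)(P_b(t) − r)f(t)g(q) dt dq ≤ ∫_Q ∫_T max(η(q,t), 0)·g(q)f(t) dt dq. -/
open MeasureTheory Set

set_option maxHeartbeats 1000000 in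
theorem stmt_12
    (tlo thi qlo qhi : ℝ) (htT : tlo < thi) (hqQ : qlo < qhi)
    (F f d : ℝ → ℝ)
    (hF : ∀ t ∈ Icc tlo thi, HasDerivAt F (f t) t)
    (hfpos : ∀ t ∈ Icc tlo thi, 0 < f t)
    (hF0 : F tlo = 0) (hF1 : F thi = 1)
    (hdDef : ∀ t ∈ Icc tlo thi, d t = (1 - F t) / f t)
    (hfint : IntervalIntegrable f volume tlo thi)
    (d' : ℝ → ℝ)
    (hdDeriv : ∀ t ∈ Icc tlo thi, HasDerivAt d (d' t) t)
    (hMHR : ∀ t ∈ Icc tlo thi, d' t ≤ 0)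
    (G g : ℝ → ℝ)
    (hG : ∀ q ∈ Icc qlo qhi, HasDerivAt G (g q) q)
    (hgpos : ∀ q ∈ Icc qlo qhi, 0 < g q)
    (hG0 : G qlo = 0) (hG1 : G qhi = 1)
    (hgint : IntervalIntegrable g volume qlo qhi)
    (α α' : ℝ → ℝ)
    (hα : ∀ q ∈ Icc qlo qhi, HasDerivAt α (α' q) q)
    (hαpos : ∀ q ∈ Icc qlo qhi, 0 < α q)
    (hα'pos : ∀ q ∈ Icc qlo qhi, 0 < α' q)
    (r : ℝ) (hr : 0 < r)
    (hlow : α qlo * tlo < r) (hhigh : r < α qhi * thi)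
    (η : ℝ → ℝ → ℝ)
    (hη : ∀ q t, η q t = α q * (t - d t) - r)
    (π : ℝ → ℝ → ℝ) (hπmeas : Measurable (Function.uncurry π))
    (hπ01 : ∀ q t, π q t ∈ Icc (0:ℝ) 1)
    (Pb : ℝ → ℝ) (hPbmeas : Measurable Pb)
    (U : ℝ → ℝ) (hU : ∀ t, U t = ∫ q in qlo..qhi, π q t * (α q * t - Pb t) * g q)
    (Umis : ℝ → ℝ → ℝ)
    (hUmisDef : ∀ t' t, Umis t' t = ∫ q in qlo..qhi, π q t' * (α q * t - Pb t') * g q)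
    (hIR : ∀ t ∈ Icc tlo thi, 0 ≤ U t)
    (hIC : ∀ t ∈ Icc tlo thi, ∀ t' ∈ Icc tlo thi, Umis t' t ≤ U t)
    :
    (∫ q in qlo..qhi, ∫ t in tlo..thi, π q t * (Pb t - r) * f t * g q) ≤
      ∫ q in qlo..qhi, ∫ t in tlo..thi, max (η q t) 0 * g q * f t := by
  have ht : tlo ≤ thi := htT.le
  have hq : qlo ≤ qhi := hqQ.le
  set QI : Set ℝ := Ioc qlo qhi with hQIdef
  set TI : Set ℝ := Ioc tlo thi with hTIdef
  have hQsub : QI ⊆ Icc qlo qhi := Ioc_subset_Icc_self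
  have hTsub : TI ⊆ Icc tlo thi := Ioc_subset_Icc_self
  have hQmeas : MeasurableSet QI := measurableSet_Ioc
  have hTmeas : MeasurableSet TI := measurableSet_Ioc
  have hgI : IntegrableOn g QI := hgint.1
  have hfI : IntegrableOn f TI := hfint.1
  have hgaesm : AEStronglyMeasurable g (volume.restrict QI) := hgI.aestronglyMeasurable
  have hfaesm : AEStronglyMeasurable f (volume.restrict TI) := hfI.aestronglyMeasurable
  -- continuity and bounds
  have hαcont : ContinuousOn α (Icc qlo qhi) :=
    fun q hq' => ((hα q hq').continuousAt).continuousWithinAt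
  have hdcont : ContinuousOn d (Icc tlo thi) :=
    fun t' ht' => ((hdDeriv t' ht').continuousAt).continuousWithinAt
  have hFcont : ContinuousOn F (Icc tlo thi) :=
    fun t' ht' => ((hF t' ht').continuousAt).continuousWithinAt
  obtain ⟨Cα, hCα⟩ := isCompact_Icc.exists_bound_of_continuousOn hαcont
  obtain ⟨Cd, hCd⟩ := isCompact_Icc.exists_bound_of_continuousOn hdcont
  obtain ⟨CF, hCF⟩ := isCompact_Icc.exists_bound_of_continuousOn hFcont
  have hCα0 : 0 ≤ Cα := le_trans (norm_nonneg _) (hCα qlo (left_mem_Icc.2 hq))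
  have hCd0 : 0 ≤ Cd := le_trans (norm_nonneg _) (hCd tlo (left_mem_Icc.2 ht))
  have hαaesmQ : AEStronglyMeasurable α (volume.restrict QI) :=
    (hαcont.mono hQsub).aestronglyMeasurable hQmeas
  -- measurability of π slices
  have hπm : ∀ t, Measurable fun q => π q t :=
    fun t => hπmeas.comp (measurable_id.prodMk measurable_const)
  -- integrability of the q-integrands
  have hIπg : ∀ t, IntegrableOn (fun q => π q t * g q) QI := by
    intro t
    refine Integrable.mono' hgI (((hπm t).aestronglyMeasurable).mul hgaesm) ?_
    filter_upwards [ae_restrict_mem hQmeas] with q hq'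
    have h1 := hπ01 q t
    have h2 := (hgpos q (hQsub hq')).le
    rw [Real.norm_eq_abs, abs_mul, abs_of_nonneg h1.1, abs_of_nonneg h2]
    nlinarith [h1.2]
  have hIπαg : ∀ t, IntegrableOn (fun q => π q t * α q * g q) QI := by
    intro t
    refine Integrable.mono' (hgI.const_mul Cα)
      ((((hπm t).aestronglyMeasurable).mul hαaesmQ).mul hgaesm) ?_
    filter_upwards [ae_restrict_mem hQmeas] with q hq'
    have h1 := hπ01 q t
    have h2 := (hgpos q (hQsub hq')).le
    have h3 := hCα q (hQsub hq')
    rw [Real.norm_eq_abs, abs_mul, abs_mul, abs_of_nonneg h1.1, abs_of_nonneg h2]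
    rw [Real.norm_eq_abs] at h3
    have h4 : π q t * |α q| ≤ Cα := by nlinarith [abs_nonneg (α q), h1.2, h1.1]
    nlinarith [h4, h2]
  set S : ℝ → ℝ := fun t => ∫ q in QI, π q t * g q with hSdef
  set X : ℝ → ℝ := fun t => ∫ q in QI, π q t * α q * g q with hXdef
  -- linearity
  have lin : ∀ t' c, (∫ q in QI, π q t' * (α q * c - Pb t') * g q)
      = c * X t' - Pb t' * S t' := by
    intro t' c
    have hpt : ∀ q, π q t' * (α q * c - Pb t') * g q
        = c * (π q t' * α q * g q) - Pb t' * (π q t' * g q) := fun q => by ring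
    simp only [hpt]
    rw [integral_sub ((hIπαg t').const_mul c) ((hIπg t').const_mul (Pb t')),
      integral_const_mul, integral_const_mul]
  have hUeq : ∀ t, U t = t * X t - Pb t * S t := by
    intro t
    rw [hU t, intervalIntegral.integral_of_le hq]
    exact lin t t
  have hUmiseq : ∀ t' t, Umis t' t = t * X t' - Pb t' * S t' := by
    intro t' t
    rw [hUmisDef t' t, intervalIntegral.integral_of_le hq]
    exact lin t' t
  -- the key IC inequality
  have star : ∀ t ∈ Icc tlo thi, ∀ t' ∈ Icc tlo thi, U t' + X t' * (t - t') ≤ U t := by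
    intro t htm t' htm'
    have h := hIC t htm t' htm'
    have e : Umis t' t = U t' + X t' * (t - t') := by
      rw [hUmiseq t' t, hUeq t']; ring
    linarith [e ▸ h]
  have Xnonneg : ∀ t, 0 ≤ X t := by
    intro t
    refine setIntegral_nonneg hQmeas fun q hq' => ?_
    have h1 := hπ01 q t
    have h2 := (hgpos q (hQsub hq')).le
    have h3 := (hαpos q (hQsub hq')).le
    exact mul_nonneg (mul_nonneg h1.1 h3) h2
  have Snonneg : ∀ t, 0 ≤ S t := by
    intro t
    refine setIntegral_nonneg hQmeas fun q hq' => ?_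
    have h1 := hπ01 q t
    have h2 := (hgpos q (hQsub hq')).le
    exact mul_nonneg h1.1 h2
  set IG : ℝ := ∫ q in QI, g q with hIGdef
  have SleIG : ∀ t, S t ≤ IG := by
    intro t
    refine setIntegral_mono_on (hIπg t) hgI hQmeas fun q hq' => ?_
    have h1 := hπ01 q t
    have h2 := (hgpos q (hQsub hq')).le
    nlinarith [h1.2]
  have hIG0 : 0 ≤ IG := le_trans (Snonneg tlo) (SleIG tlo)
  have XmonoOn : MonotoneOn X (Icc tlo thi) := by
    intro a ha b hb hab
    rcases eq_or_lt_of_le hab with rfl | hlt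
    · exact le_refl _
    · have h1 := star b hb a ha
      have h2 := star a ha b hb
      nlinarith
  have XleT : ∀ t ∈ Icc tlo thi, X t ≤ X thi :=
    fun t htm => XmonoOn htm (right_mem_Icc.2 ht) htm.2
  have hXT0 : 0 ≤ X thi := Xnonneg thi
  have UleT : ∀ t ∈ Icc tlo thi, U t ≤ U thi := by
    intro t htm
    have h := star thi (right_mem_Icc.2 ht) t htm
    nlinarith [Xnonneg t, htm.2]
  have hUT0 : 0 ≤ U thi := hIR thi (right_mem_Icc.2 ht)
  set Cp : ℝ := (|tlo| + |thi|) * X thi + U thi with hCpdef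
  have habst : ∀ t ∈ Icc tlo thi, |t| ≤ |tlo| + |thi| := by
    intro t htm
    rw [abs_le]
    constructor
    · nlinarith [neg_abs_le tlo, abs_nonneg thi, htm.1]
    · nlinarith [le_abs_self thi, abs_nonneg tlo, htm.2]
  have pbound : ∀ t ∈ Icc tlo thi, |Pb t * S t| ≤ Cp := by
    intro t htm
    have hx0 := Xnonneg t
    have hxT := XleT t htm
    have hu0 := hIR t htm
    have huT := UleT t htm
    have hta := habst t htm
    have he : Pb t * S t = t * X t - U t := by linarith [hUeq t]
    rw [he, abs_le]
    constructor
    · nlinarith [neg_abs_le t, abs_nonneg t]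
    · nlinarith [le_abs_self t, abs_nonneg t]
  -- ===== product integrability for the LHS =====
  have hπprodm : Measurable fun z : ℝ × ℝ => π z.1 z.2 := hπmeas
  have hPbm2 : Measurable fun z : ℝ × ℝ => Pb z.2 - r :=
    (hPbmeas.comp measurable_snd).sub measurable_const
  have hfsnd : AEStronglyMeasurable (fun z : ℝ × ℝ => f z.2)
      ((volume.restrict QI).prod (volume.restrict TI)) := hfaesm.comp_snd
  have hgfst : AEStronglyMeasurable (fun z : ℝ × ℝ => g z.1)
      ((volume.restrict QI).prod (volume.restrict TI)) := hgaesm.comp_fst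
  have hΦaesm : AEStronglyMeasurable
      (fun z : ℝ × ℝ => π z.1 z.2 * (Pb z.2 - r) * f z.2 * g z.1)
      ((volume.restrict QI).prod (volume.restrict TI)) :=
    ((hπprodm.aestronglyMeasurable.mul hPbm2.aestronglyMeasurable).mul hfsnd).mul hgfst
  have IntΦ : Integrable (fun z : ℝ × ℝ => π z.1 z.2 * (Pb z.2 - r) * f z.2 * g z.1)
      ((volume.restrict QI).prod (volume.restrict TI)) := by
    rw [integrable_prod_iff' hΦaesm]
    constructor
    · refine ae_of_all _ fun t => ?_
      have h0 : Integrable (fun q => (π q t * g q) * ((Pb t - r) * f t))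
          (volume.restrict QI) := (hIπg t).mul_const _
      exact h0.congr (ae_of_all _ fun q => by ring)
    · refine Integrable.mono' (hfI.const_mul (Cp + r * IG))
        (hΦaesm.norm.prod_swap.integral_prod_right') ?_
      filter_upwards [ae_restrict_mem hTmeas] with t htm
      have htIcc := hTsub htm
      have key : (∫ q in QI, ‖π q t * (Pb t - r) * f t * g q‖)
          = S t * |(Pb t - r) * f t| := by
        have hcong : ∀ᵐ q ∂(volume.restrict QI),
            ‖π q t * (Pb t - r) * f t * g q‖ = (π q t * g q) * |(Pb t - r) * f t| := by
          filter_upwards [ae_restrict_mem hQmeas] with q hq'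
          have h1 := hπ01 q t
          have h2 := (hgpos q (hQsub hq')).le
          rw [Real.norm_eq_abs,
            show π q t * (Pb t - r) * f t * g q = (π q t * g q) * ((Pb t - r) * f t) from by
              ring, abs_mul, abs_of_nonneg (mul_nonneg h1.1 h2)]
        rw [integral_congr_ae hcong, integral_mul_const]
      rw [key, Real.norm_eq_abs]
      have hfp := hfpos t htIcc
      have hS0 := Snonneg t
      have hSI := SleIG t
      have hp := pbound t htIcc
      rw [abs_of_nonneg (mul_nonneg hS0 (abs_nonneg _)), abs_mul, abs_of_pos hfp]
      have h1 : |Pb t - r| ≤ |Pb t| + r := by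
        calc |Pb t - r| ≤ |Pb t| + |r| := abs_sub (Pb t) r
        _ = |Pb t| + r := by rw [abs_of_pos hr]
      have h2 : S t * |Pb t| ≤ Cp := by
        calc S t * |Pb t| = |Pb t * S t| := by rw [abs_mul, abs_of_nonneg hS0]; ring
        _ ≤ Cp := hp
      have h3 : S t * |Pb t - r| ≤ Cp + r * IG := by nlinarith
      nlinarith
  -- ===== rewrite the LHS via Fubini =====
  have hinner : ∀ t, (∫ q in QI, π q t * (Pb t - r) * f t * g q) = S t * ((Pb t - r) * f t) := by
    intro t
    rw [show (fun q => π q t * (Pb t - r) * f t * g q)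
        = fun q => (π q t * g q) * ((Pb t - r) * f t) from funext fun q => by ring,
      integral_mul_const]
  have LHSeq : (∫ q in qlo..qhi, ∫ t in tlo..thi, π q t * (Pb t - r) * f t * g q)
      = ∫ t in TI, S t * ((Pb t - r) * f t) := by
    rw [intervalIntegral.integral_of_le hq]
    simp only [intervalIntegral.integral_of_le ht]
    rw [MeasureTheory.integral_integral_swap
      (f := fun q t => π q t * (Pb t - r) * f t * g q) IntΦ]
    exact integral_congr_ae (ae_of_all _ fun t => hinner t)
  -- ===== a.e. strong measurability of S, X, U on TI =====
  have hswapm : Measurable fun z : ℝ × ℝ => π z.2 z.1 := hπmeas.comp measurable_swap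
  have hαsnd : AEStronglyMeasurable (fun z : ℝ × ℝ => α z.2)
      ((volume.restrict TI).prod (volume.restrict QI)) := hαaesmQ.comp_snd
  have hgsnd : AEStronglyMeasurable (fun z : ℝ × ℝ => g z.2)
      ((volume.restrict TI).prod (volume.restrict QI)) := hgaesm.comp_snd
  have hXaesm : AEStronglyMeasurable X (volume.restrict TI) := by
    have h : AEStronglyMeasurable (fun z : ℝ × ℝ => π z.2 z.1 * α z.2 * g z.2)
        ((volume.restrict TI).prod (volume.restrict QI)) :=
      (hswapm.aestronglyMeasurable.mul hαsnd).mul hgsnd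
    exact h.integral_prod_right'
  have hSaesm : AEStronglyMeasurable S (volume.restrict TI) := by
    have h : AEStronglyMeasurable (fun z : ℝ × ℝ => π z.2 z.1 * g z.2)
        ((volume.restrict TI).prod (volume.restrict QI)) :=
      hswapm.aestronglyMeasurable.mul hgsnd
    exact h.integral_prod_right'
  have hUaesm : AEStronglyMeasurable U (volume.restrict TI) := by
    rw [show U = fun t => t * X t - Pb t * S t from funext hUeq]
    exact (measurable_id.aestronglyMeasurable.mul hXaesm).sub
      (hPbmeas.aestronglyMeasurable.mul hSaesm)
  -- helper: bounded (on TI) a.e.-measurable functions times f are integrable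
  have hbd_int : ∀ (φ : ℝ → ℝ) (C : ℝ), AEStronglyMeasurable φ (volume.restrict TI) →
      (∀ t ∈ TI, |φ t| ≤ C) → Integrable (fun t => φ t * f t) (volume.restrict TI) := by
    intro φ C hm hb
    refine Integrable.mono' (hfI.const_mul C) (hm.mul hfaesm) ?_
    filter_upwards [ae_restrict_mem hTmeas] with t htm
    have hfp := (hfpos t (hTsub htm)).le
    rw [Real.norm_eq_abs, abs_mul, abs_of_nonneg hfp]
    exact mul_le_mul_of_nonneg_right (hb t htm) hfp
  -- ===== Lemma A : envelope-style bound via Riemann sums =====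
  have hXuIcc : ∀ a b, a ∈ Icc tlo thi → b ∈ Icc tlo thi → IntervalIntegrable X volume a b := by
    intro a b ha hb
    exact (XmonoOn.mono (uIcc_subset_Icc ha hb)).intervalIntegrable
  have lemA : ∀ s ∈ Icc tlo thi, (∫ t in tlo..s, X t) ≤ U s - U tlo := by
    intro s hs
    have hts : tlo ≤ s := hs.1
    have hltlo : tlo ∈ Icc tlo thi := left_mem_Icc.2 ht
    have hC0 : 0 ≤ X s - X tlo := sub_nonneg.2 (XmonoOn hltlo hs hts)
    have key : ∀ n : ℕ, 0 < n →
        (∫ t in tlo..s, X t) ≤ U s - U tlo + (X s - X tlo) * ((s - tlo) / n) := by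
      intro n hn
      have hn' : (0:ℝ) < n := Nat.cast_pos.2 hn
      set δ : ℝ := (s - tlo) / n with hδdef
      have hδ0 : 0 ≤ δ := div_nonneg (sub_nonneg.2 hts) hn'.le
      set a : ℕ → ℝ := fun i => tlo + i * δ with hadef
      have hnδ : (n:ℝ) * δ = s - tlo := by rw [hδdef]; field_simp
      have hmem : ∀ i ≤ n, a i ∈ Icc tlo s := by
        intro i hi
        have h1 : (0:ℝ) ≤ (i:ℝ) := Nat.cast_nonneg i
        have h2 : (i:ℝ) ≤ n := Nat.cast_le.2 hi
        constructor
        · simp only [hadef]; nlinarith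
        · simp only [hadef]
          have : (i:ℝ) * δ ≤ n * δ := mul_le_mul_of_nonneg_right h2 hδ0
          linarith
      have hmem' : ∀ i ≤ n, a i ∈ Icc tlo thi :=
        fun i hi => Icc_subset_Icc le_rfl hs.2 (hmem i hi)
      have han : a n = s := by
        simp only [hadef]; linarith [hnδ]
      have ha0 : a 0 = tlo := by simp [hadef]
      have hd : ∀ k : ℕ, a (k+1) - a k = δ := by
        intro k; simp only [hadef]; push_cast; ring
      have hint : ∀ k, k < n → IntervalIntegrable X volume (a k) (a (k+1)) :=
        fun k hk => hXuIcc _ _ (hmem' k hk.le) (hmem' (k+1) hk)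
      have hsum := intervalIntegral.sum_integral_adjacent_intervals hint
      have hstep : ∀ k, k < n → (∫ t in a k..a (k+1), X t) ≤ X (a (k+1)) * δ := by
        intro k hk
        have hle : a k ≤ a (k+1) := by have := hd k; linarith [hδ0]
        have hmono : ∀ x ∈ Icc (a k) (a (k+1)), X x ≤ X (a (k+1)) := by
          intro x hx
          have hxm : x ∈ Icc tlo thi :=
            ⟨le_trans (hmem' k hk.le).1 hx.1, le_trans hx.2 (hmem' (k+1) hk).2⟩
          exact XmonoOn hxm (hmem' (k+1) hk) hx.2
        have h := intervalIntegral.integral_mono_on hle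
          (hXuIcc _ _ (hmem' k hk.le) (hmem' (k+1) hk))
          (intervalIntegrable_const (c := X (a (k+1)))) hmono
        rw [intervalIntegral.integral_const, hd k, smul_eq_mul] at h
        linarith
      have hstep2 : ∀ k, k < n → X (a k) * δ ≤ U (a (k+1)) - U (a k) := by
        intro k hk
        have h := star (a (k+1)) (hmem' (k+1) hk) (a k) (hmem' k hk.le)
        rw [hd k] at h
        linarith
      calc (∫ t in tlo..s, X t) = ∑ k ∈ Finset.range n, ∫ t in a k..a (k+1), X t := by
            rw [hsum, ha0, han]
      _ ≤ ∑ k ∈ Finset.range n, X (a (k+1)) * δ :=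
            Finset.sum_le_sum fun k hk => hstep k (Finset.mem_range.1 hk)
      _ = ∑ k ∈ Finset.range n, X (a k) * δ + (X s - X tlo) * δ := by
            have h1 : ∑ k ∈ Finset.range n, (X (a (k+1)) * δ - X (a k) * δ)
                = X (a n) * δ - X (a 0) * δ := Finset.sum_range_sub (fun k => X (a k) * δ) n
            rw [Finset.sum_sub_distrib] at h1
            rw [han, ha0] at h1
            linarith
      _ ≤ ∑ k ∈ Finset.range n, (U (a (k+1)) - U (a k)) + (X s - X tlo) * δ := by
            have := Finset.sum_le_sum fun k hk => hstep2 k (Finset.mem_range.1 hk)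
            linarith
      _ = U s - U tlo + (X s - X tlo) * δ := by
            rw [Finset.sum_range_sub (fun k => U (a k)) n, ha0, han]
    refine le_of_forall_pos_le_add fun ε hε => ?_
    obtain ⟨n, hn⟩ := exists_nat_gt ((X s - X tlo) * (s - tlo) / ε)
    have hge : 0 ≤ (X s - X tlo) * (s - tlo) / ε :=
      div_nonneg (mul_nonneg hC0 (sub_nonneg.2 hts)) hε.le
    have hn0 : 0 < n := by
      rcases Nat.eq_zero_or_pos n with h0 | h; · rw [h0] at hn; norm_num at hn; linarith
      · exact h
    have hn' : (0:ℝ) < n := Nat.cast_pos.2 hn0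
    have hkey := key n hn0
    have hlast : (X s - X tlo) * ((s - tlo) / n) ≤ ε := by
      rw [div_lt_iff₀ hε] at hn
      rw [mul_div_assoc'] at *
      rw [div_le_iff₀ hn']
      nlinarith
    linarith
  -- ===== V, the primitive of X =====
  haveI hfinT : IsFiniteMeasure (volume.restrict TI) :=
    ⟨by rw [Measure.restrict_apply_univ]; exact measure_Ioc_lt_top⟩
  set V : ℝ → ℝ := fun s => ∫ t in tlo..s, X t with hVdef
  have hVle : ∀ s ∈ Icc tlo thi, V s ≤ U s := by
    intro s hsm
    have h1 := lemA s hsm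
    have h0 := hIR tlo (left_mem_Icc.2 ht)
    simp only [hVdef]; linarith
  have hIXIcc : IntegrableOn X (Icc tlo thi) := by
    rw [integrableOn_Icc_iff_integrableOn_Ioc]
    exact (hXuIcc tlo thi (left_mem_Icc.2 ht) (right_mem_Icc.2 ht)).1
  have hVcont : ContinuousOn V (Icc tlo thi) := by
    have h := intervalIntegral.continuousOn_primitive (μ := volume) (f := X)
      (a := tlo) (b := thi) hIXIcc
    refine h.congr fun x hx => ?_
    simp only [hVdef]; rw [intervalIntegral.integral_of_le hx.1]
  have hVaesm : AEStronglyMeasurable V (volume.restrict TI) :=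
    (hVcont.mono hTsub).aestronglyMeasurable hTmeas
  have hVbound : ∀ s ∈ Icc tlo thi, |V s| ≤ X thi * (thi - tlo) := by
    intro s hsm
    have hb : ∀ x ∈ uIoc tlo s, ‖X x‖ ≤ X thi := by
      intro x hx
      rw [uIoc_of_le hsm.1] at hx
      have hxm : x ∈ Icc tlo thi := ⟨hx.1.le, le_trans hx.2 hsm.2⟩
      rw [Real.norm_eq_abs, abs_of_nonneg (Xnonneg x)]
      exact XleT x hxm
    have h := intervalIntegral.norm_integral_le_of_norm_le_const hb
    rw [Real.norm_eq_abs] at h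
    simp only [hVdef]
    refine h.trans ?_
    rw [abs_of_nonneg (sub_nonneg.2 hsm.1)]
    exact mul_le_mul_of_nonneg_left (by linarith [hsm.2]) hXT0
  -- ===== Lemma B =====
  have hUfint : Integrable (fun t => U t * f t) (volume.restrict TI) :=
    hbd_int U (U thi) hUaesm (fun t htm => by
      rw [abs_of_nonneg (hIR t (hTsub htm))]; exact UleT t (hTsub htm))
  have hVfint : Integrable (fun t => V t * f t) (volume.restrict TI) :=
    hbd_int V (X thi * (thi - tlo)) hVaesm (fun t htm => hVbound t (hTsub htm))
  have lemB : (∫ t in TI, X t * (1 - F t)) ≤ ∫ t in TI, U t * f t := by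
    have hF' : ∀ t ∈ TI, 1 - F t = ∫ s in TI, (Ioi t).indicator f s := by
      intro t htm
      have htIcc := hTsub htm
      have hsub : uIcc t thi ⊆ uIcc tlo thi := by
        rw [uIcc_of_le htIcc.2, uIcc_of_le ht]
        exact Icc_subset_Icc htIcc.1 le_rfl
      have h1 : (∫ s in t..thi, f s) = F thi - F t := by
        refine intervalIntegral.integral_eq_sub_of_hasDerivAt (fun x hx => hF x ?_)
          (hfint.mono_set hsub)
        rw [uIcc_of_le htIcc.2] at hx
        exact ⟨le_trans htIcc.1 hx.1, hx.2⟩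
      rw [setIntegral_indicator measurableSet_Ioi]
      have hseteq : TI ∩ Ioi t = Ioc t thi := by
        ext x
        simp only [hTIdef, mem_inter_iff, mem_Ioi, mem_Ioc]
        constructor
        · rintro ⟨⟨_, h3⟩, h1⟩; exact ⟨h1, h3⟩
        · rintro ⟨h1, h2⟩; exact ⟨⟨lt_trans htm.1 h1, h2⟩, h1⟩
      rw [hseteq, ← intervalIntegral.integral_of_le htIcc.2, h1, hF1]
    set K : ℝ × ℝ → ℝ :=
      fun z => ({p : ℝ × ℝ | p.1 < p.2}.indicator (fun p => X p.1 * f p.2)) z with hKdef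
    have hKaesm : AEStronglyMeasurable K ((volume.restrict TI).prod (volume.restrict TI)) :=
      AEStronglyMeasurable.indicator (hXaesm.comp_fst.mul hfaesm.comp_snd)
        (measurableSet_lt measurable_fst measurable_snd)
    have haeTT : ∀ᵐ z ∂((volume.restrict TI).prod (volume.restrict TI)),
        z.1 ∈ TI ∧ z.2 ∈ TI := by
      rw [Measure.prod_restrict]
      filter_upwards [ae_restrict_mem (hTmeas.prod hTmeas)] with z hz
      exact ⟨hz.1, hz.2⟩
    have hKint : Integrable K ((volume.restrict TI).prod (volume.restrict TI)) := by
      refine Integrable.mono' ((integrable_const (X thi)).mul_prod hfI) hKaesm ?_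
      filter_upwards [haeTT] with z hz
      have h2 := (hfpos z.2 (hTsub hz.2)).le
      have hx1 : 0 ≤ X z.1 := Xnonneg z.1
      have hx2 : X z.1 ≤ X thi := XleT z.1 (hTsub hz.1)
      by_cases hlt : z.1 < z.2
      · rw [hKdef]
        simp only [indicator_of_mem (show z ∈ {p : ℝ × ℝ | p.1 < p.2} from hlt)]
        rw [Real.norm_eq_abs, abs_mul, abs_of_nonneg hx1, abs_of_nonneg h2]
        exact mul_le_mul_of_nonneg_right hx2 h2
      · rw [hKdef]
        simp only [indicator_of_notMem (show z ∉ {p : ℝ × ℝ | p.1 < p.2} from hlt)]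
        rw [norm_zero]
        exact mul_nonneg hXT0 h2
    have e1 : (∫ t in TI, X t * (1 - F t)) = ∫ t in TI, ∫ s in TI, K (t, s) := by
      refine setIntegral_congr_fun hTmeas fun t htm => ?_
      rw [hF' t htm, ← integral_const_mul]
      refine integral_congr_ae (ae_of_all _ fun s => ?_)
      by_cases hlt : t < s
      · rw [hKdef]
        simp only [indicator_of_mem (show ((t, s) : ℝ × ℝ) ∈ {p : ℝ × ℝ | p.1 < p.2} from hlt),
          indicator_of_mem (mem_Ioi.2 hlt)]
      · rw [hKdef]
        simp only [indicator_of_notMem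
            (show ((t, s) : ℝ × ℝ) ∉ {p : ℝ × ℝ | p.1 < p.2} from hlt),
          indicator_of_notMem (fun h => hlt (mem_Ioi.1 h)), mul_zero]
    have e2 : ∀ s ∈ TI, (∫ t in TI, K (t, s)) = V s * f s := by
      intro s hsm
      have hps : ∀ t : ℝ, K (t, s) = (Iio s).indicator (fun t => X t * f s) t := by
        intro t
        by_cases hlt : t < s
        · rw [hKdef]
          simp only [indicator_of_mem
              (show ((t, s) : ℝ × ℝ) ∈ {p : ℝ × ℝ | p.1 < p.2} from hlt),
            indicator_of_mem (mem_Iio.2 hlt)]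
        · rw [hKdef]
          simp only [indicator_of_notMem
              (show ((t, s) : ℝ × ℝ) ∉ {p : ℝ × ℝ | p.1 < p.2} from hlt),
            indicator_of_notMem (fun h => hlt (mem_Iio.1 h))]
      simp only [hps]
      rw [setIntegral_indicator measurableSet_Iio]
      have hseteq : TI ∩ Iio s = Ioo tlo s := by
        ext x
        simp only [hTIdef, mem_inter_iff, mem_Iio, mem_Ioc, mem_Ioo]
        constructor
        · rintro ⟨⟨h2, _⟩, h1⟩; exact ⟨h2, h1⟩
        · rintro ⟨h1, h2⟩; exact ⟨⟨h1, le_trans h2.le hsm.2⟩, h2⟩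
      rw [hseteq, ← integral_Ioc_eq_integral_Ioo, integral_mul_const]
      simp only [hVdef]
      rw [intervalIntegral.integral_of_le hsm.1.le]
    calc (∫ t in TI, X t * (1 - F t)) = ∫ t in TI, ∫ s in TI, K (t, s) := e1
    _ = ∫ s in TI, ∫ t in TI, K (t, s) :=
        MeasureTheory.integral_integral_swap (f := fun t s => K (t, s)) hKint
    _ = ∫ s in TI, V s * f s := setIntegral_congr_fun hTmeas e2
    _ ≤ ∫ s in TI, U s * f s := by
        refine integral_mono_ae hVfint hUfint ?_
        filter_upwards [ae_restrict_mem hTmeas] with s hsm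
        exact mul_le_mul_of_nonneg_right (hVle s (hTsub hsm)) (hfpos s (hTsub hsm)).le
  -- ===== the M function and pointwise bound =====
  have hCF0 : 0 ≤ CF := le_trans (norm_nonneg _) (hCF tlo (left_mem_Icc.2 ht))
  have hdaesmT : AEStronglyMeasurable d (volume.restrict TI) :=
    (hdcont.mono hTsub).aestronglyMeasurable hTmeas
  have hFaesmT : AEStronglyMeasurable F (volume.restrict TI) :=
    (hFcont.mono hTsub).aestronglyMeasurable hTmeas
  set Cη : ℝ := Cα * ((|tlo| + |thi|) + Cd) + r with hCηdef
  have hηbound : ∀ q ∈ Icc qlo qhi, ∀ t ∈ Icc tlo thi, |η q t| ≤ Cη := by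
    intro q hq' t htm
    rw [hη]
    have h1 := hCα q hq'; rw [Real.norm_eq_abs] at h1
    have h2 := hCd t htm; rw [Real.norm_eq_abs] at h2
    have h3 := habst t htm
    calc |α q * (t - d t) - r| ≤ |α q * (t - d t)| + |r| := abs_sub _ _
    _ = |α q| * |t - d t| + r := by rw [abs_mul, abs_of_pos hr]
    _ ≤ Cα * ((|tlo| + |thi|) + Cd) + r := by
        have h4 : |t - d t| ≤ (|tlo| + |thi|) + Cd := (abs_sub t (d t)).trans (by linarith)
        nlinarith [abs_nonneg (α q), abs_nonneg (t - d t)]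
  have hCη0 : 0 ≤ Cη := le_trans (abs_nonneg _)
    (hηbound qlo (left_mem_Icc.2 hq) tlo (left_mem_Icc.2 ht))
  have hηq_aesm : ∀ t, AEStronglyMeasurable (fun q => max (η q t) 0) (volume.restrict QI) := by
    intro t
    have he : (fun q => max (η q t) 0) = fun q => max (α q * (t - d t) - r) 0 :=
      funext fun q => by rw [hη]
    rw [he]
    exact (((hαaesmQ.mul_const _).sub aestronglyMeasurable_const).aemeasurable.max
      aemeasurable_const).aestronglyMeasurable
  have hmaxabs : ∀ q t, |max (η q t) 0| ≤ |η q t| := by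
    intro q t
    rw [abs_of_nonneg (le_max_right _ _)]
    exact max_le (le_abs_self _) (abs_nonneg _)
  have hImaxg : ∀ t ∈ Icc tlo thi, IntegrableOn (fun q => max (η q t) 0 * g q) QI := by
    intro t htm
    refine Integrable.mono' (hgI.const_mul Cη) ((hηq_aesm t).mul hgaesm) ?_
    filter_upwards [ae_restrict_mem hQmeas] with q hq'
    have h2 := (hgpos q (hQsub hq')).le
    rw [Real.norm_eq_abs, abs_mul, abs_of_nonneg h2]
    have h3 : |max (η q t) 0| ≤ Cη := (hmaxabs q t).trans (hηbound q (hQsub hq') t htm)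
    nlinarith [abs_nonneg (max (η q t) 0)]
  have hηqm_aesm : ∀ t, AEStronglyMeasurable (fun q => η q t) (volume.restrict QI) := by
    intro t
    have he : (fun q => η q t) = fun q => α q * (t - d t) - r := funext fun q => by rw [hη]
    rw [he]
    exact (hαaesmQ.mul_const _).sub aestronglyMeasurable_const
  have hIπηg : ∀ t ∈ Icc tlo thi, IntegrableOn (fun q => π q t * η q t * g q) QI := by
    intro t htm
    refine Integrable.mono' (hgI.const_mul Cη)
      (((hπm t).aestronglyMeasurable.mul (hηqm_aesm t)).mul hgaesm) ?_
    filter_upwards [ae_restrict_mem hQmeas] with q hq'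
    have h1 := hπ01 q t
    have h2 := (hgpos q (hQsub hq')).le
    have h3 := hηbound q (hQsub hq') t htm
    rw [Real.norm_eq_abs, abs_mul, abs_mul, abs_of_nonneg h1.1, abs_of_nonneg h2]
    have h4 : π q t * |η q t| ≤ Cη := by nlinarith [abs_nonneg (η q t), h1.1, h1.2]
    nlinarith [h2]
  set M : ℝ → ℝ := fun t => ∫ q in QI, max (η q t) 0 * g q with hMdef
  have hMeqlin : ∀ t, X t * (t - d t) - r * S t = ∫ q in QI, π q t * η q t * g q := by
    intro t
    have hpt : ∀ q, π q t * η q t * g q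
        = (t - d t) * (π q t * α q * g q) - r * (π q t * g q) := fun q => by rw [hη]; ring
    calc X t * (t - d t) - r * S t = (t - d t) * X t - r * S t := by ring
    _ = ∫ q in QI, ((t - d t) * (π q t * α q * g q) - r * (π q t * g q)) := by
        rw [integral_sub ((hIπαg t).const_mul _) ((hIπg t).const_mul r),
          integral_const_mul, integral_const_mul]
    _ = ∫ q in QI, π q t * η q t * g q :=
        setIntegral_congr_fun hQmeas fun q _ => (hpt q).symm
  have hstepc : ∀ t ∈ TI, X t * (t - d t) - r * S t ≤ M t := by
    intro t htm
    rw [hMeqlin t]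
    refine setIntegral_mono_on (hIπηg t (hTsub htm)) (hImaxg t (hTsub htm)) hQmeas
      fun q hq' => ?_
    have h1 := hπ01 q t
    have h2 := (hgpos q (hQsub hq')).le
    rcases le_or_gt (η q t) 0 with h | h
    · rw [max_eq_right h, zero_mul]
      exact mul_nonpos_of_nonpos_of_nonneg
        (mul_nonpos_of_nonneg_of_nonpos h1.1 h) h2
    · rw [max_eq_left h.le]
      refine mul_le_mul_of_nonneg_right ?_ h2
      nlinarith [h1.1, h1.2]
  have hMB : ∀ t ∈ Icc tlo thi, |M t| ≤ Cη * IG := by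
    intro t htm
    have hM0 : 0 ≤ M t := setIntegral_nonneg hQmeas fun q hq' =>
      mul_nonneg (le_max_right _ _) (hgpos q (hQsub hq')).le
    rw [abs_of_nonneg hM0]
    calc M t ≤ ∫ q in QI, Cη * g q := by
          refine setIntegral_mono_on (hImaxg t htm) (hgI.const_mul Cη) hQmeas fun q hq' => ?_
          have h2 := (hgpos q (hQsub hq')).le
          have h3 : |max (η q t) 0| ≤ Cη := (hmaxabs q t).trans (hηbound q (hQsub hq') t htm)
          exact mul_le_mul_of_nonneg_right ((le_abs_self _).trans h3) h2
    _ = Cη * IG := integral_const_mul Cη g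
  have hMaesm : AEStronglyMeasurable M (volume.restrict TI) := by
    have h1 : (fun z : ℝ × ℝ => max (η z.2 z.1) 0 * g z.2)
        = fun z : ℝ × ℝ => max (α z.2 * (z.1 - d z.1) - r) 0 * g z.2 :=
      funext fun z => by rw [hη]
    have h2 : AEStronglyMeasurable (fun z : ℝ × ℝ => max (η z.2 z.1) 0 * g z.2)
        ((volume.restrict TI).prod (volume.restrict QI)) := by
      rw [h1]
      exact (((hαsnd.mul ((measurable_fst.aestronglyMeasurable).sub hdaesmT.comp_fst)).sub
        aestronglyMeasurable_const).aemeasurable.max aemeasurable_const).aestronglyMeasurable.mul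
        hgsnd
    exact h2.integral_prod_right'
  -- ===== integrability of the t-integrands =====
  have htXB : ∀ t ∈ Icc tlo thi, |t * X t| ≤ (|tlo| + |thi|) * X thi := by
    intro t htm
    rw [abs_mul, abs_of_nonneg (Xnonneg t)]
    exact mul_le_mul (habst t htm) (XleT t htm) (Xnonneg t)
      (by positivity)
  have hI1int : Integrable (fun t => (t * X t - U t - r * S t) * f t) (volume.restrict TI) := by
    refine hbd_int _ ((|tlo| + |thi|) * X thi + U thi + r * IG)
      (((measurable_id.aestronglyMeasurable.mul hXaesm).sub hUaesm).sub (hSaesm.const_mul r)) ?_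
    intro t htm
    have htIcc := hTsub htm
    have h1 := htXB t htIcc
    have h2 : |U t| ≤ U thi := by
      rw [abs_of_nonneg (hIR t htIcc)]; exact UleT t htIcc
    have h3 : |r * S t| ≤ r * IG := by
      rw [abs_mul, abs_of_pos hr, abs_of_nonneg (Snonneg t)]
      exact mul_le_mul_of_nonneg_left (SleIG t) hr.le
    calc |t * X t - U t - r * S t| ≤ |t * X t - U t| + |r * S t| := abs_sub _ _
    _ ≤ (|t * X t| + |U t|) + |r * S t| := by linarith [abs_sub (t * X t) (U t)]
    _ ≤ (|tlo| + |thi|) * X thi + U thi + r * IG := by linarith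
  have hI2int : Integrable (fun t => (X t * (t - d t) - r * S t) * f t) (volume.restrict TI) := by
    refine hbd_int _ (X thi * ((|tlo| + |thi|) + Cd) + r * IG)
      ((hXaesm.mul (measurable_id.aestronglyMeasurable.sub hdaesmT)).sub (hSaesm.const_mul r)) ?_
    intro t htm
    have htIcc := hTsub htm
    have h2 := hCd t htIcc; rw [Real.norm_eq_abs] at h2
    have h3 : |r * S t| ≤ r * IG := by
      rw [abs_mul, abs_of_pos hr, abs_of_nonneg (Snonneg t)]
      exact mul_le_mul_of_nonneg_left (SleIG t) hr.le
    have h1 : |X t * (t - d t)| ≤ X thi * ((|tlo| + |thi|) + Cd) := by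
      rw [abs_mul, abs_of_nonneg (Xnonneg t)]
      refine mul_le_mul (XleT t htIcc) ((abs_sub t (d t)).trans ?_) (abs_nonneg _) hXT0
      linarith [habst t htIcc]
    calc |X t * (t - d t) - r * S t| ≤ |X t * (t - d t)| + |r * S t| := abs_sub _ _
    _ ≤ X thi * ((|tlo| + |thi|) + Cd) + r * IG := by linarith
  have hMfint : Integrable (fun t => M t * f t) (volume.restrict TI) :=
    hbd_int M (Cη * IG) hMaesm (fun t htm => hMB t (hTsub htm))
  have hX1Fint : Integrable (fun t => X t * (1 - F t)) (volume.restrict TI) := by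
    refine Integrable.mono' (integrable_const (X thi * (1 + CF)))
      (hXaesm.mul (aestronglyMeasurable_const.sub hFaesmT)) ?_
    filter_upwards [ae_restrict_mem hTmeas] with t htm
    have htIcc := hTsub htm
    have h2 := hCF t htIcc; rw [Real.norm_eq_abs] at h2
    have h1 : |1 - F t| ≤ 1 + CF := (abs_sub 1 (F t)).trans (by rw [abs_one]; linarith)
    rw [Real.norm_eq_abs, abs_mul, abs_of_nonneg (Xnonneg t)]
    exact mul_le_mul (XleT t htIcc) h1 (abs_nonneg _) hXT0
  -- ===== the core inequality =====
  have core : (∫ t in TI, S t * ((Pb t - r) * f t)) ≤ ∫ t in TI, M t * f t := by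
    have ha : (∫ t in TI, S t * ((Pb t - r) * f t))
        = ∫ t in TI, (t * X t - U t - r * S t) * f t := by
      refine integral_congr_ae (ae_of_all _ fun t => ?_)
      have h := hUeq t
      linear_combination (f t) * h
    have hb : (∫ t in TI, (t * X t - U t - r * S t) * f t)
        ≤ ∫ t in TI, (X t * (t - d t) - r * S t) * f t := by
      have hdiff : (∫ t in TI, (X t * (t - d t) - r * S t) * f t)
          - (∫ t in TI, (t * X t - U t - r * S t) * f t)
          = (∫ t in TI, U t * f t) - (∫ t in TI, X t * (1 - F t)) := by
        rw [← integral_sub hI2int hI1int, ← integral_sub hUfint hX1Fint]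
        refine setIntegral_congr_fun hTmeas fun t htm => ?_
        have htIcc := hTsub htm
        have hdf : d t * f t = 1 - F t := by
          rw [hdDef t htIcc, div_mul_cancel₀ _ (hfpos t htIcc).ne']
        rw [← hdf]; ring
      linarith [lemB]
    have hc : (∫ t in TI, (X t * (t - d t) - r * S t) * f t) ≤ ∫ t in TI, M t * f t := by
      refine integral_mono_ae hI2int hMfint ?_
      filter_upwards [ae_restrict_mem hTmeas] with t htm
      exact mul_le_mul_of_nonneg_right (hstepc t htm) (hfpos t (hTsub htm)).le
    rw [ha]
    exact hb.trans hc
  -- ===== rewrite the RHS via Fubini =====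
  have haeQT : ∀ᵐ z ∂((volume.restrict QI).prod (volume.restrict TI)),
      z.1 ∈ QI ∧ z.2 ∈ TI := by
    rw [Measure.prod_restrict]
    filter_upwards [ae_restrict_mem (hQmeas.prod hTmeas)] with z hz
    exact ⟨hz.1, hz.2⟩
  have hΨaesm : AEStronglyMeasurable (fun z : ℝ × ℝ => max (η z.1 z.2) 0 * g z.1 * f z.2)
      ((volume.restrict QI).prod (volume.restrict TI)) := by
    have h1 : (fun z : ℝ × ℝ => max (η z.1 z.2) 0 * g z.1 * f z.2)
        = fun z : ℝ × ℝ => max (α z.1 * (z.2 - d z.2) - r) 0 * g z.1 * f z.2 :=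
      funext fun z => by rw [hη]
    rw [h1]
    exact ((((hαaesmQ.comp_fst.mul ((measurable_snd.aestronglyMeasurable).sub hdaesmT.comp_snd)).sub
      aestronglyMeasurable_const).aemeasurable.max
      aemeasurable_const).aestronglyMeasurable.mul hgaesm.comp_fst).mul hfaesm.comp_snd
  have hΨint : Integrable (fun z : ℝ × ℝ => max (η z.1 z.2) 0 * g z.1 * f z.2)
      ((volume.restrict QI).prod (volume.restrict TI)) := by
    refine Integrable.mono' ((hgI.mul_prod hfI).const_mul Cη) hΨaesm ?_
    filter_upwards [haeQT] with z hz
    have hg0 := (hgpos z.1 (hQsub hz.1)).le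
    have hf0 := (hfpos z.2 (hTsub hz.2)).le
    have hm0 : 0 ≤ max (η z.1 z.2) 0 := le_max_right _ _
    have hmC : max (η z.1 z.2) 0 ≤ Cη :=
      (le_abs_self _).trans ((hmaxabs z.1 z.2).trans
        (hηbound z.1 (hQsub hz.1) z.2 (hTsub hz.2)))
    rw [Real.norm_eq_abs, abs_mul, abs_mul, abs_of_nonneg hm0, abs_of_nonneg hg0,
      abs_of_nonneg hf0]
    nlinarith [mul_nonneg hg0 hf0]
  have RHSeq : (∫ q in qlo..qhi, ∫ t in tlo..thi, max (η q t) 0 * g q * f t)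
      = ∫ t in TI, M t * f t := by
    rw [intervalIntegral.integral_of_le hq]
    simp only [intervalIntegral.integral_of_le ht]
    rw [MeasureTheory.integral_integral_swap (f := fun q t => max (η q t) 0 * g q * f t) hΨint]
    refine integral_congr_ae (ae_of_all _ fun t => ?_)
    show (∫ q in QI, max (η q t) 0 * g q * f t) = M t * f t
    rw [integral_mul_const]
  rw [LHSeq, RHSeq]
  exact core
end

section
/- (Optimality for the relaxed problem.) Under the MHR assumption, the mechanism (π*, P_b*) is partially feasible — i.e., U*(t) ≥ 0 for all t ∈ T and U*(t) ≥ U*(t'; t) for all t, t' ∈ T, where U*, U*(·;·) are computed with π = π* and P_b = P_b* — it satisfies U*(t̲) = 0, and its revenue equals the upper bound: ∫_Q ∫_T π*(q,t)(P_b*(t) − r)f(t)g(q) dt dq = ∫_Q ∫_T max(η(q,t), 0)·g(q)f(t) dt dq. -/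
open MeasureTheory Set

private lemma ioi_inter_ioc {a b c : ℝ} (h1 : a ≤ c) :
    Set.Ioi c ∩ Set.Ioc a b = Set.Ioc c b := by
  ext x
  simp only [Set.mem_inter_iff, Set.mem_Ioi, Set.mem_Ioc]
  constructor
  · rintro ⟨h, _, h3⟩; exact ⟨h, h3⟩
  · rintro ⟨h, h3⟩; exact ⟨h, lt_of_le_of_lt h1 h, h3⟩

private lemma ind_int {a b c : ℝ} (φ : ℝ → ℝ) (h1 : a ≤ c) (h2 : c ≤ b) :
    ∫ q in a..b, (Set.Ioi c).indicator φ q = ∫ q in c..b, φ q := by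
  rw [intervalIntegral.integral_of_le (h1.trans h2), intervalIntegral.integral_of_le h2,
    MeasureTheory.integral_indicator measurableSet_Ioi,
    Measure.restrict_restrict measurableSet_Ioi, ioi_inter_ioc h1]

set_option maxHeartbeats 2000000 in
theorem stmt_13
    (tlo thi qlo qhi : ℝ) (htT : tlo < thi) (hqQ : qlo < qhi)
    (F f d : ℝ → ℝ)
    (hF : ∀ t ∈ Icc tlo thi, HasDerivAt F (f t) t)
    (hfpos : ∀ t ∈ Icc tlo thi, 0 < f t)
    (hF0 : F tlo = 0) (hF1 : F thi = 1)
    (hdDef : ∀ t ∈ Icc tlo thi, d t = (1 - F t) / f t)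
    (hfint : IntervalIntegrable f volume tlo thi)
    (d' : ℝ → ℝ)
    (hdDeriv : ∀ t ∈ Icc tlo thi, HasDerivAt d (d' t) t)
    (hMHR : ∀ t ∈ Icc tlo thi, d' t ≤ 0)
    (G g : ℝ → ℝ)
    (hG : ∀ q ∈ Icc qlo qhi, HasDerivAt G (g q) q)
    (hgpos : ∀ q ∈ Icc qlo qhi, 0 < g q)
    (hG0 : G qlo = 0) (hG1 : G qhi = 1)
    (hgint : IntervalIntegrable g volume qlo qhi)
    (α α' : ℝ → ℝ)
    (hα : ∀ q ∈ Icc qlo qhi, HasDerivAt α (α' q) q)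
    (hαpos : ∀ q ∈ Icc qlo qhi, 0 < α q)
    (hα'pos : ∀ q ∈ Icc qlo qhi, 0 < α' q)
    (r : ℝ) (hr : 0 < r)
    (hlow : α qlo * tlo < r) (hhigh : r < α qhi * thi)
    (η : ℝ → ℝ → ℝ)
    (hη : ∀ q t, η q t = α q * (t - d t) - r)
    (lam : ℝ → ℝ)
    (hlamQ : ∀ t ∈ Icc tlo thi, lam t ∈ Icc qlo qhi)
    (hlamLo : ∀ t ∈ Icc tlo thi, (∀ q ∈ Icc qlo qhi, 0 < η q t) → lam t = qlo)
    (hlamMid : ∀ t ∈ Icc tlo thi, ∀ q0 ∈ Icc qlo qhi, η q0 t = 0 → lam t = q0)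
    (hlamHi : ∀ t ∈ Icc tlo thi, (∀ q ∈ Icc qlo qhi, η q t < 0) → lam t = qhi)
    (t1 : ℝ) (ht1 : t1 = sInf {t ∈ Icc tlo thi | lam t < qhi})
    (Rstar : ℝ → ℝ) (hRstar : ∀ t, Rstar t = ∫ q in lam t..qhi, α q * g q)
    (Pbstar : ℝ → ℝ)
    (hPb1 : ∀ t, t1 ≤ t → t ≤ thi →
      Pbstar t = (t * (∫ q in lam t..qhi, α q * g q) - ∫ x in t1..t, Rstar x) / (1 - G (lam t)))
    (hPb2 : ∀ t, tlo ≤ t → t < t1 → Pbstar t = α qhi * t1)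
    (πs : ℝ → ℝ → ℝ) (hπs : ∀ q t, πs q t = if lam t < q then 1 else 0)
    (Us : ℝ → ℝ) (hUs : ∀ t, Us t = ∫ q in qlo..qhi, πs q t * (α q * t - Pbstar t) * g q)
    (UmisS : ℝ → ℝ → ℝ)
    (hUmisS : ∀ t' t, UmisS t' t = ∫ q in qlo..qhi, πs q t' * (α q * t - Pbstar t') * g q)
    :
    (∀ t ∈ Icc tlo thi, 0 ≤ Us t) ∧
      (∀ t ∈ Icc tlo thi, ∀ t' ∈ Icc tlo thi, UmisS t' t ≤ Us t) ∧
      Us tlo = 0 ∧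
      (∫ q in qlo..qhi, ∫ t in tlo..thi, πs q t * (Pbstar t - r) * f t * g q) =
        ∫ q in qlo..qhi, ∫ t in tlo..thi, max (η q t) 0 * g q * f t := by
  have htT' : tlo ≤ thi := htT.le
  have hqQ' : qlo ≤ qhi := hqQ.le
  have hIccQ : uIcc qlo qhi = Icc qlo qhi := uIcc_of_le hqQ'
  have hIccT : uIcc tlo thi = Icc tlo thi := uIcc_of_le htT'
  have hqhiMem : qhi ∈ Icc qlo qhi := right_mem_Icc.mpr hqQ'
  have hqloMem : qlo ∈ Icc qlo qhi := left_mem_Icc.mpr hqQ'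
  have hthiMem : thi ∈ Icc tlo thi := right_mem_Icc.mpr htT'
  have htloMem : tlo ∈ Icc tlo thi := left_mem_Icc.mpr htT'
  have contα : ContinuousOn α (Icc qlo qhi) :=
    fun q hq => ((hα q hq).continuousAt).continuousWithinAt
  have contd : ContinuousOn d (Icc tlo thi) :=
    fun t ht => ((hdDeriv t ht).continuousAt).continuousWithinAt
  have contG : ContinuousOn G (Icc qlo qhi) :=
    fun q hq => ((hG q hq).continuousAt).continuousWithinAt
  have contF : ContinuousOn F (Icc tlo thi) :=
    fun t ht => ((hF t ht).continuousAt).continuousWithinAt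
  -- strict monotonicity facts
  have hαmono : StrictMonoOn α (Icc qlo qhi) := by
    apply strictMonoOn_of_deriv_pos (convex_Icc _ _) contα
    intro x hx
    rw [interior_Icc] at hx
    rw [(hα x (Ioo_subset_Icc_self hx)).deriv]
    exact hα'pos x (Ioo_subset_Icc_self hx)
  have hGstrict : StrictMonoOn G (Icc qlo qhi) := by
    apply strictMonoOn_of_deriv_pos (convex_Icc _ _) contG
    intro x hx
    rw [interior_Icc] at hx
    rw [(hG x (Ioo_subset_Icc_self hx)).deriv]
    exact hgpos x (Ioo_subset_Icc_self hx)
  have hGmono : MonotoneOn G (Icc qlo qhi) := hGstrict.monotoneOn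
  have hFstrict : StrictMonoOn F (Icc tlo thi) := by
    apply strictMonoOn_of_deriv_pos (convex_Icc _ _) contF
    intro x hx
    rw [interior_Icc] at hx
    rw [(hF x (Ioo_subset_Icc_self hx)).deriv]
    exact hfpos x (Ioo_subset_Icc_self hx)
  have hFmono : MonotoneOn F (Icc tlo thi) := hFstrict.monotoneOn
  have hsmono : StrictMonoOn (fun t => t - d t) (Icc tlo thi) := by
    apply strictMonoOn_of_deriv_pos (convex_Icc _ _)
    · exact fun t ht => (((hasDerivAt_id t).sub (hdDeriv t ht)).continuousAt).continuousWithinAt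
    · intro x hx
      rw [interior_Icc] at hx
      have hx' := Ioo_subset_Icc_self hx
      have hD : HasDerivAt (fun t => t - d t) (1 - d' x) x :=
        (hasDerivAt_id x).sub (hdDeriv x hx')
      rw [hD.deriv]
      have := hMHR x hx'
      linarith
  have hGmem : ∀ q ∈ Icc qlo qhi, 0 ≤ G q ∧ G q ≤ 1 := by
    intro q hq
    constructor
    · rw [← hG0]; exact hGmono hqloMem hq hq.1
    · rw [← hG1]; exact hGmono hq hqhiMem hq.2
  have hFmem : ∀ t ∈ Icc tlo thi, 0 ≤ F t ∧ F t ≤ 1 := by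
    intro t ht
    constructor
    · rw [← hF0]; exact hFmono htloMem ht ht.1
    · rw [← hF1]; exact hFmono ht hthiMem ht.2
  -- eta facts
  have hηmono_t : ∀ q ∈ Icc qlo qhi, ∀ t ∈ Icc tlo thi, ∀ t' ∈ Icc tlo thi,
      t ≤ t' → η q t ≤ η q t' := by
    intro q hq t ht t' ht' h
    rw [hη, hη]
    have hs : t - d t ≤ t' - d t' := by
      rcases eq_or_lt_of_le h with h'|h'
      · rw [h']
      · exact (hsmono ht ht' h').le
    have := mul_le_mul_of_nonneg_left hs (hαpos q hq).le
    linarith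
  have hηneg : ∀ t ∈ Icc tlo thi, t - d t ≤ 0 → ∀ q ∈ Icc qlo qhi, η q t < 0 := by
    intro t _ hs q hq
    rw [hη]
    nlinarith [hαpos q hq]
  have hηq : ∀ t, 0 < t - d t → ∀ q ∈ Icc qlo qhi, ∀ q' ∈ Icc qlo qhi,
      q < q' → η q t < η q' t := by
    intro t hs q hq q' hq' h
    rw [hη, hη]
    have := hαmono hq hq' h
    nlinarith
  -- the key characterization
  have key1 : ∀ t ∈ Icc tlo thi, ∀ q ∈ Icc qlo qhi, qlo < q → (lam t < q ↔ 0 < η q t) := by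
    intro t ht q hq hqlo
    by_cases hs : t - d t ≤ 0
    · have hneg := hηneg t ht hs
      have hl := hlamHi t ht hneg
      constructor
      · intro h; rw [hl] at h; exact absurd h (not_lt.mpr hq.2)
      · intro h; exact absurd h (not_lt.mpr (hneg q hq).le)
    · push_neg at hs
      by_cases h1 : 0 < η qlo t
      · have hall : ∀ q' ∈ Icc qlo qhi, 0 < η q' t := by
          intro q' hq'
          rcases eq_or_lt_of_le hq'.1 with h|h
          · rwa [← h]
          · exact lt_trans h1 (hηq t hs qlo hqloMem q' hq' h)
        have hl := hlamLo t ht hall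
        rw [hl]
        exact ⟨fun _ => hall q hq, fun _ => hqlo⟩
      · by_cases h2 : η qhi t < 0
        · have hall : ∀ q' ∈ Icc qlo qhi, η q' t < 0 := by
            intro q' hq'
            rcases eq_or_lt_of_le hq'.2 with h|h
            · rwa [h]
            · exact lt_trans (hηq t hs q' hq' qhi hqhiMem h) h2
          have hl := hlamHi t ht hall
          constructor
          · intro h; rw [hl] at h; exact absurd h (not_lt.mpr hq.2)
          · intro h; exact absurd h (not_lt.mpr (hall q hq).le)
        · push_neg at h1 h2
          have hcont : ContinuousOn (fun q' => η q' t) (Icc qlo qhi) := by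
            have hc : ContinuousOn (fun q' => α q' * (t - d t) - r) (Icc qlo qhi) :=
              (contα.mul continuousOn_const).sub continuousOn_const
            exact hc.congr fun x _ => hη x t
          obtain ⟨q0, hq0mem, hq0⟩ := intermediate_value_Icc hqQ' hcont ⟨h1, h2⟩
          have hq0' : η q0 t = 0 := hq0
          have hl := hlamMid t ht q0 hq0mem hq0'
          rw [hl]
          constructor
          · intro h
            have := hηq t hs q0 hq0mem q hq h
            rw [hq0'] at this
            exact this
          · intro h
            by_contra hq0q
            push_neg at hq0q
            rcases eq_or_lt_of_le hq0q with h'|h'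
            · rw [h', hq0'] at h; exact lt_irrefl 0 h
            · have := hηq t hs q hq q0 hq0mem h'
              rw [hq0'] at this
              linarith
  -- lam is antitone
  have lamAnti : ∀ t ∈ Icc tlo thi, ∀ t' ∈ Icc tlo thi, t ≤ t' → lam t' ≤ lam t := by
    intro t ht t' ht' h
    by_contra hc
    push_neg at hc
    have hq : lam t' ∈ Icc qlo qhi := hlamQ t' ht'
    have hqlo : qlo < lam t' := lt_of_le_of_lt (hlamQ t ht).1 hc
    have h1 : 0 < η (lam t') t := (key1 t ht (lam t') hq hqlo).mp hc
    have h2 : η (lam t') t ≤ η (lam t') t' := hηmono_t _ hq t ht t' ht' h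
    exact lt_irrefl _ ((key1 t' ht' (lam t') hq hqlo).mpr (lt_of_lt_of_le h1 h2))
  -- t1 facts
  have hdthi : d thi = 0 := by rw [hdDef thi hthiMem, hF1]; simp
  have hlamthi : lam thi < qhi := by
    have h0 : 0 < η qhi thi := by rw [hη, hdthi]; nlinarith
    exact (key1 thi hthiMem qhi hqhiMem hqQ).mpr h0
  have hSne : {t ∈ Icc tlo thi | lam t < qhi}.Nonempty := ⟨thi, hthiMem, hlamthi⟩
  have hSbdd : BddBelow {t ∈ Icc tlo thi | lam t < qhi} := ⟨tlo, fun x hx => hx.1.1⟩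
  have ht1lo : tlo ≤ t1 := by rw [ht1]; exact le_csInf hSne fun x hx => hx.1.1
  have ht1hi : t1 ≤ thi := by rw [ht1]; exact csInf_le hSbdd ⟨hthiMem, hlamthi⟩
  have ht1mem : t1 ∈ Icc tlo thi := ⟨ht1lo, ht1hi⟩
  have hlam_below : ∀ t, tlo ≤ t → t < t1 → lam t = qhi := by
    intro t h0 h1
    by_contra hc
    have hmem : t ∈ Icc tlo thi := ⟨h0, h1.le.trans ht1hi⟩
    have hlt : lam t < qhi := lt_of_le_of_ne (hlamQ t hmem).2 hc
    have : t1 ≤ t := by rw [ht1]; exact csInf_le hSbdd ⟨hmem, hlt⟩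
    linarith
  have hlam_above : ∀ t, t1 < t → t ≤ thi → lam t < qhi := by
    intro t h0 h1
    have h0' : sInf {t ∈ Icc tlo thi | lam t < qhi} < t := ht1 ▸ h0
    obtain ⟨x, hx, hxt⟩ := exists_lt_of_csInf_lt hSne h0'
    exact lt_of_le_of_lt (lamAnti x hx.1 t ⟨hx.1.1.trans hxt.le, h1⟩ hxt.le) hx.2
  have hmemuQ : ∀ x ∈ Icc qlo qhi, x ∈ uIcc qlo qhi := by intro x hx; rwa [hIccQ]
  have hmemuT : ∀ x ∈ Icc tlo thi, x ∈ uIcc tlo thi := by intro x hx; rwa [hIccT]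
  -- FTC for G
  have hGsub2 : ∀ a ∈ Icc qlo qhi, ∀ b ∈ Icc qlo qhi, ∫ q in a..b, g q = G b - G a := by
    intro a ha b hb
    have hsub : uIcc a b ⊆ Icc qlo qhi := by
      rw [← hIccQ]
      exact uIcc_subset_uIcc (hmemuQ a ha) (hmemuQ b hb)
    exact intervalIntegral.integral_eq_sub_of_hasDerivAt
      (fun x hx => hG x (hsub hx))
      (hgint.mono_set (uIcc_subset_uIcc (hmemuQ a ha) (hmemuQ b hb)))
  have hGsub : ∀ a ∈ Icc qlo qhi, ∫ q in a..qhi, g q = 1 - G a := by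
    intro a ha
    rw [hGsub2 a ha qhi hqhiMem, hG1]
  -- integrability of α*g and subinterval versions
  have hαg_int : IntervalIntegrable (fun q => α q * g q) volume qlo qhi := by
    apply hgint.continuousOn_mul
    rwa [hIccQ]
  have hsub_int : ∀ a ∈ Icc qlo qhi, ∀ b ∈ Icc qlo qhi,
      IntervalIntegrable (fun q => α q * g q) volume a b := by
    intro a ha b hb
    exact hαg_int.mono_set (uIcc_subset_uIcc (hmemuQ a ha) (hmemuQ b hb))
  have hgsub_int : ∀ a ∈ Icc qlo qhi, ∀ b ∈ Icc qlo qhi,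
      IntervalIntegrable g volume a b := by
    intro a ha b hb
    exact hgint.mono_set (uIcc_subset_uIcc (hmemuQ a ha) (hmemuQ b hb))
  -- the evaluation lemma for Us/UmisS-type integrals
  have hUval : ∀ t ∈ Icc tlo thi, ∀ tv P : ℝ,
      (∫ q in qlo..qhi, πs q t * (α q * tv - P) * g q)
        = tv * Rstar t - P * (1 - G (lam t)) := by
    intro t ht tv P
    have hlam := hlamQ t ht
    have h2 : (∫ q in qlo..qhi, πs q t * (α q * tv - P) * g q)
        = ∫ q in (lam t)..qhi, (α q * tv - P) * g q := by
      rw [intervalIntegral.integral_congr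
        (g := fun q => (Ioi (lam t)).indicator (fun q' => (α q' * tv - P) * g q') q) ?_]
      · exact ind_int _ hlam.1 hlam.2
      · intro q _
        by_cases h : lam t < q <;>
          simp [hπs, Set.indicator_apply, Set.mem_Ioi, h]
    rw [h2]
    have h3 : (∫ q in (lam t)..qhi, (α q * tv - P) * g q)
        = ∫ q in (lam t)..qhi, (tv * (α q * g q) - P * g q) := by
      apply intervalIntegral.integral_congr
      intro q _
      ring
    rw [h3, intervalIntegral.integral_sub ((hsub_int (lam t) hlam qhi hqhiMem).const_mul tv)
      ((hgsub_int (lam t) hlam qhi hqhiMem).const_mul P),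
      intervalIntegral.integral_const_mul, intervalIntegral.integral_const_mul,
      hGsub (lam t) hlam, hRstar]
  have hUs_eval : ∀ t ∈ Icc tlo thi, Us t = t * Rstar t - Pbstar t * (1 - G (lam t)) := by
    intro t ht
    rw [hUs]
    exact hUval t ht t (Pbstar t)
  have hUmis_eval : ∀ t' ∈ Icc tlo thi, ∀ t,
      UmisS t' t = t * Rstar t' - Pbstar t' * (1 - G (lam t')) := by
    intro t' ht' t
    rw [hUmisS]
    exact hUval t' ht' t (Pbstar t')
  -- Rstar facts
  have hRnonneg : ∀ t ∈ Icc tlo thi, 0 ≤ Rstar t := by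
    intro t ht
    rw [hRstar]
    apply intervalIntegral.integral_nonneg (hlamQ t ht).2
    intro q hq
    have hqm : q ∈ Icc qlo qhi := ⟨(hlamQ t ht).1.trans hq.1, hq.2⟩
    exact mul_nonneg (hαpos q hqm).le (hgpos q hqm).le
  have hRzero : ∀ t, tlo ≤ t → t < t1 → Rstar t = 0 := by
    intro t h0 h1
    rw [hRstar, hlam_below t h0 h1, intervalIntegral.integral_same]
  have hRmono : ∀ x ∈ Icc tlo thi, ∀ y ∈ Icc tlo thi, x ≤ y → Rstar x ≤ Rstar y := by
    intro x hx y hy h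
    have hl : lam y ≤ lam x := lamAnti x hx y hy h
    have hlx := hlamQ x hx
    have hly := hlamQ y hy
    have hadj := intervalIntegral.integral_add_adjacent_intervals
      (hsub_int (lam y) hly (lam x) hlx) (hsub_int (lam x) hlx qhi hqhiMem)
    have hpos : 0 ≤ ∫ q in (lam y)..(lam x), α q * g q := by
      apply intervalIntegral.integral_nonneg hl
      intro q hq
      have hqm : q ∈ Icc qlo qhi := ⟨hly.1.trans hq.1, hq.2.trans hlx.2⟩
      exact mul_nonneg (hαpos q hqm).le (hgpos q hqm).le
    rw [hRstar, hRstar, ← hadj]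
    linarith
  have hRint : ∀ a ∈ Icc tlo thi, ∀ b ∈ Icc tlo thi, IntervalIntegrable Rstar volume a b := by
    intro a ha b hb
    apply MonotoneOn.intervalIntegrable
    intro x hx y hy hxy
    have hsub : uIcc a b ⊆ Icc tlo thi := by
      rw [← hIccT]
      exact uIcc_subset_uIcc (hmemuT a ha) (hmemuT b hb)
    exact hRmono x (hsub hx) y (hsub hy) hxy
  have hae_ne : ∀ c : ℝ, ∀ᵐ x : ℝ, x ≠ c := by
    intro c
    have h0 : (volume : Measure ℝ) {c} = 0 := Real.volume_singleton
    have := compl_mem_ae_iff.mpr h0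
    filter_upwards [this] with x hx
    simpa using hx
  have hΦzero : ∀ t, tlo ≤ t → t ≤ t1 → (∫ x in t1..t, Rstar x) = 0 := by
    intro t h0 h1
    have hcongr : ∀ᵐ x : ℝ, x ∈ Set.uIoc t1 t → Rstar x = (0 : ℝ) := by
      filter_upwards [hae_ne t1] with x hx hmem
      rw [uIoc_comm, uIoc_of_le h1] at hmem
      exact hRzero x (h0.trans hmem.1.le) (lt_of_le_of_ne hmem.2 hx)
    rw [intervalIntegral.integral_congr_ae hcongr]
    simp
  have hW : ∀ t ∈ Icc tlo thi,
      Pbstar t * (1 - G (lam t)) = t * Rstar t - ∫ x in t1..t, Rstar x := by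
    intro t ht
    rcases lt_or_ge t t1 with h|h
    · rw [hlam_below t ht.1 h, hG1, hRzero t ht.1 h, hΦzero t ht.1 h.le]
      ring
    · by_cases hq : lam t < qhi
      · have hD : G (lam t) < 1 := by
          rw [← hG1]
          exact hGstrict (hlamQ t ht) hqhiMem hq
        have hDne : (1 : ℝ) - G (lam t) ≠ 0 := by linarith
        rw [hPb1 t h ht.2, ← hRstar, div_mul_cancel₀ _ hDne]
      · push_neg at hq
        have hl : lam t = qhi := le_antisymm (hlamQ t ht).2 hq
        have ht1eq : t = t1 := by
          by_contra hne
          have hlt : t1 < t := lt_of_le_of_ne h (Ne.symm hne)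
          exact absurd (hlam_above t hlt ht.2) (by rw [hl]; exact lt_irrefl _)
        have hR0 : Rstar t = 0 := by rw [hRstar, hl, intervalIntegral.integral_same]
        rw [hl, hG1, hR0, ht1eq, intervalIntegral.integral_same]
        ring
  have hUsInt : ∀ t ∈ Icc tlo thi, Us t = ∫ x in t1..t, Rstar x := by
    intro t ht
    have := hW t ht
    rw [hUs_eval t ht]
    linarith
  -- part 1
  have part1 : ∀ t ∈ Icc tlo thi, 0 ≤ Us t := by
    intro t ht
    rw [hUsInt t ht]
    rcases le_or_gt t1 t with h|h
    · apply intervalIntegral.integral_nonneg h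
      intro x hx
      exact hRnonneg x ⟨ht1lo.trans hx.1, hx.2.trans ht.2⟩
    · rw [hΦzero t ht.1 h.le]
  -- part 3
  have part3 : Us tlo = 0 := by
    rw [hUsInt tlo htloMem, hΦzero tlo le_rfl ht1lo]
  -- part 2
  have part2 : ∀ t ∈ Icc tlo thi, ∀ t' ∈ Icc tlo thi, UmisS t' t ≤ Us t := by
    intro t ht t' ht'
    have hmis : UmisS t' t = Us t' + (t - t') * Rstar t' := by
      rw [hUmis_eval t' ht' t, hUs_eval t' ht']
      ring
    rw [hmis]
    rcases lt_or_ge t' t1 with h'|h'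
    · rw [hUsInt t' ht', hΦzero t' ht'.1 h'.le, hRzero t' ht'.1 h']
      simpa using part1 t ht
    · rw [hUsInt t' ht', hUsInt t ht]
      rcases le_or_gt t1 t with h|h
      · have hadj : (∫ x in t1..t, Rstar x)
            = (∫ x in t1..t', Rstar x) + ∫ x in t'..t, Rstar x :=
          (intervalIntegral.integral_add_adjacent_intervals
            (hRint t1 ht1mem t' ht') (hRint t' ht' t ht)).symm
        rw [hadj]
        have hkey : (t - t') * Rstar t' ≤ ∫ x in t'..t, Rstar x := by
          rcases le_total t' t with htt|htt
          · have hmn : (∫ x in t'..t, Rstar t') ≤ ∫ x in t'..t, Rstar x := by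
              apply intervalIntegral.integral_mono_on htt intervalIntegrable_const
                (hRint t' ht' t ht)
              intro x hx
              exact hRmono t' ht' x ⟨ht'.1.trans hx.1, hx.2.trans ht.2⟩ hx.1
            rw [intervalIntegral.integral_const, smul_eq_mul] at hmn
            exact hmn
          · have hmn : (∫ x in t..t', Rstar x) ≤ ∫ x in t..t', Rstar t' := by
              apply intervalIntegral.integral_mono_on htt (hRint t ht t' ht')
                intervalIntegrable_const
              intro x hx
              exact hRmono x ⟨ht.1.trans hx.1, hx.2.trans ht'.2⟩ t' ht' hx.2
            rw [intervalIntegral.integral_const, smul_eq_mul] at hmn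
            rw [intervalIntegral.integral_symm]
            linarith
        linarith
      · rw [hΦzero t ht.1 h.le]
        have h2 : (∫ x in t1..t', Rstar x) ≤ (t' - t1) * Rstar t' := by
          have hmn : (∫ x in t1..t', Rstar x) ≤ ∫ x in t1..t', Rstar t' := by
            apply intervalIntegral.integral_mono_on h' (hRint t1 ht1mem t' ht')
              intervalIntegrable_const
            intro x hx
            exact hRmono x ⟨ht1lo.trans hx.1, hx.2.trans ht'.2⟩ t' ht' hx.2
          rw [intervalIntegral.integral_const, smul_eq_mul] at hmn
          exact hmn
        have h3 : 0 ≤ Rstar t' := hRnonneg t' ht'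
        nlinarith
  refine ⟨part1, part2, part3, ?_⟩
  -- ===================== PART 4 =====================
  -- clamps and measurable extensions
  have hclampT_mem : ∀ t : ℝ, max tlo (min t thi) ∈ Icc tlo thi :=
    fun t => ⟨le_max_left _ _, max_le htT' (min_le_right _ _)⟩
  have hclampT_id : ∀ t ∈ Icc tlo thi, max tlo (min t thi) = t := by
    intro t ht
    rw [min_eq_left ht.2, max_eq_right ht.1]
  have hclampT_mono : Monotone (fun t : ℝ => max tlo (min t thi)) :=
    fun a b h => max_le_max le_rfl (min_le_min h le_rfl)
  have hclampT_cont : Continuous (fun t : ℝ => max tlo (min t thi)) :=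
    continuous_const.max (continuous_id.min continuous_const)
  have hclampQ_mem : ∀ q : ℝ, max qlo (min q qhi) ∈ Icc qlo qhi :=
    fun q => ⟨le_max_left _ _, max_le hqQ' (min_le_right _ _)⟩
  have hclampQ_id : ∀ q ∈ Icc qlo qhi, max qlo (min q qhi) = q := by
    intro q hq
    rw [min_eq_left hq.2, max_eq_right hq.1]
  have hclampQ_cont : Continuous (fun q : ℝ => max qlo (min q qhi)) :=
    continuous_const.max (continuous_id.min continuous_const)
  set lamE : ℝ → ℝ := fun t => lam (max tlo (min t thi)) with hlamEdef
  have hlamE_anti : Antitone lamE :=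
    fun a b h => lamAnti _ (hclampT_mem a) _ (hclampT_mem b) (hclampT_mono h)
  have hlamE_meas : Measurable lamE := hlamE_anti.measurable
  have hlamE_eq : ∀ t ∈ Icc tlo thi, lamE t = lam t := by
    intro t ht
    simp only [hlamEdef]
    rw [hclampT_id t ht]
  have hlamE_mem : ∀ t, lamE t ∈ Icc qlo qhi := fun t => hlamQ _ (hclampT_mem t)
  set Rext : ℝ → ℝ := fun t => ∫ q in (lamE t)..qhi, α q * g q with hRextdef
  have hRext_mono : Monotone Rext := by
    intro a b h
    have hl : lamE b ≤ lamE a := hlamE_anti h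
    have hla := hlamE_mem a
    have hlb := hlamE_mem b
    have hadj := intervalIntegral.integral_add_adjacent_intervals
      (hsub_int (lamE b) hlb (lamE a) hla) (hsub_int (lamE a) hla qhi hqhiMem)
    have hpos : 0 ≤ ∫ q in (lamE b)..(lamE a), α q * g q := by
      apply intervalIntegral.integral_nonneg hl
      intro q hq
      have hqm : q ∈ Icc qlo qhi := ⟨hlb.1.trans hq.1, hq.2.trans hla.2⟩
      exact mul_nonneg (hαpos q hqm).le (hgpos q hqm).le
    simp only [hRextdef]
    linarith
  have hRext_meas : Measurable Rext := hRext_mono.measurable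
  have hRext_eq : ∀ t ∈ Icc tlo thi, Rext t = Rstar t := by
    intro t ht
    simp only [hRextdef]
    rw [hlamE_eq t ht, hRstar]
  have hΦmono2 : ∀ a ∈ Icc tlo thi, ∀ b ∈ Icc tlo thi, a ≤ b →
      (∫ x in t1..a, Rstar x) ≤ ∫ x in t1..b, Rstar x := by
    intro a ha b hb h
    have hadj := intervalIntegral.integral_add_adjacent_intervals
      (hRint t1 ht1mem a ha) (hRint a ha b hb)
    have hpos : 0 ≤ ∫ x in a..b, Rstar x := by
      apply intervalIntegral.integral_nonneg h
      intro x hx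
      exact hRnonneg x ⟨ha.1.trans hx.1, hx.2.trans hb.2⟩
    linarith
  set ΦE : ℝ → ℝ := fun t => ∫ x in t1..(max tlo (min t thi)), Rstar x with hΦEdef
  have hΦE_mono : Monotone ΦE := by
    intro a b h
    simp only [hΦEdef]
    exact hΦmono2 _ (hclampT_mem a) _ (hclampT_mem b) (hclampT_mono h)
  have hΦE_meas : Measurable ΦE := hΦE_mono.measurable
  have hΦE_eq : ∀ t ∈ Icc tlo thi, ΦE t = ∫ x in t1..t, Rstar x := by
    intro t ht
    simp only [hΦEdef]
    rw [hclampT_id t ht]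
  have hGE_cont : Continuous (fun q : ℝ => G (max qlo (min q qhi))) :=
    contG.comp_continuous hclampQ_cont hclampQ_mem
  set GlamE : ℝ → ℝ := fun t => G (max qlo (min (lamE t) qhi)) with hGlamEdef
  have hGlamE_meas : Measurable GlamE := hGE_cont.measurable.comp hlamE_meas
  have hGlamE_eq : ∀ t ∈ Icc tlo thi, GlamE t = G (lam t) := by
    intro t ht
    simp only [hGlamEdef]
    rw [hlamE_eq t ht, hclampQ_id _ (hlamQ t ht)]
  set PbE : ℝ → ℝ := fun t =>
    if t < t1 then α qhi * t1 else (t * Rext t - ΦE t) / (1 - GlamE t) with hPbEdef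
  have hPbE_meas : Measurable PbE := by
    apply Measurable.ite (measurableSet_lt measurable_id measurable_const) measurable_const
    exact ((measurable_id.mul hRext_meas).sub hΦE_meas).div (measurable_const.sub hGlamE_meas)
  have hPbE_eq : ∀ t ∈ Icc tlo thi, PbE t = Pbstar t := by
    intro t ht
    simp only [hPbEdef]
    rcases lt_or_ge t t1 with h|h
    · rw [if_pos h, hPb2 t ht.1 h]
    · rw [if_neg (not_lt.mpr h), hPb1 t h ht.2, hRext_eq t ht, hΦE_eq t ht,
        hGlamE_eq t ht, hRstar t]
  -- bounds
  set A0 : ℝ := ∫ q in qlo..qhi, α q * g q with hA0def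
  have hMα : 0 < α qhi := hαpos qhi hqhiMem
  have hαle : ∀ q ∈ Icc qlo qhi, α q ≤ α qhi :=
    fun q hq => hαmono.monotoneOn hq hqhiMem hq.2
  have lemB : ∀ a ∈ Icc qlo qhi, ∀ b ∈ Icc qlo qhi, a ≤ b →
      (∫ q in a..b, α q * g q) ≤ α qhi * (G b - G a) := by
    intro a ha b hb h
    have h1 : (∫ q in a..b, α q * g q) ≤ ∫ q in a..b, α qhi * g q := by
      apply intervalIntegral.integral_mono_on h (hsub_int a ha b hb)
        ((hgsub_int a ha b hb).const_mul _)
      intro q hq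
      have hqm : q ∈ Icc qlo qhi := ⟨ha.1.trans hq.1, hq.2.trans hb.2⟩
      exact mul_le_mul_of_nonneg_right (hαle q hqm) (hgpos q hqm).le
    rwa [intervalIntegral.integral_const_mul, hGsub2 a ha b hb] at h1
  have lemB1 : ∀ t ∈ Icc tlo thi, Rstar t ≤ α qhi * (1 - G (lam t)) := by
    intro t ht
    have h1 := lemB (lam t) (hlamQ t ht) qhi hqhiMem (hlamQ t ht).2
    rw [hG1] at h1
    rw [hRstar]
    exact h1
  have lemB2 : ∀ t ∈ Icc tlo thi, ∀ x ∈ Icc tlo thi, x ≤ t →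
      Rstar t - Rstar x ≤ α qhi * (1 - G (lam t)) := by
    intro t ht x hx h
    have hl : lam t ≤ lam x := lamAnti x hx t ht h
    have hlt := hlamQ t ht
    have hlx := hlamQ x hx
    have hadj := intervalIntegral.integral_add_adjacent_intervals
      (hsub_int (lam t) hlt (lam x) hlx) (hsub_int (lam x) hlx qhi hqhiMem)
    have hb := lemB (lam t) hlt (lam x) hlx hl
    have hGx : G (lam x) ≤ 1 := (hGmem _ hlx).2
    have h1 : Rstar t - Rstar x = ∫ q in (lam t)..(lam x), α q * g q := by
      rw [hRstar t, hRstar x, ← hadj]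
      ring
    rw [h1]
    nlinarith [hMα]
  have hA0pos : 0 ≤ A0 := by
    rw [hA0def]
    apply intervalIntegral.integral_nonneg hqQ'
    intro q hq
    exact mul_nonneg (hαpos q hq).le (hgpos q hq).le
  have hRle : ∀ t ∈ Icc tlo thi, Rstar t ≤ A0 := by
    intro t ht
    have hlt := hlamQ t ht
    have hadj := intervalIntegral.integral_add_adjacent_intervals
      (hsub_int qlo hqloMem (lam t) hlt) (hsub_int (lam t) hlt qhi hqhiMem)
    have hpos : 0 ≤ ∫ q in qlo..(lam t), α q * g q := by
      apply intervalIntegral.integral_nonneg hlt.1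
      intro q hq
      have hqm : q ∈ Icc qlo qhi := ⟨hq.1, hq.2.trans hlt.2⟩
      exact mul_nonneg (hαpos q hqm).le (hgpos q hqm).le
    rw [hRstar, hA0def]
    linarith
  have hΦbd : ∀ t ∈ Icc tlo thi, |∫ x in t1..t, Rstar x| ≤ A0 * (thi - tlo) := by
    intro t ht
    have hb := intervalIntegral.norm_integral_le_of_norm_le_const
      (C := A0) (f := Rstar) (a := t1) (b := t) ?_
    · rw [Real.norm_eq_abs] at hb
      have habs : |t - t1| ≤ thi - tlo :=
        abs_sub_le_iff.mpr ⟨by linarith [ht.2, ht1lo], by linarith [ht.1, ht1hi]⟩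
      calc |∫ x in t1..t, Rstar x| ≤ A0 * |t - t1| := hb
        _ ≤ A0 * (thi - tlo) := mul_le_mul_of_nonneg_left habs hA0pos
    · intro x hx
      have hx' : x ∈ Icc tlo thi := by
        rcases le_total t1 t with h|h
        · rw [uIoc_of_le h] at hx
          exact ⟨ht1lo.trans hx.1.le, hx.2.trans ht.2⟩
        · rw [uIoc_comm, uIoc_of_le h] at hx
          exact ⟨ht.1.trans hx.1.le, hx.2.trans ht1hi⟩
      rw [Real.norm_eq_abs, abs_of_nonneg (hRnonneg x hx')]
      exact hRle x hx'
  have hPbBd : ∀ t ∈ Icc tlo thi,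
      |Pbstar t| ≤ |α qhi * t1| + (|t1| + (thi - tlo)) * α qhi := by
    intro t ht
    have hC1 : 0 ≤ (|t1| + (thi - tlo)) * α qhi :=
      mul_nonneg (add_nonneg (abs_nonneg _) (by linarith)) hMα.le
    rcases lt_or_ge t t1 with h|h
    · rw [hPb2 t ht.1 h]
      linarith
    · rw [hPb1 t h ht.2]
      set D := 1 - G (lam t) with hD
      set N := t * (∫ q in lam t..qhi, α q * g q) - ∫ x in t1..t, Rstar x with hN
      have hla := hlamQ t ht
      have hD0 : 0 ≤ D := by
        have := (hGmem _ hla).2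
        simp only [hD]
        linarith
      have hRD : Rstar t ≤ α qhi * D := by
        simp only [hD]
        exact lemB1 t ht
      have hR0 : 0 ≤ Rstar t := hRnonneg t ht
      have hIb : (∫ x in t1..t, Rstar x) ≤ (t - t1) * Rstar t := by
        have hmn : (∫ x in t1..t, Rstar x) ≤ ∫ x in t1..t, Rstar t := by
          apply intervalIntegral.integral_mono_on h (hRint t1 ht1mem t ht)
            intervalIntegrable_const
          intro x hx
          exact hRmono x ⟨ht1lo.trans hx.1, hx.2.trans ht.2⟩ t ht hx.2
        rw [intervalIntegral.integral_const, smul_eq_mul] at hmn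
        exact hmn
      have hIb2 : (t - t1) * Rstar t - (∫ x in t1..t, Rstar x) ≤ (t - t1) * (α qhi * D) := by
        have hmn : (∫ x in t1..t, (Rstar t - α qhi * D)) ≤ ∫ x in t1..t, Rstar x := by
          apply intervalIntegral.integral_mono_on h intervalIntegrable_const
            (hRint t1 ht1mem t ht)
          intro x hx
          have h2 := lemB2 t ht x ⟨ht1lo.trans hx.1, hx.2.trans ht.2⟩ hx.2
          simp only [hD]
          linarith
        rw [intervalIntegral.integral_const, smul_eq_mul] at hmn
        linarith
      have hNbd : |N| ≤ ((|t1| + (thi - tlo)) * α qhi) * D := by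
        have hsplit : N = t1 * Rstar t + ((t - t1) * Rstar t - ∫ x in t1..t, Rstar x) := by
          simp only [hN]
          rw [hRstar t]
          ring
        have h3 : 0 ≤ (t - t1) * Rstar t - ∫ x in t1..t, Rstar x := by linarith
        have habs1 : |t1 * Rstar t| ≤ |t1| * (α qhi * D) := by
          rw [abs_mul]
          apply mul_le_mul_of_nonneg_left _ (abs_nonneg t1)
          rw [abs_of_nonneg hR0]
          exact hRD
        have htt1 : t - t1 ≤ thi - tlo := by linarith [ht.2, ht1lo]
        calc |N| ≤ |t1 * Rstar t| + |(t - t1) * Rstar t - ∫ x in t1..t, Rstar x| := by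
              rw [hsplit]
              exact abs_add_le _ _
          _ ≤ |t1| * (α qhi * D) + (t - t1) * (α qhi * D) := by
              rw [abs_of_nonneg h3]
              linarith
          _ ≤ ((|t1| + (thi - tlo)) * α qhi) * D := by nlinarith [mul_nonneg hMα.le hD0]
      rcases eq_or_lt_of_le hD0 with hDeq|hDpos
      · rw [← hDeq, div_zero, abs_zero]
        linarith [abs_nonneg (α qhi * t1)]
      · have heq : |N / D| = |N| / D := by rw [abs_div, abs_of_pos hDpos]
        rw [heq]
        have hle : |N| / D ≤ (|t1| + (thi - tlo)) * α qhi := by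
          rw [div_le_iff₀ hDpos]
          exact hNbd
        linarith [abs_nonneg (α qhi * t1)]
  set CPr : ℝ := |α qhi * t1| + (|t1| + (thi - tlo)) * α qhi + |r| with hCPrdef
  have hPbrBd : ∀ t ∈ Icc tlo thi, |Pbstar t - r| ≤ CPr := by
    intro t ht
    have h1 : |Pbstar t - r| ≤ |Pbstar t| + |r| := by
      have h2 := abs_add_le (Pbstar t) (-r)
      simpa [sub_eq_add_neg] using h2
    have h3 := hPbBd t ht
    simp only [hCPrdef]
    linarith
  have hCPr0 : 0 ≤ CPr := le_trans (abs_nonneg _) (hPbrBd tlo htloMem)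
  have hfInt : IntegrableOn f (Ioc tlo thi) volume := hfint.1
  have hgInt : IntegrableOn g (Ioc qlo qhi) volume := hgint.1
  obtain ⟨Cs, hCs⟩ := IsCompact.exists_bound_of_continuousOn isCompact_Icc
    (continuousOn_id.sub contd)
  have hCs' : ∀ t ∈ Icc tlo thi, |t - d t| ≤ Cs := by
    intro t ht
    have h1 := hCs t ht
    rwa [Real.norm_eq_abs] at h1
  have hCs0 : 0 ≤ Cs := le_trans (abs_nonneg _) (hCs' tlo htloMem)
  set Cη : ℝ := α qhi * Cs + |r| with hCηdef
  have hCη0 : 0 ≤ Cη := by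
    simp only [hCηdef]
    have := mul_nonneg hMα.le hCs0
    linarith [abs_nonneg r]
  have hηbd : ∀ q ∈ Icc qlo qhi, ∀ t ∈ Icc tlo thi, |η q t| ≤ Cη := by
    intro q hq t ht
    rw [hη]
    have h1 : |α q * (t - d t) - r| ≤ |α q * (t - d t)| + |r| := by
      have h2 := abs_add_le (α q * (t - d t)) (-r)
      simpa [sub_eq_add_neg] using h2
    have h2 : |α q * (t - d t)| = α q * |t - d t| := by
      rw [abs_mul, abs_of_nonneg (hαpos q hq).le]
    have h3 : α q * |t - d t| ≤ α qhi * Cs :=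
      mul_le_mul (hαle q hq) (hCs' t ht) (abs_nonneg _) hMα.le
    simp only [hCηdef]
    linarith
  -- ae membership facts for product measures
  have hprodQT_snd : ∀ᵐ p : ℝ × ℝ
      ∂((volume.restrict (Ioc qlo qhi)).prod (volume.restrict (Ioc tlo thi))),
      p.2 ∈ Ioc tlo thi := by
    rw [MeasureTheory.ae_iff]
    have hset : {p : ℝ × ℝ | ¬ p.2 ∈ Ioc tlo thi} = (univ : Set ℝ) ×ˢ (Ioc tlo thi)ᶜ := by
      ext p
      simp
    rw [hset, Measure.prod_prod, Measure.restrict_apply measurableSet_Ioc.compl]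
    simp [Set.compl_inter_self]
  have hprodQT_fst : ∀ᵐ p : ℝ × ℝ
      ∂((volume.restrict (Ioc qlo qhi)).prod (volume.restrict (Ioc tlo thi))),
      p.1 ∈ Ioc qlo qhi := by
    rw [MeasureTheory.ae_iff]
    have hset : {p : ℝ × ℝ | ¬ p.1 ∈ Ioc qlo qhi} = (Ioc qlo qhi)ᶜ ×ˢ (univ : Set ℝ) := by
      ext p
      simp
    rw [hset, Measure.prod_prod, Measure.restrict_apply measurableSet_Ioc.compl]
    simp [Set.compl_inter_self]
  have hprodTT_snd : ∀ᵐ p : ℝ × ℝ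
      ∂((volume.restrict (Ioc tlo thi)).prod (volume.restrict (Ioc tlo thi))),
      p.2 ∈ Ioc tlo thi := by
    rw [MeasureTheory.ae_iff]
    have hset : {p : ℝ × ℝ | ¬ p.2 ∈ Ioc tlo thi} = (univ : Set ℝ) ×ˢ (Ioc tlo thi)ᶜ := by
      ext p
      simp
    rw [hset, Measure.prod_prod, Measure.restrict_apply measurableSet_Ioc.compl]
    simp [Set.compl_inter_self]
  -- integrability of the LHS integrand on the product
  have hSmeas : MeasurableSet {p : ℝ × ℝ | lamE p.2 < p.1} :=
    measurableSet_lt (hlamE_meas.comp measurable_snd) measurable_fst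
  have hLeq : ∀ᵐ p : ℝ × ℝ
      ∂((volume.restrict (Ioc qlo qhi)).prod (volume.restrict (Ioc tlo thi))),
      (Function.uncurry (fun q t => πs q t * (Pbstar t - r) * f t * g q)) p
        = (fun p : ℝ × ℝ => ({p : ℝ × ℝ | lamE p.2 < p.1}.indicator (fun _ => (1:ℝ)) p)
            * (PbE p.2 - r) * f p.2 * g p.1) p := by
    filter_upwards [hprodQT_snd] with p hp
    have hpIcc : p.2 ∈ Icc tlo thi := Ioc_subset_Icc_self hp
    simp only [Function.uncurry]
    rw [hπs, hPbE_eq p.2 hpIcc]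
    by_cases h : lam p.2 < p.1
    · simp [Set.indicator_apply, Set.mem_setOf_eq, hlamE_eq p.2 hpIcc, h]
    · simp [Set.indicator_apply, Set.mem_setOf_eq, hlamE_eq p.2 hpIcc, h]
  have hLaesm : AEStronglyMeasurable
      (Function.uncurry (fun q t => πs q t * (Pbstar t - r) * f t * g q))
      ((volume.restrict (Ioc qlo qhi)).prod (volume.restrict (Ioc tlo thi))) := by
    have m1 : Measurable (fun p : ℝ × ℝ =>
        ({p : ℝ × ℝ | lamE p.2 < p.1}.indicator (fun _ => (1:ℝ)) p)) :=
      measurable_const.indicator hSmeas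
    have m2 : Measurable (fun p : ℝ × ℝ => PbE p.2 - r) :=
      (hPbE_meas.comp measurable_snd).sub measurable_const
    have a3 : AEStronglyMeasurable (fun p : ℝ × ℝ => f p.2)
        ((volume.restrict (Ioc qlo qhi)).prod (volume.restrict (Ioc tlo thi))) :=
      (hfInt.aestronglyMeasurable).comp_snd
    have a4 : AEStronglyMeasurable (fun p : ℝ × ℝ => g p.1)
        ((volume.restrict (Ioc qlo qhi)).prod (volume.restrict (Ioc tlo thi))) :=
      (hgInt.aestronglyMeasurable).comp_fst
    exact (((m1.aestronglyMeasurable.mul m2.aestronglyMeasurable).mul a3).mul a4).congr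
      (Filter.EventuallyEq.symm hLeq)
  have hLbig : Integrable (fun p : ℝ × ℝ => |g p.1| * (CPr * |f p.2|))
      ((volume.restrict (Ioc qlo qhi)).prod (volume.restrict (Ioc tlo thi))) :=
    (hgInt.abs).mul_prod ((hfInt.abs).const_mul CPr)
  have hLbound : ∀ᵐ p : ℝ × ℝ
      ∂((volume.restrict (Ioc qlo qhi)).prod (volume.restrict (Ioc tlo thi))),
      ‖Function.uncurry (fun q t => πs q t * (Pbstar t - r) * f t * g q) p‖
        ≤ |g p.1| * (CPr * |f p.2|) := by
    filter_upwards [hLeq, hprodQT_snd] with p hpeq hp2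
    rw [Real.norm_eq_abs, hpeq]
    have hpIcc : p.2 ∈ Icc tlo thi := Ioc_subset_Icc_self hp2
    have hind : |({p : ℝ × ℝ | lamE p.2 < p.1}.indicator (fun _ => (1:ℝ)) p)| ≤ 1 := by
      by_cases h : p ∈ {p : ℝ × ℝ | lamE p.2 < p.1} <;> simp [Set.indicator_apply, h]
    have hPb : |PbE p.2 - r| ≤ CPr := by
      rw [hPbE_eq p.2 hpIcc]
      exact hPbrBd p.2 hpIcc
    rw [abs_mul, abs_mul, abs_mul]
    have h1 : |({p : ℝ × ℝ | lamE p.2 < p.1}.indicator (fun _ => (1:ℝ)) p)|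
        * |PbE p.2 - r| ≤ 1 * CPr := mul_le_mul hind hPb (abs_nonneg _) zero_le_one
    rw [one_mul] at h1
    calc |({p : ℝ × ℝ | lamE p.2 < p.1}.indicator (fun _ => (1:ℝ)) p)|
          * |PbE p.2 - r| * |f p.2| * |g p.1|
        ≤ CPr * |f p.2| * |g p.1| :=
          mul_le_mul_of_nonneg_right
            (mul_le_mul_of_nonneg_right h1 (abs_nonneg _)) (abs_nonneg _)
      _ = |g p.1| * (CPr * |f p.2|) := by ring
  have hLint : Integrable (Function.uncurry (fun q t => πs q t * (Pbstar t - r) * f t * g q))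
      ((volume.restrict (Ioc qlo qhi)).prod (volume.restrict (Ioc tlo thi))) :=
    hLbig.mono' hLaesm hLbound
  -- integrability of the RHS integrand on the product
  have hαE_cont : Continuous (fun q : ℝ => α (max qlo (min q qhi))) :=
    contα.comp_continuous hclampQ_cont hclampQ_mem
  have hdE_cont : Continuous (fun t : ℝ => d (max tlo (min t thi))) :=
    contd.comp_continuous hclampT_cont hclampT_mem
  have hReq : ∀ᵐ p : ℝ × ℝ
      ∂((volume.restrict (Ioc qlo qhi)).prod (volume.restrict (Ioc tlo thi))),
      (Function.uncurry (fun q t => max (η q t) 0 * g q * f t)) p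
        = (fun p : ℝ × ℝ => max (α (max qlo (min p.1 qhi)) * (p.2 - d (max tlo (min p.2 thi))) - r) 0
            * g p.1 * f p.2) p := by
    filter_upwards [hprodQT_fst, hprodQT_snd] with p hp1 hp2
    simp only [Function.uncurry]
    rw [hη, hclampQ_id p.1 (Ioc_subset_Icc_self hp1), hclampT_id p.2 (Ioc_subset_Icc_self hp2)]
  have hRaesm : AEStronglyMeasurable
      (Function.uncurry (fun q t => max (η q t) 0 * g q * f t))
      ((volume.restrict (Ioc qlo qhi)).prod (volume.restrict (Ioc tlo thi))) := by
    have m1 : Measurable (fun p : ℝ × ℝ =>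
        max (α (max qlo (min p.1 qhi)) * (p.2 - d (max tlo (min p.2 thi))) - r) 0) :=
      ((((hαE_cont.comp continuous_fst).mul
        (continuous_snd.sub (hdE_cont.comp continuous_snd))).sub
          continuous_const).max continuous_const).measurable
    have a2 : AEStronglyMeasurable (fun p : ℝ × ℝ => g p.1)
        ((volume.restrict (Ioc qlo qhi)).prod (volume.restrict (Ioc tlo thi))) :=
      (hgInt.aestronglyMeasurable).comp_fst
    have a3 : AEStronglyMeasurable (fun p : ℝ × ℝ => f p.2)
        ((volume.restrict (Ioc qlo qhi)).prod (volume.restrict (Ioc tlo thi))) :=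
      (hfInt.aestronglyMeasurable).comp_snd
    exact ((m1.aestronglyMeasurable.mul a2).mul a3).congr (Filter.EventuallyEq.symm hReq)
  have hRbig : Integrable (fun p : ℝ × ℝ => |g p.1| * (Cη * |f p.2|))
      ((volume.restrict (Ioc qlo qhi)).prod (volume.restrict (Ioc tlo thi))) :=
    (hgInt.abs).mul_prod ((hfInt.abs).const_mul Cη)
  have hRbound : ∀ᵐ p : ℝ × ℝ
      ∂((volume.restrict (Ioc qlo qhi)).prod (volume.restrict (Ioc tlo thi))),
      ‖Function.uncurry (fun q t => max (η q t) 0 * g q * f t) p‖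
        ≤ |g p.1| * (Cη * |f p.2|) := by
    filter_upwards [hprodQT_fst, hprodQT_snd] with p hp1 hp2
    simp only [Function.uncurry, Real.norm_eq_abs]
    have h1 : |max (η p.1 p.2) 0| ≤ Cη := by
      have hmx : |max (η p.1 p.2) 0| ≤ |η p.1 p.2| := by
        rw [abs_of_nonneg (le_max_right _ _)]
        exact max_le (le_abs_self _) (abs_nonneg _)
      exact hmx.trans (hηbd p.1 (Ioc_subset_Icc_self hp1) p.2 (Ioc_subset_Icc_self hp2))
    rw [abs_mul, abs_mul]
    calc |max (η p.1 p.2) 0| * |g p.1| * |f p.2| ≤ Cη * |g p.1| * |f p.2| :=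
          mul_le_mul_of_nonneg_right
            (mul_le_mul_of_nonneg_right h1 (abs_nonneg _)) (abs_nonneg _)
      _ = |g p.1| * (Cη * |f p.2|) := by ring
  have hRint2 : Integrable (Function.uncurry (fun q t => max (η q t) 0 * g q * f t))
      ((volume.restrict (Ioc qlo qhi)).prod (volume.restrict (Ioc tlo thi))) :=
    hRbig.mono' hRaesm hRbound
  -- inner evaluations
  have innerL : ∀ t ∈ Icc tlo thi,
      (∫ q in Ioc qlo qhi, πs q t * (Pbstar t - r) * f t * g q)
        = (Pbstar t - r) * f t * (1 - G (lam t)) := by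
    intro t ht
    have hlam := hlamQ t ht
    rw [← intervalIntegral.integral_of_le hqQ']
    have h2 : (∫ q in qlo..qhi, πs q t * (Pbstar t - r) * f t * g q)
        = ∫ q in (lam t)..qhi, (Pbstar t - r) * f t * g q := by
      rw [intervalIntegral.integral_congr
        (g := fun q => (Ioi (lam t)).indicator (fun q' => (Pbstar t - r) * f t * g q') q) ?_]
      · exact ind_int _ hlam.1 hlam.2
      · intro q _
        by_cases h : lam t < q <;> simp [hπs, Set.indicator_apply, Set.mem_Ioi, h]
    rw [h2]
    have h3 : (∫ q in (lam t)..qhi, (Pbstar t - r) * f t * g q)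
        = ((Pbstar t - r) * f t) * ∫ q in (lam t)..qhi, g q := by
      rw [← intervalIntegral.integral_const_mul]
    rw [h3, hGsub (lam t) hlam]
  have innerR : ∀ t ∈ Icc tlo thi,
      (∫ q in Ioc qlo qhi, max (η q t) 0 * g q * f t)
        = ((t - d t) * Rstar t - r * (1 - G (lam t))) * f t := by
    intro t ht
    have hlam := hlamQ t ht
    rw [← intervalIntegral.integral_of_le hqQ']
    have h2 : (∫ q in qlo..qhi, max (η q t) 0 * g q * f t)
        = ∫ q in (lam t)..qhi, η q t * g q * f t := by
      rw [intervalIntegral.integral_congr_ae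
        (g := fun q => (Ioi (lam t)).indicator (fun q' => η q' t * g q' * f t) q) ?_]
      · exact ind_int _ hlam.1 hlam.2
      · apply Filter.Eventually.of_forall
        intro q hq
        rw [uIoc_of_le hqQ'] at hq
        have hqm : q ∈ Icc qlo qhi := Ioc_subset_Icc_self hq
        by_cases h : lam t < q
        · have hpos : 0 < η q t := (key1 t ht q hqm hq.1).mp h
          simp [Set.indicator_apply, Set.mem_Ioi, h, max_eq_left hpos.le]
        · have hneg : η q t ≤ 0 := by
            by_contra hc
            push_neg at hc
            exact h ((key1 t ht q hqm hq.1).mpr hc)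
          simp [Set.indicator_apply, Set.mem_Ioi, h, max_eq_right hneg]
    rw [h2]
    have h3 : (∫ q in (lam t)..qhi, η q t * g q * f t)
        = ∫ q in (lam t)..qhi, ((t - d t) * (α q * g q) - r * g q) * f t := by
      apply intervalIntegral.integral_congr
      intro q _
      show η q t * g q * f t = ((t - d t) * (α q * g q) - r * g q) * f t
      rw [hη]
      ring
    rw [h3, intervalIntegral.integral_mul_const,
      intervalIntegral.integral_sub ((hsub_int (lam t) hlam qhi hqhiMem).const_mul _)
        ((hgsub_int (lam t) hlam qhi hqhiMem).const_mul _),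
      intervalIntegral.integral_const_mul, intervalIntegral.integral_const_mul,
      hGsub (lam t) hlam, ← hRstar t]
  -- single variable AESM and integrability on the t-line
  have haeT : ∀ᵐ t ∂(volume.restrict (Ioc tlo thi)), t ∈ Icc tlo thi := by
    filter_upwards [ae_restrict_mem measurableSet_Ioc] with t ht
    exact Ioc_subset_Icc_self ht
  have aef : AEStronglyMeasurable f (volume.restrict (Ioc tlo thi)) :=
    hfInt.aestronglyMeasurable
  have aePb : AEStronglyMeasurable Pbstar (volume.restrict (Ioc tlo thi)) := by
    apply (hPbE_meas.aestronglyMeasurable).congr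
    filter_upwards [haeT] with t ht
    exact hPbE_eq t ht
  have aeGlam : AEStronglyMeasurable (fun t => G (lam t)) (volume.restrict (Ioc tlo thi)) := by
    apply (hGlamE_meas.aestronglyMeasurable).congr
    filter_upwards [haeT] with t ht
    exact hGlamE_eq t ht
  have aeR : AEStronglyMeasurable Rstar (volume.restrict (Ioc tlo thi)) := by
    apply (hRext_meas.aestronglyMeasurable).congr
    filter_upwards [haeT] with t ht
    exact hRext_eq t ht
  have aeΦ : AEStronglyMeasurable (fun t => ∫ x in t1..t, Rstar x)
      (volume.restrict (Ioc tlo thi)) := by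
    apply (hΦE_meas.aestronglyMeasurable).congr
    filter_upwards [haeT] with t ht
    exact hΦE_eq t ht
  have aeF : AEStronglyMeasurable F (volume.restrict (Ioc tlo thi)) := by
    apply ((contF.comp_continuous hclampT_cont hclampT_mem).measurable.aestronglyMeasurable).congr
    filter_upwards [haeT] with t ht
    show F (max tlo (min t thi)) = F t
    rw [hclampT_id t ht]
  have aed : AEStronglyMeasurable d (volume.restrict (Ioc tlo thi)) := by
    apply (hdE_cont.measurable.aestronglyMeasurable).congr
    filter_upwards [haeT] with t ht
    show d (max tlo (min t thi)) = d t
    rw [hclampT_id t ht]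
  have hIμT : ∀ (φ : ℝ → ℝ) (C : ℝ), AEStronglyMeasurable φ (volume.restrict (Ioc tlo thi)) →
      (∀ t ∈ Icc tlo thi, |φ t| ≤ C) →
      Integrable (fun t => φ t * f t) (volume.restrict (Ioc tlo thi)) := by
    intro φ C hm hb
    apply Integrable.mono' ((hfInt.abs).const_mul C) (hm.mul aef)
    filter_upwards [haeT] with t ht
    show ‖φ t * f t‖ ≤ C * |f t|
    rw [Real.norm_eq_abs, abs_mul]
    exact mul_le_mul_of_nonneg_right (hb t ht) (abs_nonneg _)
  have hvolT : volume (Ioc tlo thi) < ⊤ := measure_Ioc_lt_top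
  have intConst : ∀ c : ℝ, Integrable (fun _ => c) (volume.restrict (Ioc tlo thi)) := by
    intro c
    exact integrableOn_const hvolT.ne
  have intL2 : Integrable (fun t => (Pbstar t - r) * f t * (1 - G (lam t)))
      (volume.restrict (Ioc tlo thi)) := by
    have h0 : Integrable (fun t => ((Pbstar t - r) * (1 - G (lam t))) * f t)
        (volume.restrict (Ioc tlo thi)) := by
      apply hIμT _ (CPr * 1)
        ((aePb.sub aestronglyMeasurable_const).mul (aestronglyMeasurable_const.sub aeGlam))
      intro t ht
      show |(Pbstar t - r) * (1 - G (lam t))| ≤ CPr * 1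
      rw [abs_mul]
      have hg1 : |1 - G (lam t)| ≤ 1 := by
        have := hGmem _ (hlamQ t ht)
        rw [abs_le]
        constructor <;> linarith [this.1, this.2]
      exact mul_le_mul (hPbrBd t ht) hg1 (abs_nonneg _) hCPr0
    exact h0.congr (Filter.Eventually.of_forall (fun t => by ring))
  have intR2 : Integrable (fun t => ((t - d t) * Rstar t - r * (1 - G (lam t))) * f t)
      (volume.restrict (Ioc tlo thi)) := by
    apply hIμT _ (Cs * A0 + |r| * 1)
    · exact ((measurable_id.aestronglyMeasurable.sub aed).mul aeR).sub
        ((aestronglyMeasurable_const.mul (aestronglyMeasurable_const.sub aeGlam)))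
    · intro t ht
      show |(t - d t) * Rstar t - r * (1 - G (lam t))| ≤ Cs * A0 + |r| * 1
      have h1 : |(t - d t) * Rstar t - r * (1 - G (lam t))|
          ≤ |(t - d t) * Rstar t| + |r * (1 - G (lam t))| := by
        have h2 := abs_add_le ((t - d t) * Rstar t) (-(r * (1 - G (lam t))))
        simpa [sub_eq_add_neg] using h2
      have h2 : |(t - d t) * Rstar t| ≤ Cs * A0 := by
        rw [abs_mul]
        apply mul_le_mul (hCs' t ht) _ (abs_nonneg _) hCs0
        rw [abs_of_nonneg (hRnonneg t ht)]
        exact hRle t ht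
      have h3 : |r * (1 - G (lam t))| ≤ |r| * 1 := by
        rw [abs_mul]
        apply mul_le_mul_of_nonneg_left _ (abs_nonneg r)
        have := hGmem _ (hlamQ t ht)
        rw [abs_le]
        constructor <;> linarith [this.1, this.2]
      linarith
  have int5 : Integrable (fun t => (1 - F t) * Rstar t) (volume.restrict (Ioc tlo thi)) := by
    apply Integrable.mono' (intConst (1 * A0))
      ((aestronglyMeasurable_const.sub aeF).mul aeR)
    filter_upwards [haeT] with t ht
    show ‖(1 - F t) * Rstar t‖ ≤ 1 * A0
    rw [Real.norm_eq_abs, abs_mul]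
    have h1 : |1 - F t| ≤ 1 := by
      have := hFmem t ht
      rw [abs_le]
      constructor <;> linarith [this.1, this.2]
    have h2 : |Rstar t| ≤ A0 := by
      rw [abs_of_nonneg (hRnonneg t ht)]
      exact hRle t ht
    exact mul_le_mul h1 h2 (abs_nonneg _) zero_le_one
  have int2 : Integrable (fun t => (∫ x in t1..t, Rstar x) * f t)
      (volume.restrict (Ioc tlo thi)) :=
    hIμT _ (A0 * (thi - tlo)) aeΦ (fun t ht => hΦbd t ht)
  -- triangle identity by Fubini
  have hFsub : ∀ a ∈ Icc tlo thi, (∫ t in a..thi, f t) = 1 - F a := by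
    intro a ha
    have hsub : uIcc a thi ⊆ Icc tlo thi := by
      rw [← hIccT]
      exact uIcc_subset_uIcc (hmemuT a ha) (hmemuT thi hthiMem)
    rw [intervalIntegral.integral_eq_sub_of_hasDerivAt
      (fun x hx => hF x (hsub hx))
      (hfint.mono_set (uIcc_subset_uIcc (hmemuT a ha) (hmemuT thi hthiMem))), hF1]
  have hc0 : (∫ x in tlo..t1, Rstar x) = 0 := by
    rw [intervalIntegral.integral_symm, hΦzero tlo le_rfl ht1lo, neg_zero]
  have hΦrepr : ∀ t ∈ Ioc tlo thi,
      (∫ x in t1..t, Rstar x) = ∫ x in Ioc tlo thi, (Iio t).indicator Rstar x := by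
    intro t ht
    have htm : t ∈ Icc tlo thi := Ioc_subset_Icc_self ht
    rw [MeasureTheory.integral_indicator measurableSet_Iio,
      Measure.restrict_restrict measurableSet_Iio]
    have hset : Iio t ∩ Ioc tlo thi = Ioo tlo t := by
      ext x
      simp only [mem_inter_iff, mem_Iio, mem_Ioc, mem_Ioo]
      constructor
      · rintro ⟨h1, h2, h3⟩
        exact ⟨h2, h1⟩
      · rintro ⟨h1, h2⟩
        exact ⟨h2, h1, h2.le.trans htm.2⟩
    rw [hset, ← MeasureTheory.integral_Ioc_eq_integral_Ioo,
      ← intervalIntegral.integral_of_le htm.1]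
    have hadj := intervalIntegral.integral_add_adjacent_intervals
      (hRint tlo htloMem t1 ht1mem) (hRint t1 ht1mem t htm)
    rw [← hadj, hc0, zero_add]
  have intR_T : Integrable Rstar (volume.restrict (Ioc tlo thi)) := by
    apply Integrable.mono' (intConst A0) aeR
    filter_upwards [haeT] with t ht
    show ‖Rstar t‖ ≤ A0
    rw [Real.norm_eq_abs, abs_of_nonneg (hRnonneg t ht)]
    exact hRle t ht
  have htri : (∫ t in Ioc tlo thi, (∫ x in t1..t, Rstar x) * f t)
      = ∫ x in Ioc tlo thi, (1 - F x) * Rstar x := by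
    have e1 : (∫ t in Ioc tlo thi, (∫ x in t1..t, Rstar x) * f t)
        = ∫ t in Ioc tlo thi, ∫ x in Ioc tlo thi,
            (if x < t then (1:ℝ) else 0) * (Rstar x * f t) := by
      apply MeasureTheory.integral_congr_ae
      filter_upwards [ae_restrict_mem measurableSet_Ioc] with t ht
      rw [hΦrepr t ht, ← MeasureTheory.integral_mul_const]
      apply MeasureTheory.integral_congr_ae
      apply Filter.Eventually.of_forall
      intro x
      by_cases h : x < t <;> simp [Set.indicator_apply, h]
    rw [e1]
    have hTTeq : ∀ᵐ p : ℝ × ℝ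
        ∂((volume.restrict (Ioc tlo thi)).prod (volume.restrict (Ioc tlo thi))),
        (Function.uncurry (fun t x => (if x < t then (1:ℝ) else 0) * (Rstar x * f t))) p
          = (fun p : ℝ × ℝ => ({p : ℝ × ℝ | p.2 < p.1}.indicator (fun _ => (1:ℝ)) p) * (Rext p.2 * f p.1)) p := by
      filter_upwards [hprodTT_snd] with p hp
      simp only [Function.uncurry]
      rw [hRext_eq p.2 (Ioc_subset_Icc_self hp)]
      by_cases h : p.2 < p.1 <;> simp [Set.indicator_apply, Set.mem_setOf_eq, h]
    have hH : Integrable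
        (Function.uncurry (fun t x => (if x < t then (1:ℝ) else 0) * (Rstar x * f t)))
        ((volume.restrict (Ioc tlo thi)).prod (volume.restrict (Ioc tlo thi))) := by
      have hbig : Integrable (fun p : ℝ × ℝ => |f p.1| * A0)
          ((volume.restrict (Ioc tlo thi)).prod (volume.restrict (Ioc tlo thi))) :=
        (hfInt.abs).mul_prod (intConst A0)
      apply Integrable.mono' hbig
      · have m1 : Measurable (fun p : ℝ × ℝ =>
            ({p : ℝ × ℝ | p.2 < p.1}.indicator (fun _ => (1:ℝ)) p)) :=
          measurable_const.indicator (measurableSet_lt measurable_snd measurable_fst)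
        have a2 : AEStronglyMeasurable (fun p : ℝ × ℝ => Rext p.2 * f p.1)
            ((volume.restrict (Ioc tlo thi)).prod (volume.restrict (Ioc tlo thi))) :=
          ((hRext_meas.comp measurable_snd).aestronglyMeasurable).mul
            ((hfInt.aestronglyMeasurable).comp_fst)
        exact (m1.aestronglyMeasurable.mul a2).congr (Filter.EventuallyEq.symm hTTeq)
      · filter_upwards [hTTeq, hprodTT_snd] with p hpeq hp2
        rw [Real.norm_eq_abs, hpeq]
        have hpIcc : p.2 ∈ Icc tlo thi := Ioc_subset_Icc_self hp2
        have hind : |({p : ℝ × ℝ | p.2 < p.1}.indicator (fun _ => (1:ℝ)) p)| ≤ 1 := by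
          by_cases h : p ∈ {p : ℝ × ℝ | p.2 < p.1} <;> simp [Set.indicator_apply, h]
        have hRb : |Rext p.2| ≤ A0 := by
          rw [hRext_eq p.2 hpIcc, abs_of_nonneg (hRnonneg p.2 hpIcc)]
          exact hRle p.2 hpIcc
        rw [abs_mul, abs_mul]
        calc |({p : ℝ × ℝ | p.2 < p.1}.indicator (fun _ => (1:ℝ)) p)|
              * (|Rext p.2| * |f p.1|)
            ≤ 1 * (A0 * |f p.1|) := by
              apply mul_le_mul hind _ (mul_nonneg (abs_nonneg _) (abs_nonneg _)) zero_le_one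
              exact mul_le_mul_of_nonneg_right hRb (abs_nonneg _)
          _ = |f p.1| * A0 := by ring
    rw [MeasureTheory.integral_integral_swap hH]
    apply MeasureTheory.integral_congr_ae
    filter_upwards [ae_restrict_mem measurableSet_Ioc] with x hx
    have hxm : x ∈ Icc tlo thi := Ioc_subset_Icc_self hx
    have e2 : (∫ t in Ioc tlo thi, (if x < t then (1:ℝ) else 0) * (Rstar x * f t))
        = ∫ t in Ioc tlo thi, (Ioi x).indicator (fun t' => Rstar x * f t') t := by
      apply MeasureTheory.integral_congr_ae
      apply Filter.Eventually.of_forall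
      intro t
      by_cases h : x < t <;> simp [Set.indicator_apply, Set.mem_Ioi, h]
    rw [e2, MeasureTheory.integral_indicator measurableSet_Ioi,
      Measure.restrict_restrict measurableSet_Ioi, ioi_inter_ioc hxm.1,
      MeasureTheory.integral_const_mul, ← intervalIntegral.integral_of_le hxm.2,
      hFsub x hxm]
    ring
  -- main computation
  simp only [intervalIntegral.integral_of_le htT', intervalIntegral.integral_of_le hqQ']
  have eL : (∫ t in Ioc tlo thi, ∫ q in Ioc qlo qhi, πs q t * (Pbstar t - r) * f t * g q)
      = ∫ t in Ioc tlo thi, (Pbstar t - r) * f t * (1 - G (lam t)) := by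
    apply MeasureTheory.integral_congr_ae
    filter_upwards [ae_restrict_mem measurableSet_Ioc] with t ht
    exact innerL t (Ioc_subset_Icc_self ht)
  have eR : (∫ t in Ioc tlo thi, ∫ q in Ioc qlo qhi, max (η q t) 0 * g q * f t)
      = ∫ t in Ioc tlo thi, ((t - d t) * Rstar t - r * (1 - G (lam t))) * f t := by
    apply MeasureTheory.integral_congr_ae
    filter_upwards [ae_restrict_mem measurableSet_Ioc] with t ht
    exact innerR t (Ioc_subset_Icc_self ht)
  have main : (∫ t in Ioc tlo thi, (Pbstar t - r) * f t * (1 - G (lam t)))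
      = ∫ t in Ioc tlo thi, ((t - d t) * Rstar t - r * (1 - G (lam t))) * f t := by
    rw [← sub_eq_zero, ← MeasureTheory.integral_sub intL2 intR2]
    have hdiff : ∀ᵐ t ∂(volume.restrict (Ioc tlo thi)),
        (Pbstar t - r) * f t * (1 - G (lam t))
          - ((t - d t) * Rstar t - r * (1 - G (lam t))) * f t
        = (1 - F t) * Rstar t - (∫ x in t1..t, Rstar x) * f t := by
      filter_upwards [haeT] with t ht
      have hw := hW t ht
      have hdf : d t * f t = 1 - F t := by
        rw [hdDef t ht, div_mul_cancel₀ _ (ne_of_gt (hfpos t ht))]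
      linear_combination f t * hw + Rstar t * hdf
    rw [MeasureTheory.integral_congr_ae hdiff, MeasureTheory.integral_sub int5 int2, htri]
    exact sub_self _
  calc (∫ q in Ioc qlo qhi, ∫ t in Ioc tlo thi, πs q t * (Pbstar t - r) * f t * g q)
      = ∫ t in Ioc tlo thi, ∫ q in Ioc qlo qhi, πs q t * (Pbstar t - r) * f t * g q :=
        MeasureTheory.integral_integral_swap hLint
    _ = ∫ t in Ioc tlo thi, (Pbstar t - r) * f t * (1 - G (lam t)) := eL
    _ = ∫ t in Ioc tlo thi, ((t - d t) * Rstar t - r * (1 - G (lam t))) * f t := main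
    _ = ∫ t in Ioc tlo thi, ∫ q in Ioc qlo qhi, max (η q t) 0 * g q * f t := eR.symm
    _ = ∫ q in Ioc qlo qhi, ∫ t in Ioc tlo thi, max (η q t) 0 * g q * f t :=
        (MeasureTheory.integral_integral_swap hRint2).symm
end
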